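/- arXiv:2206.14800 — 5 statements merged into one kernel-verified Lean document; each statement's English description precedes it below -/
import Mathlib

section
/- Let n ∈ ℕ, let the loss ℓ take values in [0,1], and let A_n be an interpolating learning algorithm for datasets of size n. Then the expected risk satisfies R_D(A_n) ≤ LOOeCMI_D(A_n) / log(n+1), where LOOeCMI_D(A_n) = I(L; U | Z̃). -/
open MeasureTheory ProbabilityTheory Real
open scoped ENNReal NNReal Classical

noncomputable section


/-- Kullback--Leibler divergence of `μ` with respect to `ν`, valued in `ℝ≥0∞`. -/
def klDiv' {γ : Type*} [MeasurableSpace γ] (μ ν : Measure γ) : ℝ≥0∞ :=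
  if μ ≪ ν ∧ Integrable (fun x => Real.log ((μ.rnDeriv ν x).toReal)) μ
  then ENNReal.ofReal (∫ x, Real.log ((μ.rnDeriv ν x).toReal) ∂μ)
  else ⊤

/-- Mutual information `I(X;Y)` between two random variables. -/
def mutInfo {Ω α β : Type*} [MeasurableSpace Ω] [MeasurableSpace α] [MeasurableSpace β]
    (μ : Measure Ω) (X : Ω → α) (Y : Ω → β) : ℝ≥0∞ :=
  klDiv' (μ.map (fun ω => (X ω, Y ω))) ((μ.map X).prod (μ.map Y))

/-- Disintegrated mutual information `I_{Z=z}(X;Y)` between `X` and `Y` given `Z = z`. -/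
def dMutInfo {Ω α β γ : Type*} [MeasurableSpace Ω] [MeasurableSpace α] [MeasurableSpace β]
    [MeasurableSpace γ] [StandardBorelSpace α] [Nonempty α] [StandardBorelSpace β] [Nonempty β]
    (μ : Measure Ω) [IsFiniteMeasure μ] (X : Ω → α) (Y : Ω → β) (Z : Ω → γ) (z : γ) : ℝ≥0∞ :=
  klDiv' (condDistrib (fun ω => (X ω, Y ω)) Z μ z)
    ((condDistrib X Z μ z).prod (condDistrib Y Z μ z))

/-- Conditional mutual information `I(X;Y∣Z)`. -/
def condMutInfo {Ω α β γ : Type*} [MeasurableSpace Ω] [MeasurableSpace α] [MeasurableSpace β]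
    [MeasurableSpace γ] [StandardBorelSpace α] [Nonempty α] [StandardBorelSpace β] [Nonempty β]
    (μ : Measure Ω) [IsFiniteMeasure μ] (X : Ω → α) (Y : Ω → β) (Z : Ω → γ) : ℝ≥0∞ :=
  ∫⁻ z, dMutInfo μ X Y Z z ∂(μ.map Z)

/-- Shannon entropy of a measure: the usual discrete entropy if the measure is purely atomic,
and `∞` otherwise. -/
def measEntropy {γ : Type*} [MeasurableSpace γ] (ν : Measure γ) : ℝ≥0∞ :=
  if (∑' x, ν {x}) = ν Set.univ
  then ∑' x, ENNReal.ofReal (Real.negMulLog ((ν {x}).toReal))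
  else ⊤

end

section KL
variable {γ : Type*} [MeasurableSpace γ]

lemma lintegral_inv_rnDeriv_le (P Q : Measure γ) [IsFiniteMeasure P] [IsFiniteMeasure Q]
    (hPQ : P ≪ Q) {A : Set γ} (hA : MeasurableSet A) :
    ∫⁻ x in A, ENNReal.ofReal (((P.rnDeriv Q x).toReal)⁻¹) ∂P ≤ Q A := by
  set f := fun x => ENNReal.ofReal (((P.rnDeriv Q x).toReal)⁻¹) with hf
  have hfmeas : Measurable f :=
    (Measure.measurable_rnDeriv P Q).ennreal_toReal.inv.ennreal_ofReal
  have h1 : ∫⁻ x in A, f x ∂P = ∫⁻ x in A, ((P.rnDeriv Q) * f) x ∂Q := by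
    conv_lhs => rw [← Measure.withDensity_rnDeriv_eq P Q hPQ]
    rw [restrict_withDensity hA,
      lintegral_withDensity_eq_lintegral_mul _ (Measure.measurable_rnDeriv P Q) hfmeas]
  rw [h1]
  calc ∫⁻ x in A, ((P.rnDeriv Q) * f) x ∂Q
      ≤ ∫⁻ _ in A, 1 ∂Q := by
        refine lintegral_mono fun x => ?_
        simp only [Pi.mul_apply, hf]
        rcases eq_or_ne (P.rnDeriv Q x) ⊤ with h | h
        · simp [h]
        rcases eq_or_ne (P.rnDeriv Q x) 0 with h0 | h0
        · simp [h0]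
        · rw [ENNReal.ofReal_inv_of_pos (ENNReal.toReal_pos h0 h), ENNReal.ofReal_toReal h,
            ENNReal.mul_inv_cancel h0 h]
    _ = Q A := setLIntegral_one A

lemma integrable_inv_rnDeriv (P Q : Measure γ) [IsFiniteMeasure P] [IsFiniteMeasure Q]
    (hPQ : P ≪ Q) {A : Set γ} (hA : MeasurableSet A) :
    Integrable (fun x => ((P.rnDeriv Q x).toReal)⁻¹) (P.restrict A) := by
  refine ⟨((Measure.measurable_rnDeriv P Q).ennreal_toReal.inv).aestronglyMeasurable, ?_⟩
  rw [hasFiniteIntegral_iff_ofReal (ae_of_all _ fun x => by positivity)]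
  exact (lintegral_inv_rnDeriv_le P Q hPQ hA).trans_lt (measure_lt_top Q A)

lemma setIntegral_inv_rnDeriv_le (P Q : Measure γ) [IsFiniteMeasure P] [IsFiniteMeasure Q]
    (hPQ : P ≪ Q) {A : Set γ} (hA : MeasurableSet A) :
    ∫ x in A, ((P.rnDeriv Q x).toReal)⁻¹ ∂P ≤ (Q A).toReal := by
  rw [integral_eq_lintegral_of_nonneg_ae (f := fun x => ((P.rnDeriv Q x).toReal)⁻¹) (ae_of_all _ fun x => by positivity)
    ((Measure.measurable_rnDeriv P Q).ennreal_toReal.inv).aestronglyMeasurable]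
  exact ENNReal.toReal_mono (measure_ne_top Q A) (lintegral_inv_rnDeriv_le P Q hPQ hA)

lemma setIntegral_log_rnDeriv_ge (P Q : Measure γ) [IsFiniteMeasure P] [IsFiniteMeasure Q]
    (hPQ : P ≪ Q) (hint : Integrable (fun x => Real.log ((P.rnDeriv Q x).toReal)) P)
    {A : Set γ} (hA : MeasurableSet A) :
    (P A).toReal * Real.log ((P A).toReal / (Q A).toReal)
      ≤ ∫ x in A, Real.log ((P.rnDeriv Q x).toReal) ∂P := by
  by_cases hPA : P A = 0
  · rw [hPA, Measure.restrict_eq_zero.mpr hPA]; simp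
  have hQA : Q A ≠ 0 := fun h => hPA (hPQ h)
  set a := (P A).toReal with ha_def
  set q := (Q A).toReal with hq_def
  have ha : 0 < a := ENNReal.toReal_pos hPA (measure_ne_top P A)
  have hq : 0 < q := ENNReal.toReal_pos hQA (measure_ne_top Q A)
  have hae : ∀ᵐ x ∂(P.restrict A),
      Real.log (a / q) + (1 - (a / q) * ((P.rnDeriv Q x).toReal)⁻¹)
        ≤ Real.log ((P.rnDeriv Q x).toReal) := by
    have h1 : ∀ᵐ x ∂P, 0 < P.rnDeriv Q x := Measure.rnDeriv_pos hPQ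
    have h2 : ∀ᵐ x ∂P, P.rnDeriv Q x < ⊤ := hPQ.ae_le (Measure.rnDeriv_lt_top P Q)
    refine ae_restrict_of_ae ?_
    filter_upwards [h1, h2] with x hx1 hx2
    set r := ((P.rnDeriv Q x).toReal) with hr_def
    have hr : 0 < r := ENNReal.toReal_pos hx1.ne' hx2.ne
    have key : 1 - (r * (q / a))⁻¹ ≤ Real.log (r * (q / a)) := by
      have := Real.log_le_sub_one_of_pos (x := (r * (q / a))⁻¹) (by positivity)
      rw [Real.log_inv] at this
      linarith
    rw [Real.log_mul hr.ne' (by positivity), Real.log_div hq.ne' ha.ne'] at key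
    rw [Real.log_div ha.ne' hq.ne']
    have hinv : (r * (q / a))⁻¹ = (a / q) * r⁻¹ := by
      rw [mul_inv, inv_div]; ring
    rw [hinv] at key
    linarith
  have hintInv : Integrable (fun x => ((P.rnDeriv Q x).toReal)⁻¹) (P.restrict A) :=
    integrable_inv_rnDeriv P Q hPQ hA
  have hmul : Integrable (fun x => (a / q) * ((P.rnDeriv Q x).toReal)⁻¹) (P.restrict A) :=
    hintInv.const_mul _
  have hsub : Integrable (fun x => 1 - (a / q) * ((P.rnDeriv Q x).toReal)⁻¹) (P.restrict A) :=
    (integrable_const _).sub hmul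
  have hintA : Integrable (fun x => Real.log ((P.rnDeriv Q x).toReal)) (P.restrict A) :=
    hint.restrict
  have hint2 : Integrable (fun x =>
      Real.log (a / q) + (1 - (a / q) * ((P.rnDeriv Q x).toReal)⁻¹)) (P.restrict A) :=
    (integrable_const _).add hsub
  have hle := integral_mono_ae hint2 hintA hae
  have hcalc : ∫ x in A, (Real.log (a / q)
        + (1 - (a / q) * ((P.rnDeriv Q x).toReal)⁻¹)) ∂P
      = a * Real.log (a / q) + (a - (a / q) * ∫ x in A, ((P.rnDeriv Q x).toReal)⁻¹ ∂P) := by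
    rw [integral_add (integrable_const _) hsub, integral_sub (integrable_const _) hmul,
      integral_const, integral_const, integral_const_mul]
    simp only [Measure.real, Measure.restrict_apply_univ, smul_eq_mul, mul_one, ← ha_def]
  rw [hcalc] at hle
  have hbound := setIntegral_inv_rnDeriv_le P Q hPQ hA
  have h3 : (a / q) * ∫ x in A, ((P.rnDeriv Q x).toReal)⁻¹ ∂P ≤ (a / q) * q :=
    mul_le_mul_of_nonneg_left hbound (by positivity)
  have h4 : (a / q) * q = a := by field_simp
  nlinarith

lemma sum_le_integral_log_rnDeriv {ι : Type*} [Fintype ι] (P Q : Measure γ)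
    [IsFiniteMeasure P] [IsFiniteMeasure Q]
    (hPQ : P ≪ Q) (hint : Integrable (fun x => Real.log ((P.rnDeriv Q x).toReal)) P)
    (A : ι → Set γ) (hmeas : ∀ i, MeasurableSet (A i))
    (hdisj : Pairwise (Function.onFun Disjoint A)) (hcover : (⋃ i, A i) = Set.univ) :
    ∑ i, (P (A i)).toReal * Real.log ((P (A i)).toReal / (Q (A i)).toReal)
      ≤ ∫ x, Real.log ((P.rnDeriv Q x).toReal) ∂P := by
  have h1 : ∫ x, Real.log ((P.rnDeriv Q x).toReal) ∂P
      = ∑ i, ∫ x in A i, Real.log ((P.rnDeriv Q x).toReal) ∂P := by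
    rw [← integral_biUnion_finset Finset.univ (fun i _ => hmeas i)
      (fun i _ j _ hij => hdisj hij) (fun i _ => hint.integrableOn)]
    rw [show (⋃ i ∈ Finset.univ, A i) = Set.univ by simpa using hcover]
    simp [Measure.restrict_univ]
  rw [h1]
  exact Finset.sum_le_sum fun i _ => setIntegral_log_rnDeriv_ge P Q hPQ hint (hmeas i)

lemma le_klDiv' (P Q : Measure γ) {c : ℝ}
    (h : ∀ (_ : P ≪ Q),
      Integrable (fun x => Real.log ((P.rnDeriv Q x).toReal)) P →
        c ≤ ∫ x, Real.log ((P.rnDeriv Q x).toReal) ∂P) :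
    ENNReal.ofReal c ≤ klDiv' P Q := by
  unfold klDiv'
  split_ifs with h'
  · exact ENNReal.ofReal_le_ofReal (h h'.1 h'.2)
  · exact le_top
end KL

/-- the set where the least positive coordinate is `u` -/
def Spos (n : ℕ) (u : Fin (n+1)) : Set (Fin (n+1) → ℝ) :=
  {l | 0 < l u ∧ ∀ j, 0 < l j → u ≤ j}

/-- the set where no coordinate is positive -/
def Sbot (n : ℕ) : Set (Fin (n+1) → ℝ) := {l | ∀ j, l j ≤ 0}

lemma measurableSet_Spos (n : ℕ) (u : Fin (n+1)) : MeasurableSet (Spos n u) := by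
  have h1 : MeasurableSet {l : Fin (n+1) → ℝ | 0 < l u} :=
    measurableSet_lt measurable_const (measurable_pi_apply u)
  have h2 : ∀ j : Fin (n+1), MeasurableSet {l : Fin (n+1) → ℝ | 0 < l j → u ≤ j} := by
    intro j
    rcases le_or_gt u j with h | h
    · have : {l : Fin (n+1) → ℝ | 0 < l j → u ≤ j} = Set.univ := by
        ext l; simp [h]
      rw [this]; exact MeasurableSet.univ
    · have : {l : Fin (n+1) → ℝ | 0 < l j → u ≤ j} = {l | l j ≤ 0} := by
        ext l
        constructor
        · intro hl
          by_contra hc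
          exact absurd (hl (lt_of_not_ge hc)) (not_le.mpr h)
        · intro hl hpos
          exact absurd hl (not_le.mpr hpos)
      rw [this]
      exact measurableSet_le (measurable_pi_apply j) measurable_const
  have : Spos n u = {l : Fin (n+1) → ℝ | 0 < l u} ∩ ⋂ j, {l | 0 < l j → u ≤ j} := by
    ext l; simp [Spos, Set.mem_iInter]
  rw [this]
  exact h1.inter (MeasurableSet.iInter fun j => h2 j)

lemma measurableSet_Sbot (n : ℕ) : MeasurableSet (Sbot n) := by
  have : Sbot n = ⋂ j, {l : Fin (n+1) → ℝ | l j ≤ 0} := by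
    ext l; simp [Sbot, Set.mem_iInter]
  rw [this]
  exact MeasurableSet.iInter fun j =>
    measurableSet_le (measurable_pi_apply j) measurable_const

/-- the partition cell -/
def cell (n : ℕ) (p : Fin (n+1) × Option (Fin (n+1))) :
    Set ((Fin (n+1) → ℝ) × Fin (n+1)) :=
  (p.2.elim (Sbot n) (Spos n)) ×ˢ ({p.1} : Set (Fin (n+1)))

lemma measurableSet_cell (n : ℕ) (p : Fin (n+1) × Option (Fin (n+1))) :
    MeasurableSet (cell n p) := by
  rcases p with ⟨u, v⟩
  cases v with
  | none => exact (measurableSet_Sbot n).prod (measurableSet_singleton u)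
  | some v => exact (measurableSet_Spos n v).prod (measurableSet_singleton u)

lemma pairwise_disjoint_cell (n : ℕ) :
    Pairwise (Function.onFun Disjoint (cell n)) := by
  rintro ⟨u, v⟩ ⟨u', v'⟩ hne
  rw [Function.onFun, Set.disjoint_left]
  rintro ⟨l, w⟩ h1 h2
  simp only [cell, Set.mem_prod, Set.mem_singleton_iff] at h1 h2
  have hu : u = u' := h1.2 ▸ h2.2.symm ▸ rfl
  apply hne
  rcases h1 with ⟨hl1, rfl⟩
  rcases h2 with ⟨hl2, rfl⟩
  cases v with
  | none =>
    cases v' with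
    | none => rfl
    | some v' =>
      exact absurd (hl2.1) (not_lt.mpr (hl1 v'))
  | some v =>
    cases v' with
    | none => exact absurd (hl1.1) (not_lt.mpr (hl2 v))
    | some v' =>
      have h12 := hl1.2 v' hl2.1
      have h21 := hl2.2 v hl1.1
      have : v = v' := le_antisymm h12 h21
      rw [this]

lemma iUnion_cell (n : ℕ) : (⋃ p, cell n p) = Set.univ := by
  ext ⟨l, u⟩
  simp only [Set.mem_iUnion, Set.mem_univ, iff_true]
  by_cases h : ∃ j, 0 < l j
  · set s := Finset.univ.filter (fun j => 0 < l j) with hs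
    have hsne : s.Nonempty := by
      obtain ⟨j, hj⟩ := h
      exact ⟨j, by simp [hs, hj]⟩
    refine ⟨(u, some (s.min' hsne)), ?_⟩
    have hmem := s.min'_mem hsne
    simp only [hs, Finset.mem_filter] at hmem
    refine ⟨⟨hmem.2, fun j hj => ?_⟩, rfl⟩
    exact s.min'_le j (by simp [hs, hj])
  · refine ⟨(u, none), ⟨fun j => ?_, rfl⟩⟩
    exact le_of_not_gt fun hc => h ⟨j, hc⟩

lemma term1_le (n : ℕ) {a : ℝ} (ha : 0 ≤ a) :
    a * Real.log ((n:ℝ)+1) ≤ a * Real.log (a / (a * (((n:ℝ)+1))⁻¹)) := by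
  rcases eq_or_lt_of_le ha with h | h
  · simp [← h]
  · have hn1 : (0:ℝ) < (n:ℝ)+1 := by positivity
    have : a / (a * (((n:ℝ)+1))⁻¹) = (n:ℝ)+1 := by field_simp
    rw [this]

lemma term2_le (n : ℕ) {b B : ℝ} (hb : 0 ≤ b) (hB : b ≤ B) :
    b - B * (((n:ℝ)+1))⁻¹ ≤ b * Real.log (b / (B * (((n:ℝ)+1))⁻¹)) := by
  have hn1 : (0:ℝ) < (n:ℝ)+1 := by positivity
  rcases eq_or_lt_of_le hb with h | h
  · rw [← h]
    simp only [zero_sub, zero_mul]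
    have hB0 : 0 ≤ B := le_trans hb hB
    have : 0 ≤ B * (((n:ℝ)+1))⁻¹ := by positivity
    linarith
  · have hB0 : 0 < B := lt_of_lt_of_le h hB
    have hq : 0 < B * (((n:ℝ)+1))⁻¹ := by positivity
    have hkey := Real.log_le_sub_one_of_pos (x := (B * (((n:ℝ)+1))⁻¹) / b) (by positivity)
    have hlog : Real.log (b / (B * (((n:ℝ)+1))⁻¹)) = - Real.log ((B * (((n:ℝ)+1))⁻¹) / b) := by
      rw [← Real.log_inv, inv_div]
    rw [hlog]
    have h2 : Real.log ((B * (((n:ℝ)+1))⁻¹) / b) ≤ (B * (((n:ℝ)+1))⁻¹) / b - 1 := hkey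
    have h3 : -((B * (((n:ℝ)+1))⁻¹) / b - 1) ≤ -Real.log ((B * (((n:ℝ)+1))⁻¹) / b) := by linarith
    calc b - B * (((n:ℝ)+1))⁻¹ = b * (1 - (B * (((n:ℝ)+1))⁻¹) / b) := by field_simp
    _ = b * -((B * (((n:ℝ)+1))⁻¹) / b - 1) := by ring
    _ ≤ b * -Real.log ((B * (((n:ℝ)+1))⁻¹) / b) := by
        exact mul_le_mul_of_nonneg_left h3 hb
    _ = b * - Real.log ((B * (((n:ℝ)+1))⁻¹) / b) := rfl

lemma kl_cell_bound (n : ℕ) (P : Measure ((Fin (n+1) → ℝ) × Fin (n+1)))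
    [IsProbabilityMeasure P]
    (κL : Measure (Fin (n+1) → ℝ)) (κU : Measure (Fin (n+1)))
    [IsProbabilityMeasure κL] [IsProbabilityMeasure κU]
    (hU : ∀ u, κU {u} = ((n:ℝ≥0∞)+1)⁻¹)
    (h2 : ∀ u, κL (Spos n u) = P (Spos n u ×ˢ ({u} : Set (Fin (n+1)))))
    (h3 : ∀ v u : Fin (n+1), v ≠ u → P (Spos n v ×ˢ ({u} : Set (Fin (n+1)))) = 0)
    (h4 : κL (Sbot n) = P ((Sbot n) ×ˢ (Set.univ : Set (Fin (n+1))))) :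
    ENNReal.ofReal (Real.log ((n:ℝ)+1)) * ∑ u, P (Spos n u ×ˢ ({u} : Set (Fin (n+1))))
      ≤ klDiv' P (κL.prod κU) := by
  classical
  set Q := κL.prod κU with hQ
  -- the sum of cell probabilities, as a real number
  set S : ℝ≥0∞ := ∑ u, P (Spos n u ×ˢ ({u} : Set (Fin (n+1)))) with hS
  have hSne : S ≠ ⊤ := by
    refine (lt_of_le_of_lt (Finset.sum_le_sum fun u _ => prob_le_one) ?_).ne
    simp only [Finset.sum_const, nsmul_eq_mul, Finset.card_univ, Fintype.card_fin]
    exact ENNReal.mul_lt_top (by simp) (by simp)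
  have hStoReal : S.toReal = ∑ u, (P (Spos n u ×ˢ ({u} : Set (Fin (n+1))))).toReal := by
    rw [hS, ENNReal.toReal_sum]
    intro u _
    exact measure_ne_top P _
  have hlogpos : 0 ≤ Real.log ((n:ℝ)+1) := by
    apply Real.log_nonneg
    have : (0:ℝ) ≤ n := Nat.cast_nonneg n
    linarith
  have hofS : ENNReal.ofReal (Real.log ((n:ℝ)+1) * S.toReal)
      = ENNReal.ofReal (Real.log ((n:ℝ)+1)) * S := by
    rw [ENNReal.ofReal_mul hlogpos, ENNReal.ofReal_toReal hSne]
  rw [← hofS]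
  refine le_klDiv' P Q ?_
  intro hPQ hint
  -- partition bound
  have hpart := sum_le_integral_log_rnDeriv P Q hPQ hint (cell n)
    (measurableSet_cell n) (pairwise_disjoint_cell n) (iUnion_cell n)
  refine le_trans ?_ hpart
  -- now compute / bound the sum over cells
  rw [Fintype.sum_prod_type]
  have hcellsum : ∀ u : Fin (n+1),
      Real.log ((n:ℝ)+1) * (P (Spos n u ×ˢ ({u} : Set (Fin (n+1))))).toReal
        + ((P ((Sbot n) ×ˢ ({u} : Set (Fin (n+1))))).toReal
            - (P ((Sbot n) ×ˢ (Set.univ : Set (Fin (n+1))))).toReal * (((n:ℝ)+1))⁻¹)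
      ≤ ∑ v : Option (Fin (n+1)),
          (P (cell n (u, v))).toReal
            * Real.log ((P (cell n (u, v))).toReal / (Q (cell n (u, v))).toReal) := by
    intro u
    rw [Fintype.sum_option]
    -- the `none` cell
    have hbot : (P ((Sbot n) ×ˢ ({u} : Set (Fin (n+1))))).toReal
          - (P ((Sbot n) ×ˢ (Set.univ : Set (Fin (n+1))))).toReal * (((n:ℝ)+1))⁻¹
        ≤ (P (cell n (u, none))).toReal
            * Real.log ((P (cell n (u, none))).toReal / (Q (cell n (u, none))).toReal) := by
      have hQval : (Q (cell n (u, none))).toReal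
          = (P ((Sbot n) ×ˢ (Set.univ : Set (Fin (n+1))))).toReal * (((n:ℝ)+1))⁻¹ := by
        simp only [cell, Option.elim, hQ]
        rw [Measure.prod_prod, hU u, ← h4]
        rw [ENNReal.toReal_mul]
        congr 1
        rw [ENNReal.toReal_inv, ← Nat.cast_add_one, ENNReal.toReal_natCast, Nat.cast_add_one]
      rw [hQval]
      refine term2_le n ENNReal.toReal_nonneg ?_
      refine ENNReal.toReal_mono (measure_ne_top P _) ?_
      exact measure_mono (Set.prod_mono le_rfl (Set.subset_univ _))
    -- the `some v` cells
    have hposcells : Real.log ((n:ℝ)+1) * (P (Spos n u ×ˢ ({u} : Set (Fin (n+1))))).toReal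
        ≤ ∑ v : Fin (n+1), (P (cell n (u, some v))).toReal
            * Real.log ((P (cell n (u, some v))).toReal / (Q (cell n (u, some v))).toReal) := by
      have hterm : ∀ v : Fin (n+1), v ≠ u → (P (cell n (u, some v))).toReal
            * Real.log ((P (cell n (u, some v))).toReal / (Q (cell n (u, some v))).toReal) = 0 := by
        intro v hv
        have : P (cell n (u, some v)) = 0 := h3 v u hv
        simp [this]
      rw [← Finset.sum_subset (Finset.subset_univ {u})]
      · rw [Finset.sum_singleton]
        have hQval : (Q (cell n (u, some u))).toReal
            = (P (cell n (u, some u))).toReal * (((n:ℝ)+1))⁻¹ := by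
          simp only [cell, Option.elim, hQ]
          rw [Measure.prod_prod, hU u, h2 u]
          rw [ENNReal.toReal_mul]
          congr 1
          rw [ENNReal.toReal_inv, ← Nat.cast_add_one, ENNReal.toReal_natCast, Nat.cast_add_one]
        rw [hQval]
        have := term1_le n (a := (P (cell n (u, some u))).toReal) ENNReal.toReal_nonneg
        calc Real.log ((n:ℝ)+1) * (P (Spos n u ×ˢ ({u} : Set (Fin (n+1))))).toReal
            = (P (cell n (u, some u))).toReal * Real.log ((n:ℝ)+1) := by
              rw [mul_comm]; rfl
          _ ≤ _ := this
      · intro v _ hv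
        exact hterm v (by simpa using hv)
    calc _ ≤ (∑ v : Fin (n+1), (P (cell n (u, some v))).toReal
            * Real.log ((P (cell n (u, some v))).toReal / (Q (cell n (u, some v))).toReal))
          + ((P (cell n (u, none))).toReal
            * Real.log ((P (cell n (u, none))).toReal / (Q (cell n (u, none))).toReal)) :=
          add_le_add hposcells hbot
      _ = _ := by ring
  -- sum over u
  have htotal := Finset.sum_le_sum (fun u (_ : u ∈ Finset.univ) => hcellsum u)
  refine le_trans ?_ htotal
  rw [Finset.sum_add_distrib]
  have hB : (P ((Sbot n) ×ˢ (Set.univ : Set (Fin (n+1))))).toReal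
      = ∑ u : Fin (n+1), (P ((Sbot n) ×ˢ ({u} : Set (Fin (n+1))))).toReal := by
    have hsets : (Sbot n) ×ˢ (Set.univ : Set (Fin (n+1)))
        = ⋃ u : Fin (n+1), (Sbot n) ×ˢ ({u} : Set (Fin (n+1))) := by
      ext ⟨l, w⟩
      simp only [Sbot, Set.mem_prod, Set.mem_setOf_eq, Set.mem_univ, and_true,
        Set.mem_iUnion, Set.mem_singleton_iff]
      constructor
      · exact fun hl => ⟨w, ⟨hl, rfl⟩⟩
      · rintro ⟨i, hx, rfl⟩; exact hx
    rw [hsets, measure_iUnion ?_ (fun u => (measurableSet_Sbot n).prod (measurableSet_singleton u))]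
    · rw [tsum_fintype, ENNReal.toReal_sum]
      intro u _
      exact measure_ne_top P _
    · intro u u' huu'
      rw [Function.onFun, Set.disjoint_left]
      rintro ⟨l, w⟩ hw1 hw2
      simp only [Set.mem_prod, Set.mem_singleton_iff] at hw1 hw2
      exact huu' (hw1.2 ▸ hw2.2.symm ▸ rfl)
  have hzero : (0:ℝ) ≤ ∑ u : Fin (n+1), ((P ((Sbot n) ×ˢ ({u} : Set (Fin (n+1))))).toReal
      - (P ((Sbot n) ×ˢ (Set.univ : Set (Fin (n+1))))).toReal * (((n:ℝ)+1))⁻¹) := by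
    rw [Finset.sum_sub_distrib, ← hB]
    rw [Finset.sum_const, Finset.card_univ, Fintype.card_fin]
    have hn1 : (0:ℝ) < (n:ℝ)+1 := by positivity
    rw [nsmul_eq_mul]
    push_cast
    rw [mul_comm ((n:ℝ)+1), mul_assoc, inv_mul_cancel₀ hn1.ne', mul_one]
    simp
  calc Real.log ((n:ℝ)+1) * S.toReal
      = ∑ u : Fin (n+1), Real.log ((n:ℝ)+1) * (P (Spos n u ×ˢ ({u} : Set (Fin (n+1))))).toReal := by
        rw [hStoReal, Finset.mul_sum]
    _ ≤ _ := le_add_of_nonneg_right hzero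


lemma integrable_of_le_one {α : Type*} [MeasurableSpace α] (μ : Measure α) [IsFiniteMeasure μ]
    {f : α → ℝ} (hf : AEStronglyMeasurable f μ) (h0 : ∀ x, 0 ≤ f x) (h1 : ∀ x, f x ≤ 1) :
    Integrable f μ :=
  Integrable.mono' (integrable_const 1) hf
    (ae_of_all _ fun x => by rw [Real.norm_eq_abs, abs_of_nonneg (h0 x)]; exact h1 x)

theorem risk_eq_heldout
    {Ω 𝒳 𝒴 ℋ R : Type*} [MeasurableSpace Ω] [MeasurableSpace 𝒳] [MeasurableSpace 𝒴]
    [MeasurableSpace ℋ] [MeasurableSpace R]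
    (μ : Measure Ω) [IsProbabilityMeasure μ]
    (D : Measure (𝒳 × 𝒴)) [IsProbabilityMeasure D]
    (n : ℕ)
    (ℓ : ℋ → 𝒳 × 𝒴 → ℝ) (hℓmeas : Measurable (Function.uncurry ℓ))
    (hℓ01 : ∀ h z, ℓ h z ∈ Set.Icc (0:ℝ) 1)
    (A : (Fin n → 𝒳 × 𝒴) → R → ℋ) (hA : Measurable (Function.uncurry A))
    (Zt : Ω → Fin (n+1) → 𝒳 × 𝒴) (hZt : Measurable Zt)
    (U : Ω → Fin (n+1)) (hU : Measurable U)
    (ξ : Ω → R) (hξ : Measurable ξ)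
    (hiid : μ.map Zt = Measure.pi fun _ : Fin (n+1) => D)
    (hUindep : IndepFun U Zt μ)
    (hξindep : IndepFun ξ (fun ω => (Zt ω, U ω)) μ)
    (W : Ω → ℋ) (hW : ∀ ω, W ω = A ((U ω).removeNth (Zt ω)) (ξ ω)) :
    ∫ ω, ∫ z, ℓ (W ω) z ∂D ∂μ = ∫ ω, ℓ (W ω) (Zt ω (U ω)) ∂μ := by
  classical
  have hZU : Measurable fun ω => (Zt ω, U ω) := hZt.prodMk hU
  have hTmeas : Measurable fun ω => ((Zt ω, U ω), ξ ω) := hZU.prodMk hξ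
  have hlaw1 : μ.map (fun ω => (Zt ω, U ω)) = (μ.map Zt).prod (μ.map U) :=
    (indepFun_iff_map_prod_eq_prod_map_map hZt.aemeasurable hU.aemeasurable).mp hUindep.symm
  have hlaw : μ.map (fun ω => ((Zt ω, U ω), ξ ω))
      = ((μ.map Zt).prod (μ.map U)).prod (μ.map ξ) := by
    rw [(indepFun_iff_map_prod_eq_prod_map_map hZU.aemeasurable hξ.aemeasurable).mp
      hξindep.symm, hlaw1]
  have hrem : Measurable fun (q : (Fin (n+1) → 𝒳 × 𝒴) × Fin (n+1)) => (q.2).removeNth q.1 := by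
    refine measurable_from_prod_countable_left fun u => ?_
    refine measurable_pi_iff.mpr fun j => ?_
    exact measurable_pi_apply (u.succAbove j)
  have heval : Measurable fun (q : (Fin (n+1) → 𝒳 × 𝒴) × Fin (n+1)) => q.1 q.2 := by
    refine measurable_from_prod_countable_left fun u => ?_
    exact measurable_pi_apply _
  have hAm : Measurable fun (p : ((Fin (n+1) → 𝒳 × 𝒴) × Fin (n+1)) × R) =>
      A ((p.1.2).removeNth p.1.1) p.2 :=
    hA.comp ((hrem.comp measurable_fst).prodMk measurable_snd)
  set G : ((Fin (n+1) → 𝒳 × 𝒴) × Fin (n+1)) × R → ℝ :=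
    fun p => ℓ (A ((p.1.2).removeNth p.1.1) p.2) (p.1.1 p.1.2) with hG_def
  set H : ((Fin (n+1) → 𝒳 × 𝒴) × Fin (n+1)) × R → ℝ :=
    fun p => ∫ z, ℓ (A ((p.1.2).removeNth p.1.1) p.2) z ∂D with hH_def
  have hGmeas : Measurable G :=
    hℓmeas.comp (hAm.prodMk (heval.comp measurable_fst))
  have hHmeas : StronglyMeasurable H := by
    have : StronglyMeasurable fun (p : (((Fin (n+1) → 𝒳 × 𝒴) × Fin (n+1)) × R) × (𝒳 × 𝒴)) =>
        ℓ (A ((p.1.1.2).removeNth p.1.1.1) p.1.2) p.2 :=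
      (hℓmeas.comp ((hAm.comp measurable_fst).prodMk measurable_snd)).stronglyMeasurable
    exact this.integral_prod_right'
  have hG01 : ∀ p, G p ∈ Set.Icc (0:ℝ) 1 := fun p => hℓ01 _ _
  have hH01 : ∀ p, H p ∈ Set.Icc (0:ℝ) 1 := by
    intro p
    refine ⟨integral_nonneg fun z => (hℓ01 _ _).1, ?_⟩
    calc ∫ z, ℓ (A ((p.1.2).removeNth p.1.1) p.2) z ∂D ≤ ∫ _, (1:ℝ) ∂D := by
          refine integral_mono (integrable_of_le_one D
            ((hℓmeas.comp (measurable_const.prodMk measurable_id)).aestronglyMeasurable)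
            (fun z => (hℓ01 _ _).1) (fun z => (hℓ01 _ _).2)) (integrable_const 1)
            (fun z => (hℓ01 _ _).2)
      _ = 1 := by simp
  have hLHS : ∫ ω, ∫ z, ℓ (W ω) z ∂D ∂μ
      = ∫ p, H p ∂(((μ.map Zt).prod (μ.map U)).prod (μ.map ξ)) := by
    rw [← hlaw, integral_map hTmeas.aemeasurable hHmeas.aestronglyMeasurable]
    refine integral_congr_ae (ae_of_all _ fun ω => ?_)
    simp only [hH_def, hW ω]
  have hRHS : ∫ ω, ℓ (W ω) (Zt ω (U ω)) ∂μ
      = ∫ p, G p ∂(((μ.map Zt).prod (μ.map U)).prod (μ.map ξ)) := by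
    rw [← hlaw, integral_map hTmeas.aemeasurable hGmeas.aestronglyMeasurable]
    refine integral_congr_ae (ae_of_all _ fun ω => ?_)
    simp only [hG_def, hW ω]
  rw [hLHS, hRHS]
  have hPi : IsProbabilityMeasure (μ.map Zt) := Measure.isProbabilityMeasure_map hZt.aemeasurable
  have hmU : IsProbabilityMeasure (μ.map U) := Measure.isProbabilityMeasure_map hU.aemeasurable
  have hmξ : IsProbabilityMeasure (μ.map ξ) := Measure.isProbabilityMeasure_map hξ.aemeasurable
  have hGint : Integrable G (((μ.map Zt).prod (μ.map U)).prod (μ.map ξ)) :=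
    integrable_of_le_one _ hGmeas.aestronglyMeasurable (fun p => (hG01 p).1) (fun p => (hG01 p).2)
  have hHint : Integrable H (((μ.map Zt).prod (μ.map U)).prod (μ.map ξ)) :=
    integrable_of_le_one _ hHmeas.aestronglyMeasurable (fun p => (hH01 p).1) (fun p => (hH01 p).2)
  rw [integral_prod_symm _ hHint, integral_prod_symm _ hGint]
  refine integral_congr_ae (ae_of_all _ fun x => ?_)
  beta_reduce
  have hGx : Integrable (fun q : (Fin (n+1) → 𝒳 × 𝒴) × Fin (n+1) => G (q, x))
      ((μ.map Zt).prod (μ.map U)) :=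
    integrable_of_le_one _
      ((hGmeas.comp (measurable_id.prodMk measurable_const)).aestronglyMeasurable)
      (fun p => (hG01 _).1) (fun p => (hG01 _).2)
  have hHx : Integrable (fun q : (Fin (n+1) → 𝒳 × 𝒴) × Fin (n+1) => H (q, x))
      ((μ.map Zt).prod (μ.map U)) :=
    integrable_of_le_one _
      ((hHmeas.measurable.comp (measurable_id.prodMk measurable_const)).aestronglyMeasurable)
      (fun p => (hH01 _).1) (fun p => (hH01 _).2)
  rw [integral_prod_symm _ hHx, integral_prod_symm _ hGx]
  refine integral_congr_ae (ae_of_all _ fun u => ?_)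
  beta_reduce
  rw [hiid]
  -- change of variables via insertNth
  have hmp : MeasurePreserving
      (MeasurableEquiv.piFinSuccAbove (fun _ : Fin (n+1) => 𝒳 × 𝒴) u).symm
      (D.prod (Measure.pi fun _ : Fin n => D)) (Measure.pi fun _ : Fin (n+1) => D) :=
    (measurePreserving_piFinSuccAbove (fun _ : Fin (n+1) => D) u).symm
  have hGz : ∫ z, G ((z, u), x) ∂(Measure.pi fun _ : Fin (n+1) => D)
      = ∫ p, ℓ (A p.2 x) p.1 ∂(D.prod (Measure.pi fun _ : Fin n => D)) := by
    rw [← hmp.integral_comp']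
    refine integral_congr_ae (ae_of_all _ fun p => ?_)
    simp only [hG_def, MeasurableEquiv.piFinSuccAbove, MeasurableEquiv.symm_mk,
      MeasurableEquiv.coe_mk, Equiv.symm_symm, Fin.insertNthEquiv_apply, Fin.insertNthEquiv, Equiv.coe_fn_mk,
      Fin.removeNth_insertNth, Fin.insertNth_apply_same]
  have hHz : ∫ z, H ((z, u), x) ∂(Measure.pi fun _ : Fin (n+1) => D)
      = ∫ p, (∫ z', ℓ (A p.2 x) z' ∂D) ∂(D.prod (Measure.pi fun _ : Fin n => D)) := by
    rw [← hmp.integral_comp']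
    refine integral_congr_ae (ae_of_all _ fun p => ?_)
    simp only [hH_def, MeasurableEquiv.piFinSuccAbove, MeasurableEquiv.symm_mk,
      MeasurableEquiv.coe_mk, Equiv.symm_symm, Fin.insertNthEquiv_apply, Fin.insertNthEquiv, Equiv.coe_fn_mk,
      Fin.removeNth_insertNth, Fin.insertNth_apply_same]
  rw [hGz, hHz]
  -- Fubini on D.prod (pi)
  have hArest : Measurable fun (p : (𝒳 × 𝒴) × (Fin n → 𝒳 × 𝒴)) => A p.2 x :=
    hA.comp (measurable_snd.prodMk measurable_const)
  have hf1meas : Measurable fun (p : (𝒳 × 𝒴) × (Fin n → 𝒳 × 𝒴)) => ℓ (A p.2 x) p.1 :=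
    hℓmeas.comp (hArest.prodMk measurable_fst)
  have hf2meas : StronglyMeasurable fun (p : (𝒳 × 𝒴) × (Fin n → 𝒳 × 𝒴)) =>
      ∫ z', ℓ (A p.2 x) z' ∂D := by
    have : StronglyMeasurable fun (p : ((𝒳 × 𝒴) × (Fin n → 𝒳 × 𝒴)) × (𝒳 × 𝒴)) =>
        ℓ (A p.1.2 x) p.2 :=
      (hℓmeas.comp ((hArest.comp measurable_fst).prodMk measurable_snd)).stronglyMeasurable
    exact this.integral_prod_right'
  have h2le1 : ∀ (p : (𝒳 × 𝒴) × (Fin n → 𝒳 × 𝒴)), (∫ z', ℓ (A p.2 x) z' ∂D) ∈ Set.Icc (0:ℝ) 1 := by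
    intro p
    refine ⟨integral_nonneg fun z => (hℓ01 _ _).1, ?_⟩
    calc ∫ z', ℓ (A p.2 x) z' ∂D ≤ ∫ _, (1:ℝ) ∂D :=
          integral_mono (integrable_of_le_one D
            ((hℓmeas.comp (measurable_const.prodMk measurable_id)).aestronglyMeasurable)
            (fun z => (hℓ01 _ _).1) (fun z => (hℓ01 _ _).2)) (integrable_const 1)
            (fun z => (hℓ01 _ _).2)
      _ = 1 := by simp
  have hint1 : Integrable (fun (p : (𝒳 × 𝒴) × (Fin n → 𝒳 × 𝒴)) => ℓ (A p.2 x) p.1)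
      (D.prod (Measure.pi fun _ : Fin n => D)) :=
    integrable_of_le_one _ hf1meas.aestronglyMeasurable (fun p => (hℓ01 _ _).1)
      (fun p => (hℓ01 _ _).2)
  have hint2 : Integrable (fun (p : (𝒳 × 𝒴) × (Fin n → 𝒳 × 𝒴)) => ∫ z', ℓ (A p.2 x) z' ∂D)
      (D.prod (Measure.pi fun _ : Fin n => D)) :=
    integrable_of_le_one _ hf2meas.aestronglyMeasurable (fun p => (h2le1 p).1)
      (fun p => (h2le1 p).2)
  rw [integral_prod_symm _ hint2, integral_prod_symm _ hint1]
  refine integral_congr_ae (ae_of_all _ fun rest => ?_)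
  beta_reduce
  simp


/-- **Theorem 1 (leave-one-out CMI generalization bound for interpolating algorithms).**
If the loss takes values in `[0,1]` and `A` is an interpolating learning algorithm for
datasets of size `n`, then the expected risk is at most `LOOeCMI / log (n+1)`. -/
theorem risk_le_looEcmi_div_log
    {Ω 𝒳 𝒴 ℋ R : Type*} [MeasurableSpace Ω] [MeasurableSpace 𝒳] [MeasurableSpace 𝒴]
    [MeasurableSpace ℋ] [MeasurableSpace R]
    (μ : Measure Ω) [IsProbabilityMeasure μ]
    (D : Measure (𝒳 × 𝒴)) [IsProbabilityMeasure D]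
    (n : ℕ) (hn : 1 ≤ n)
    -- the loss function, measurable with values in [0,1]
    (ℓ : ℋ → 𝒳 × 𝒴 → ℝ) (hℓmeas : Measurable (Function.uncurry ℓ))
    (hℓ01 : ∀ h z, ℓ h z ∈ Set.Icc (0:ℝ) 1)
    -- the (possibly randomized) learning algorithm
    (A : (Fin n → 𝒳 × 𝒴) → R → ℋ) (hA : Measurable (Function.uncurry A))
    -- the supersample, the held-out index, and the internal randomness of the algorithm
    (Zt : Ω → Fin (n+1) → 𝒳 × 𝒴) (hZt : Measurable Zt)
    (U : Ω → Fin (n+1)) (hU : Measurable U)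
    (ξ : Ω → R) (hξ : Measurable ξ)
    (hiid : μ.map Zt = Measure.pi fun _ : Fin (n+1) => D)
    (hUunif : ∀ i, μ {ω | U ω = i} = (↑(n+1) : ℝ≥0∞)⁻¹)
    (hUindep : IndepFun U Zt μ)
    (hξindep : IndepFun ξ (fun ω => (Zt ω, U ω)) μ)
    -- the output classifier `W = A(S_n)` on the training sample `S_n = Z̃₋ᵤ`
    (W : Ω → ℋ) (hW : ∀ ω, W ω = A ((U ω).removeNth (Zt ω)) (ξ ω)) (hWmeas : Measurable W)
    -- the loss vector `L` on the supersample
    (L : Ω → Fin (n+1) → ℝ) (hL : ∀ ω i, L ω i = ℓ (W ω) (Zt ω i))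
    -- `A` is interpolating: the empirical risk on the training sample vanishes a.s.
    (hinterp : ∀ᵐ ω ∂μ, (n : ℝ)⁻¹ * ∑ i : Fin n, ℓ (W ω) ((U ω).removeNth (Zt ω) i) = 0) :
    ENNReal.ofReal (∫ ω, ∫ z, ℓ (W ω) z ∂D ∂μ)
      ≤ condMutInfo μ L U Zt / ENNReal.ofReal (Real.log (n+1)) := by
  
  classical
  -- measurability of the loss vector and basic consequences
  have hLfun : L = fun ω => fun i => ℓ (W ω) (Zt ω i) :=
    funext fun ω => funext fun i => hL ω i
  have hLmeas : Measurable L := by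
    rw [hLfun]
    exact measurable_pi_iff.mpr fun i =>
      hℓmeas.comp (hWmeas.prodMk ((measurable_pi_apply i).comp hZt))
  have hLU : Measurable fun ω => (L ω, U ω) := hLmeas.prodMk hU
  -- interpolation: losses at training points vanish a.s.
  have hzero : ∀ᵐ ω ∂μ, ∀ j, j ≠ U ω → L ω j = 0 := by
    filter_upwards [hinterp] with ω hω j hj
    have hn0 : ((n:ℝ))⁻¹ ≠ 0 := inv_ne_zero (Nat.cast_ne_zero.mpr (by omega))
    have hsum : ∑ i : Fin n, ℓ (W ω) ((U ω).removeNth (Zt ω) i) = 0 := by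
      rcases mul_eq_zero.mp hω with h | h
      · exact absurd h hn0
      · exact h
    have hterms := (Finset.sum_eq_zero_iff_of_nonneg
      (fun i _ => (hℓ01 (W ω) ((U ω).removeNth (Zt ω) i)).1)).mp hsum
    obtain ⟨i, hi⟩ := Fin.exists_succAbove_eq hj
    rw [hL ω j, ← hi]
    exact hterms i (Finset.mem_univ i)
  -- Step I: the risk equals the expected held-out loss
  have hrisk : ∫ ω, ∫ z, ℓ (W ω) z ∂D ∂μ = ∫ ω, L ω (U ω) ∂μ := by
    rw [risk_eq_heldout μ D n ℓ hℓmeas hℓ01 A hA Zt hZt U hU ξ hξ hiid hUindep hξindep W hW]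
    exact integral_congr_ae (ae_of_all _ fun ω => (hL ω (U ω)).symm)
  have heval : Measurable fun (q : (Fin (n+1) → ℝ) × Fin (n+1)) => q.1 q.2 :=
    measurable_from_prod_countable_left fun u => measurable_pi_apply _
  have hLUmeas : Measurable fun ω => L ω (U ω) := heval.comp hLU
  have hsetm : MeasurableSet {ω | 0 < L ω (U ω)} :=
    measurableSet_lt measurable_const hLUmeas
  -- Markov-type step: expected held-out loss is at most the probability it is positive
  have hmark : ∫ ω, L ω (U ω) ∂μ ≤ (μ {ω | 0 < L ω (U ω)}).toReal := by
    have hint : Integrable (fun ω => L ω (U ω)) μ :=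
      integrable_of_le_one μ hLUmeas.aestronglyMeasurable
        (fun ω => by rw [hL]; exact (hℓ01 _ _).1)
        (fun ω => by rw [hL]; exact (hℓ01 _ _).2)
    have hindint : Integrable ((Set.indicator {ω | 0 < L ω (U ω)} fun _ => (1:ℝ))) μ :=
      (integrable_const 1).indicator hsetm
    have hle : ∀ ω, L ω (U ω) ≤ Set.indicator {ω | 0 < L ω (U ω)} (fun _ => (1:ℝ)) ω := by
      intro ω
      by_cases h : 0 < L ω (U ω)
      · rw [Set.indicator_of_mem (show ω ∈ {ω | 0 < L ω (U ω)} from h) (fun _ => (1:ℝ))]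
        rw [hL]; exact (hℓ01 _ _).2
      · rw [Set.indicator_of_notMem (show ω ∉ {ω | 0 < L ω (U ω)} from h) (fun _ => (1:ℝ))]
        exact le_of_not_gt h
    calc ∫ ω, L ω (U ω) ∂μ
        ≤ ∫ ω, Set.indicator {ω | 0 < L ω (U ω)} (fun _ => (1:ℝ)) ω ∂μ :=
          integral_mono hint hindint hle
      _ = (μ {ω | 0 < L ω (U ω)}).toReal := by
          rw [integral_indicator_const _ hsetm]; simp [Measure.real]
  have hof : ENNReal.ofReal (∫ ω, ∫ z, ℓ (W ω) z ∂D ∂μ) ≤ μ {ω | 0 < L ω (U ω)} := by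
    rw [hrisk]
    calc ENNReal.ofReal (∫ ω, L ω (U ω) ∂μ)
        ≤ ENNReal.ofReal ((μ {ω | 0 < L ω (U ω)}).toReal) := ENNReal.ofReal_le_ofReal hmark
      _ = μ {ω | 0 < L ω (U ω)} := ENNReal.ofReal_toReal (measure_ne_top μ _)
  -- the a.e. kernel identities
  have hF1 : ∀ᵐ z ∂(μ.map Zt), ∀ u : Fin (n+1),
      condDistrib U Zt μ z {u} = ((n:ℝ≥0∞)+1)⁻¹ := by
    rw [ae_all_iff]
    intro u
    have hmeas : Measurable fun z => condDistrib U Zt μ z {u} :=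
      Kernel.measurable_coe _ (measurableSet_singleton u)
    refine ae_eq_of_forall_setLIntegral_eq_of_sigmaFinite₀
      hmeas.aemeasurable aemeasurable_const (fun s hs _ => ?_)
    rw [setLIntegral_map hs hmeas hZt,
      setLIntegral_preimage_condDistrib hZt hU.aemeasurable (measurableSet_singleton u) hs,
      Set.inter_comm,
      (indepFun_iff_measure_inter_preimage_eq_mul.mp hUindep) {u} s
        (measurableSet_singleton u) hs,
      setLIntegral_const, Measure.map_apply hZt hs]
    have h1 : U ⁻¹' {u} = {ω | U ω = u} := rfl
    have hcast : (↑(n+1) : ℝ≥0∞)⁻¹ = ((n:ℝ≥0∞)+1)⁻¹ := by push_cast; ring_nf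
    rw [h1, hUunif u, hcast]
  have hF2 : ∀ᵐ z ∂(μ.map Zt), ∀ u : Fin (n+1),
      condDistrib L Zt μ z (Spos n u)
        = condDistrib (fun ω => (L ω, U ω)) Zt μ z
            (Spos n u ×ˢ ({u} : Set (Fin (n+1)))) := by
    rw [ae_all_iff]
    intro u
    have hm1 : Measurable fun z => condDistrib L Zt μ z (Spos n u) :=
      Kernel.measurable_coe _ (measurableSet_Spos n u)
    have hm2 : Measurable fun z => condDistrib (fun ω => (L ω, U ω)) Zt μ z
        (Spos n u ×ˢ ({u} : Set (Fin (n+1)))) :=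
      Kernel.measurable_coe _ ((measurableSet_Spos n u).prod (measurableSet_singleton u))
    refine ae_eq_of_forall_setLIntegral_eq_of_sigmaFinite₀
      hm1.aemeasurable hm2.aemeasurable (fun s hs _ => ?_)
    rw [setLIntegral_map hs hm1 hZt, setLIntegral_map hs hm2 hZt,
      setLIntegral_preimage_condDistrib hZt hLmeas.aemeasurable (measurableSet_Spos n u) hs,
      setLIntegral_preimage_condDistrib hZt hLU.aemeasurable
        ((measurableSet_Spos n u).prod (measurableSet_singleton u)) hs]
    refine measure_congr ?_
    have hpre : (fun ω => (L ω, U ω)) ⁻¹' (Spos n u ×ˢ ({u} : Set (Fin (n+1))))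
        = L ⁻¹' (Spos n u) ∩ U ⁻¹' {u} := Set.mk_preimage_prod L U
    rw [hpre]
    filter_upwards [hzero] with ω hω
    have : (ω ∈ Zt ⁻¹' s ∩ L ⁻¹' Spos n u)
        = (ω ∈ Zt ⁻¹' s ∩ (L ⁻¹' Spos n u ∩ U ⁻¹' {u})) := by
      simp only [Set.mem_inter_iff, Set.mem_preimage, Set.mem_singleton_iff, eq_iff_iff]
      constructor
      · rintro ⟨h1, h2⟩
        refine ⟨h1, h2, ?_⟩
        by_contra hc
        have h0 := hω u (Ne.symm hc)
        obtain ⟨hlt, -⟩ := h2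
        rw [h0] at hlt
        exact lt_irrefl 0 hlt
      · rintro ⟨h1, h2, -⟩
        exact ⟨h1, h2⟩
    exact this
  have hF3 : ∀ᵐ z ∂(μ.map Zt), ∀ v u : Fin (n+1), v ≠ u →
      condDistrib (fun ω => (L ω, U ω)) Zt μ z
        (Spos n v ×ˢ ({u} : Set (Fin (n+1)))) = 0 := by
    rw [ae_all_iff]
    intro v
    rw [ae_all_iff]
    intro u
    by_cases hvu : v ≠ u
    swap
    · filter_upwards with z hz
      exact absurd hz hvu
    have hm2 : Measurable fun z => condDistrib (fun ω => (L ω, U ω)) Zt μ z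
        (Spos n v ×ˢ ({u} : Set (Fin (n+1)))) :=
      Kernel.measurable_coe _ ((measurableSet_Spos n v).prod (measurableSet_singleton u))
    have hint : ∫⁻ z, condDistrib (fun ω => (L ω, U ω)) Zt μ z
        (Spos n v ×ˢ ({u} : Set (Fin (n+1)))) ∂(μ.map Zt) = 0 := by
      rw [← Measure.restrict_univ (μ := μ.map Zt),
        setLIntegral_map MeasurableSet.univ hm2 hZt,
        setLIntegral_preimage_condDistrib hZt hLU.aemeasurable
          ((measurableSet_Spos n v).prod (measurableSet_singleton u)) MeasurableSet.univ]
      have hpre : (fun ω => (L ω, U ω)) ⁻¹' (Spos n v ×ˢ ({u} : Set (Fin (n+1))))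
          = L ⁻¹' (Spos n v) ∩ U ⁻¹' {u} := Set.mk_preimage_prod L U
      rw [Set.preimage_univ, Set.univ_inter, hpre]
      have hae : (L ⁻¹' (Spos n v) ∩ U ⁻¹' {u} : Set Ω) =ᵐ[μ] (∅ : Set Ω) := by
        filter_upwards [hzero] with ω hω
        show (ω ∈ L ⁻¹' (Spos n v) ∩ U ⁻¹' {u}) = (ω ∈ (∅ : Set Ω))
        simp only [Set.mem_inter_iff, Set.mem_preimage, Set.mem_singleton_iff,
          Set.mem_empty_iff_false, eq_iff_iff, iff_false, not_and]
        intro h2 h3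
        obtain ⟨hlt, -⟩ := h2
        have h0 := hω v (by rw [h3]; exact hvu)
        rw [h0] at hlt
        exact lt_irrefl 0 hlt
      rw [measure_congr hae]
      simp
    have := (lintegral_eq_zero_iff hm2).mp hint
    filter_upwards [this] with z hz _
    exact hz
  have hF4 : ∀ᵐ z ∂(μ.map Zt),
      condDistrib L Zt μ z (Sbot n)
        = condDistrib (fun ω => (L ω, U ω)) Zt μ z
            ((Sbot n) ×ˢ (Set.univ : Set (Fin (n+1)))) := by
    have hm1 : Measurable fun z => condDistrib L Zt μ z (Sbot n) :=
      Kernel.measurable_coe _ (measurableSet_Sbot n)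
    have hm2 : Measurable fun z => condDistrib (fun ω => (L ω, U ω)) Zt μ z
        ((Sbot n) ×ˢ (Set.univ : Set (Fin (n+1)))) :=
      Kernel.measurable_coe _ ((measurableSet_Sbot n).prod MeasurableSet.univ)
    refine ae_eq_of_forall_setLIntegral_eq_of_sigmaFinite₀
      hm1.aemeasurable hm2.aemeasurable (fun s hs _ => ?_)
    rw [setLIntegral_map hs hm1 hZt, setLIntegral_map hs hm2 hZt,
      setLIntegral_preimage_condDistrib hZt hLmeas.aemeasurable (measurableSet_Sbot n) hs,
      setLIntegral_preimage_condDistrib hZt hLU.aemeasurable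
        ((measurableSet_Sbot n).prod MeasurableSet.univ) hs]
    congr 1
    rw [Set.mk_preimage_prod L U, Set.preimage_univ, Set.inter_univ]
  -- probability of positive held-out loss as an integral of cell masses
  have hμset : μ {ω | 0 < L ω (U ω)}
      = ∫⁻ z, ∑ u, condDistrib (fun ω => (L ω, U ω)) Zt μ z
          (Spos n u ×ˢ ({u} : Set (Fin (n+1)))) ∂(μ.map Zt) := by
    have hcells : ∀ u : Fin (n+1), ∫⁻ z, condDistrib (fun ω => (L ω, U ω)) Zt μ z
        (Spos n u ×ˢ ({u} : Set (Fin (n+1)))) ∂(μ.map Zt)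
        = μ (L ⁻¹' (Spos n u) ∩ U ⁻¹' {u}) := by
      intro u
      rw [← Measure.restrict_univ (μ := μ.map Zt),
        setLIntegral_map MeasurableSet.univ
          (Kernel.measurable_coe _
            ((measurableSet_Spos n u).prod (measurableSet_singleton u))) hZt,
        setLIntegral_preimage_condDistrib hZt hLU.aemeasurable
          ((measurableSet_Spos n u).prod (measurableSet_singleton u)) MeasurableSet.univ,
        Set.preimage_univ, Set.univ_inter, Set.mk_preimage_prod L U]
    rw [lintegral_finset_sum _ (fun u _ =>
      Kernel.measurable_coe _ ((measurableSet_Spos n u).prod (measurableSet_singleton u)))]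
    simp_rw [fun u => hcells u]
    rw [← tsum_fintype (L := SummationFilter.unconditional _), ← measure_iUnion ?_ (fun u =>
      ((measurableSet_Spos n u).preimage hLmeas).inter
        ((measurableSet_singleton u).preimage hU))]
    · refine measure_congr ?_
      filter_upwards [hzero] with ω hω
      show (ω ∈ {ω | 0 < L ω (U ω)})
        = (ω ∈ ⋃ u, L ⁻¹' (Spos n u) ∩ U ⁻¹' {u})
      simp only [Set.mem_setOf_eq, Set.mem_iUnion, Set.mem_inter_iff, Set.mem_preimage,
        Set.mem_singleton_iff, eq_iff_iff]
      constructor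
      · intro hpos
        refine ⟨U ω, ⟨hpos, fun j hj => ?_⟩, rfl⟩
        rcases eq_or_ne j (U ω) with h | h
        · exact le_of_eq h.symm
        · rw [hω j h] at hj
          exact absurd hj (lt_irrefl 0)
      · rintro ⟨u, ⟨hpos, -⟩, rfl⟩
        exact hpos
    · intro u u' huu'
      rw [Function.onFun, Set.disjoint_left]
      rintro ω ⟨-, h2⟩ ⟨-, h4⟩
      simp only [Set.mem_preimage, Set.mem_singleton_iff] at h2 h4
      exact huu' (h2.symm.trans h4)
  -- the conditional mutual information bound
  have hcmi : ENNReal.ofReal (Real.log ((n:ℝ)+1)) * μ {ω | 0 < L ω (U ω)}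
      ≤ condMutInfo μ L U Zt := by
    rw [hμset, ← lintegral_const_mul' _ _ ENNReal.ofReal_ne_top]
    unfold condMutInfo dMutInfo
    refine lintegral_mono_ae ?_
    filter_upwards [hF1, hF2, hF3, hF4] with z h1 h2 h3 h4
    exact kl_cell_bound n (condDistrib (fun ω => (L ω, U ω)) Zt μ z)
      (condDistrib L Zt μ z) (condDistrib U Zt μ z) h1 h2 h3 h4
  -- conclude
  have hlogpos : 0 < Real.log ((n:ℝ)+1) := by
    apply Real.log_pos
    have : (1:ℝ) ≤ (n:ℝ) := by exact_mod_cast hn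
    linarith
  rw [ENNReal.le_div_iff_mul_le
    (Or.inl (ENNReal.ofReal_pos.mpr hlogpos).ne') (Or.inl ENNReal.ofReal_ne_top)]
  calc ENNReal.ofReal (∫ ω, ∫ z, ℓ (W ω) z ∂D ∂μ) * ENNReal.ofReal (Real.log ((n:ℝ)+1))
      = ENNReal.ofReal (Real.log ((n:ℝ)+1)) * ENNReal.ofReal (∫ ω, ∫ z, ℓ (W ω) z ∂D ∂μ) :=
        mul_comm _ _
    _ ≤ ENNReal.ofReal (Real.log ((n:ℝ)+1)) * μ {ω | 0 < L ω (U ω)} :=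
        mul_le_mul_right hof _
    _ ≤ condMutInfo μ L U Zt := hcmi
end

section
/- Let n ∈ ℕ, let the loss ℓ take values in [0,1], and let A_n be an interpolating learning algorithm for datasets of size n. Then for every α > 0, the expected risk satisfies R_D(A_n) ≤ ( I(L; U | Z̃) + log(1 + (n/(n+1))·(n+1)^{-α}) ) / log(n+1). -/
open MeasureTheory ProbabilityTheory Real
open scoped ENNReal NNReal Classical

lemma aux_sub_le_mul_log {a b : ℝ} (ha : 0 ≤ a) (hb : 0 < b) :
    a - b ≤ a * Real.log (a / b) := by
  rcases eq_or_lt_of_le ha with h | h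
  · simp [← h, hb.le]
  · have h1 : Real.log (b / a) ≤ b / a - 1 := Real.log_le_sub_one_of_pos (by positivity)
    have h2 : Real.log (a / b) = - Real.log (b / a) := by
      rw [← Real.log_inv]; congr 1; field_simp
    have h3 := mul_le_mul_of_nonneg_left h1 ha
    rw [mul_sub, mul_one, mul_div_cancel₀ _ (ne_of_gt h)] at h3
    rw [h2]; linarith

lemma aux_setIntegral_log_rnDeriv_ge {γ : Type*} [MeasurableSpace γ] (κ ν : Measure γ)
    [IsFiniteMeasure κ] [IsFiniteMeasure ν] (hac : κ ≪ ν)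
    (hint : Integrable (fun x => Real.log ((κ.rnDeriv ν x).toReal)) κ)
    {A : Set γ} (hA : MeasurableSet A) :
    (κ A).toReal * Real.log ((κ A).toReal / (ν A).toReal)
      ≤ ∫ x in A, Real.log ((κ.rnDeriv ν x).toReal) ∂κ := by
  set g : γ → ℝ := fun x => (κ.rnDeriv ν x).toReal with hg_def
  have hgmeas : Measurable g := (Measure.measurable_rnDeriv κ ν).ennreal_toReal
  by_cases hκA : κ A = 0
  · have : κ.restrict A = 0 := Measure.restrict_eq_zero.mpr hκA
    simp [hκA, this]
  have hνA : ν A ≠ 0 := fun h => hκA (hac h)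
  have hsmul : Integrable (fun x => g x • (A.indicator (fun y => Real.log (g y)) x)) ν :=
    (integrable_rnDeriv_smul_iff hac).mpr (hint.indicator hA)
  have h2 : (fun x => (κ.rnDeriv ν x).toReal • (A.indicator (fun y => Real.log (g y)) x))
      = A.indicator (fun y => g y * Real.log (g y)) := by
    funext x
    by_cases hx : x ∈ A <;> simp [Set.indicator_apply, hx, hg_def]
  have hchg : ∫ x in A, Real.log (g x) ∂κ = ∫ x in A, g x * Real.log (g x) ∂ν := by
    have h1 := integral_rnDeriv_smul hac (f := A.indicator (fun y => Real.log (g y)))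
    rw [h2] at h1
    rw [← integral_indicator hA, ← h1, ← integral_indicator hA]
  -- Jensen on ν.restrict A
  have hres0 : ν.restrict A ≠ 0 := by
    simpa [Measure.restrict_eq_zero] using hνA
  have : NeZero (ν.restrict A) := ⟨hres0⟩
  have hfi : Integrable g (ν.restrict A) :=
    (Measure.integrable_toReal_rnDeriv (μ := κ) (ν := ν)).restrict
  have hgi : Integrable ((fun x => x * Real.log x) ∘ g) (ν.restrict A) := by
    have : Integrable (A.indicator (fun y => g y * Real.log (g y))) ν := by
      rw [← h2]; exact hsmul
    have := (integrable_indicator_iff (hA)).mp this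
    exact this
  have hjen := (Real.convexOn_mul_log).map_average_le
    (Real.continuous_mul_log.continuousOn) isClosed_Ici
    (Filter.Eventually.of_forall (fun x => ENNReal.toReal_nonneg : ∀ x, g x ∈ Set.Ici (0:ℝ)))
    hfi hgi (μ := ν.restrict A)
  -- compute the averages
  have hmass : (ν.restrict A).real Set.univ = (ν A).toReal := by
    rw [measureReal_def, Measure.restrict_apply_univ]
  have hint_g : ∫ x in A, g x ∂ν = (κ A).toReal :=
    Measure.setIntegral_toReal_rnDeriv hac A
  rw [average_eq, average_eq, hmass, hint_g] at hjen
  have hνA' : 0 < (ν A).toReal := ENNReal.toReal_pos hνA (measure_ne_top ν A)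
  have hκA' : 0 ≤ (κ A).toReal := ENNReal.toReal_nonneg
  have hj2 : ((ν A).toReal⁻¹ * (κ A).toReal) * Real.log ((ν A).toReal⁻¹ * (κ A).toReal)
      ≤ (ν A).toReal⁻¹ * ∫ x in A, g x * Real.log (g x) ∂ν := by
    simpa [smul_eq_mul] using hjen
  have hlogeq : Real.log ((ν A).toReal⁻¹ * (κ A).toReal)
      = Real.log ((κ A).toReal / (ν A).toReal) := by
    rw [inv_mul_eq_div]
  rw [hchg]
  rw [hlogeq] at hj2
  have := mul_le_mul_of_nonneg_left hj2 hνA'.le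
  calc (κ A).toReal * Real.log ((κ A).toReal / (ν A).toReal)
      = (ν A).toReal * (((ν A).toReal⁻¹ * (κ A).toReal) * Real.log ((κ A).toReal / (ν A).toReal)) := by
        field_simp
    _ ≤ (ν A).toReal * ((ν A).toReal⁻¹ * ∫ x in A, g x * Real.log (g x) ∂ν) := this
    _ = ∫ x in A, g x * Real.log (g x) ∂ν := by field_simp
lemma aux_key_klDiv_ge (n : ℕ)
    (κ : Measure ((Fin (n+1) → ℝ) × Fin (n+1))) [IsProbabilityMeasure κ]
    (ν1 : Measure (Fin (n+1) → ℝ)) [IsProbabilityMeasure ν1]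
    (ν2 : Measure (Fin (n+1))) [IsProbabilityMeasure ν2]
    (hν2 : ∀ i, ν2 {i} = ((n+1 : ℕ) : ℝ≥0∞)⁻¹)
    (hsupp : κ {p | ∃ j, j ≠ p.2 ∧ p.1 j ≠ 0} = 0)
    (hm1 : ∀ i : Fin (n+1), ν1 {l | l i ≠ 0} = κ ({l : Fin (n+1) → ℝ | l i ≠ 0} ×ˢ Set.univ))
    (hm0 : ν1 {0} = κ (({0} : Set (Fin (n+1) → ℝ)) ×ˢ Set.univ)) :
    ENNReal.ofReal (Real.log ((n : ℝ) + 1)) * κ {p | p.1 p.2 ≠ 0}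
      ≤ klDiv' κ (ν1.prod ν2) := by
  classical
  rw [klDiv']
  split_ifs with h
  swap
  · exact le_top
  obtain ⟨hac, hint⟩ := h
  set ν := ν1.prod ν2 with hν_def
  -- sets
  set Si : Fin (n+1) → Set (Fin (n+1) → ℝ) := fun i => {l | l i ≠ 0} with hSi_def
  have hSimeas : ∀ i, MeasurableSet (Si i) :=
    fun i => (measurable_pi_apply i) (measurableSet_singleton 0).compl
  have h0meas : MeasurableSet ({0} : Set (Fin (n+1) → ℝ)) := by
    have : ({0} : Set (Fin (n+1) → ℝ)) = ⋂ i, (fun l : Fin (n+1) → ℝ => l i) ⁻¹' {0} := by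
      ext l; simp [funext_iff, Set.mem_iInter]
    rw [this]
    exact MeasurableSet.iInter fun i => (measurable_pi_apply i) (measurableSet_singleton 0)
  set C : Fin (n+1) → Set ((Fin (n+1) → ℝ) × Fin (n+1)) := fun i => Si i ×ˢ {i} with hC_def
  have hCmeas : ∀ i, MeasurableSet (C i) := fun i => (hSimeas i).prod (measurableSet_singleton i)
  set E : Fin (n+1) → Set ((Fin (n+1) → ℝ) × Fin (n+1)) :=
    fun i => ({0} : Set (Fin (n+1) → ℝ)) ×ˢ {i} with hE_def
  have hEmeas : ∀ i, MeasurableSet (E i) := fun i => h0meas.prod (measurableSet_singleton i)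
  set Pos : Set ((Fin (n+1) → ℝ) × Fin (n+1)) := {p | p.1 p.2 ≠ 0} with hPos_def
  have hPos_eq : Pos = ⋃ i, C i := by
    ext p
    simp only [hPos_def, hC_def, Set.mem_setOf_eq, Set.mem_iUnion, Set.mem_prod,
      Set.mem_singleton_iff, hSi_def]
    constructor
    · intro hp; exact ⟨p.2, hp, rfl⟩
    · rintro ⟨i, hi, rfl⟩; exact hi
  have hPosmeas : MeasurableSet Pos := hPos_eq ▸ MeasurableSet.iUnion hCmeas
  set Zero : Set ((Fin (n+1) → ℝ) × Fin (n+1)) := ({0} : Set (Fin (n+1) → ℝ)) ×ˢ Set.univ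
    with hZero_def
  have hZeromeas : MeasurableSet Zero := h0meas.prod MeasurableSet.univ
  have hZero_eq : Zero = ⋃ i, E i := by
    ext p
    simp [hZero_def, hE_def, Set.mem_prod, eq_comm]
    exact ⟨fun h => ⟨p.2, Prod.ext h rfl⟩, fun ⟨y, hy⟩ => by rw [hy]⟩
  set Null : Set ((Fin (n+1) → ℝ) × Fin (n+1)) := {p | p.1 p.2 = 0 ∧ p.1 ≠ 0} with hNull_def
  have hNullmeas : MeasurableSet Null := by
    have h1 : MeasurableSet {p : (Fin (n+1) → ℝ) × Fin (n+1) | p.1 p.2 = 0} := by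
      have := hPosmeas.compl
      simpa [hPos_def, Set.compl_setOf] using this
    have h2 : MeasurableSet {p : (Fin (n+1) → ℝ) × Fin (n+1) | p.1 ≠ 0} :=
      measurable_fst (h0meas.compl)
    exact h1.inter h2
  have hNull0 : κ Null = 0 := by
    refine measure_mono_null ?_ hsupp
    rintro ⟨l, u⟩ ⟨h1, h2⟩
    simp only [Set.mem_setOf_eq] at h1 h2 ⊢
    obtain ⟨j, hj⟩ : ∃ j, l j ≠ 0 := by
      by_contra hcon
      push_neg at hcon
      exact h2 (funext hcon)
    exact ⟨j, fun hju => hj (hju ▸ h1), hj⟩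
  -- measure computations
  have hκC_eq : ∀ i, κ (Si i ×ˢ Set.univ) = κ (C i) := by
    intro i
    have hsplit : (Si i ×ˢ (Set.univ : Set (Fin (n+1)))) = C i ∪ (Si i ×ˢ ({i}ᶜ)) := by
      ext p
      constructor
      · rintro ⟨h1, -⟩
        by_cases hp : p.2 = i
        · exact Or.inl ⟨h1, hp⟩
        · exact Or.inr ⟨h1, hp⟩
      · rintro (⟨h1, -⟩ | ⟨h1, -⟩) <;> exact ⟨h1, Set.mem_univ _⟩
    have hnull : κ (Si i ×ˢ ({i}ᶜ : Set (Fin (n+1)))) = 0 := by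
      refine measure_mono_null ?_ hsupp
      rintro ⟨l, u⟩ ⟨h1, h2⟩
      simp only [Set.mem_compl_iff, Set.mem_singleton_iff] at h2
      exact ⟨i, fun hiu => h2 hiu.symm, h1⟩
    rw [hsplit]
    refine le_antisymm ((measure_union_le _ _).trans (by rw [hnull, add_zero]))
      (measure_mono Set.subset_union_left)
  have hνC : ∀ i, ν (C i) = κ (C i) * ((n+1 : ℕ) : ℝ≥0∞)⁻¹ := by
    intro i
    rw [hC_def]
    simp only []
    rw [hν_def, Measure.prod_prod, hm1 i, hν2 i, hκC_eq i]
  have hνE : ∀ i, ν (E i) = κ Zero * ((n+1 : ℕ) : ℝ≥0∞)⁻¹ := by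
    intro i
    rw [hE_def]
    simp only []
    rw [hν_def, Measure.prod_prod, hm0, hν2 i]
  
  -- disjointness
  have hCd : Pairwise (Function.onFun Disjoint C) := by
    intro i j hij
    rw [Function.onFun, Set.disjoint_left]
    rintro ⟨l, u⟩ ⟨-, h2⟩ ⟨-, h4⟩
    simp only [Set.mem_singleton_iff] at h2 h4
    exact hij (h2 ▸ h4 ▸ rfl)
  have hEd : Pairwise (Function.onFun Disjoint E) := by
    intro i j hij
    rw [Function.onFun, Set.disjoint_left]
    rintro ⟨l, u⟩ ⟨-, h2⟩ ⟨-, h4⟩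
    simp only [Set.mem_singleton_iff] at h2 h4
    exact hij (h2 ▸ h4 ▸ rfl)
  set f : (Fin (n+1) → ℝ) × Fin (n+1) → ℝ := fun x => Real.log ((κ.rnDeriv ν x).toReal)
    with hf_def
  -- decomposition of the total integral
  have hPosSum : ∫ x in Pos, f x ∂κ = ∑ i, ∫ x in C i, f x ∂κ := by
    rw [hPos_eq, integral_iUnion hCmeas hCd hint.integrableOn]
    exact tsum_fintype _
  have hZeroSum : ∫ x in Zero, f x ∂κ = ∑ i, ∫ x in E i, f x ∂κ := by
    rw [hZero_eq, integral_iUnion hEmeas hEd hint.integrableOn]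
    exact tsum_fintype _
  have hNullInt : ∫ x in Null, f x ∂κ = 0 := by
    rw [Measure.restrict_eq_zero.mpr hNull0, integral_zero_measure]
  have hcomplEq : Posᶜ = Zero ∪ Null := by
    ext ⟨l, u⟩
    simp only [Set.mem_compl_iff, hPos_def, Set.mem_setOf_eq, not_not, Set.mem_union,
      hZero_def, hNull_def, Set.mem_prod, Set.mem_singleton_iff, Set.mem_univ, and_true]
    constructor
    · intro h
      by_cases h0 : l = 0
      · exact Or.inl h0
      · exact Or.inr ⟨h, h0⟩
    · rintro (h | ⟨h, -⟩)
      · rw [h]; rfl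
      · exact h
  have hdisjZN : Disjoint Zero Null := by
    rw [Set.disjoint_left]
    rintro ⟨l, u⟩ ⟨h1, -⟩ ⟨-, h4⟩
    exact h4 h1
  have htotal : ∫ x, f x ∂κ
      = ∑ i, ∫ x in C i, f x ∂κ + (∑ i, ∫ x in E i, f x ∂κ + 0) := by
    rw [← hPosSum, ← hZeroSum, ← hNullInt, ← setIntegral_union hdisjZN hNullmeas
      hint.integrableOn hint.integrableOn, ← hcomplEq, integral_add_compl hPosmeas hint]
  -- lower bound for C cells
  have hnat1 : (((n+1 : ℕ) : ℝ≥0∞)⁻¹).toReal = ((n : ℝ) + 1)⁻¹ := by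
    rw [ENNReal.toReal_inv]
    norm_num
    rw [ENNReal.toReal_add (by simp) (by simp)]
    simp
  have hCbound : ∀ i, (κ (C i)).toReal * Real.log ((n : ℝ) + 1) ≤ ∫ x in C i, f x ∂κ := by
    intro i
    rcases eq_or_ne (κ (C i)) 0 with hc0 | hc0
    · rw [Measure.restrict_eq_zero.mpr hc0, integral_zero_measure, hc0]
      simp
    · have hb := aux_setIntegral_log_rnDeriv_ge κ ν hac hint (hCmeas i)
      have hratio : (κ (C i)).toReal / (ν (C i)).toReal = (n : ℝ) + 1 := by
        rw [hνC i, ENNReal.toReal_mul, hnat1]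
        have hpos : 0 < (κ (C i)).toReal :=
          ENNReal.toReal_pos hc0 (measure_ne_top _ _)
        field_simp
      rw [hratio] at hb
      exact hb
  -- lower bound for E cells
  have hEbound : 0 ≤ ∑ i, ∫ x in E i, f x ∂κ := by
    rcases eq_or_ne (κ Zero) 0 with hz0 | hz0
    · have hEzero : ∀ i, ∫ x in E i, f x ∂κ = 0 := by
        intro i
        have : κ (E i) = 0 :=
          measure_mono_null (by rw [hZero_eq]; exact Set.subset_iUnion E i) hz0
        rw [Measure.restrict_eq_zero.mpr this, integral_zero_measure]
      simp [hEzero]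
    · have hz0' : 0 < (κ Zero).toReal := ENNReal.toReal_pos hz0 (measure_ne_top _ _)
      have hb : 0 < (κ Zero).toReal * ((n : ℝ) + 1)⁻¹ := by positivity
      have hEi : ∀ i, (κ (E i)).toReal - (κ Zero).toReal * ((n : ℝ) + 1)⁻¹
          ≤ ∫ x in E i, f x ∂κ := by
        intro i
        have hbd := aux_setIntegral_log_rnDeriv_ge κ ν hac hint (hEmeas i)
        have hνEi : (ν (E i)).toReal = (κ Zero).toReal * ((n : ℝ) + 1)⁻¹ := by
          rw [hνE i, ENNReal.toReal_mul, hnat1]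
        rw [hνEi] at hbd
        exact le_trans (aux_sub_le_mul_log ENNReal.toReal_nonneg hb) hbd
      have hsum : ∑ i, ((κ (E i)).toReal - (κ Zero).toReal * ((n : ℝ) + 1)⁻¹) = 0 := by
        rw [Finset.sum_sub_distrib, Finset.sum_const, Finset.card_univ, Fintype.card_fin]
        have hκZ : κ Zero = ∑ i, κ (E i) := by
          rw [hZero_eq, measure_iUnion hEd hEmeas, tsum_fintype]
        have : (κ Zero).toReal = ∑ i, (κ (E i)).toReal := by
          rw [hκZ, ENNReal.toReal_sum (fun i _ => measure_ne_top _ _)]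
        rw [← this]
        have : ((n+1 : ℕ) : ℝ) = (n : ℝ) + 1 := by norm_num
        rw [nsmul_eq_mul]
        push_cast
        field_simp
        ring
      calc (0:ℝ) = ∑ i, ((κ (E i)).toReal - (κ Zero).toReal * ((n : ℝ) + 1)⁻¹) := hsum.symm
        _ ≤ ∑ i, ∫ x in E i, f x ∂κ := Finset.sum_le_sum (fun i _ => hEi i)
  -- sum of C masses
  have hκPos : (κ Pos).toReal = ∑ i, (κ (C i)).toReal := by
    rw [hPos_eq, measure_iUnion hCd hCmeas, tsum_fintype,
      ENNReal.toReal_sum (fun i _ => measure_ne_top _ _)]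
  -- total lower bound
  have hmain : (κ Pos).toReal * Real.log ((n : ℝ) + 1) ≤ ∫ x, f x ∂κ := by
    rw [htotal, hκPos, Finset.sum_mul]
    have h1 : ∑ i, (κ (C i)).toReal * Real.log ((n : ℝ) + 1) ≤ ∑ i, ∫ x in C i, f x ∂κ :=
      Finset.sum_le_sum (fun i _ => hCbound i)
    linarith
  -- conclude in ℝ≥0∞
  have hlog0 : 0 ≤ Real.log ((n : ℝ) + 1) := Real.log_nonneg (by
    have : (0:ℝ) ≤ (n:ℝ) := Nat.cast_nonneg n
    linarith)
  calc ENNReal.ofReal (Real.log ((n : ℝ) + 1)) * κ Pos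
      = ENNReal.ofReal (Real.log ((n : ℝ) + 1)) * ENNReal.ofReal ((κ Pos).toReal) := by
        rw [ENNReal.ofReal_toReal (measure_ne_top _ _)]
    _ = ENNReal.ofReal (Real.log ((n : ℝ) + 1) * (κ Pos).toReal) := by
        rw [ENNReal.ofReal_mul hlog0]
    _ ≤ ENNReal.ofReal (∫ x, f x ∂κ) := by
        apply ENNReal.ofReal_le_ofReal
        rw [mul_comm]
        exact hmain
lemma aux_compProd_condDistrib {Ω β γ : Type*} [MeasurableSpace Ω] [MeasurableSpace β]
    [MeasurableSpace γ] [StandardBorelSpace β] [Nonempty β]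
    (μ : Measure Ω) [IsProbabilityMeasure μ]
    {X : Ω → γ} {Y : Ω → β} (hX : Measurable X) (hY : Measurable Y) :
    (μ.map X) ⊗ₘ condDistrib Y X μ = μ.map (fun ω => (X ω, Y ω)) := by
  haveI : IsProbabilityMeasure (μ.map (fun ω => (X ω, Y ω))) :=
    Measure.isProbabilityMeasure_map (hX.prodMk hY).aemeasurable
  rw [condDistrib_def, ← Measure.fst_map_prodMk₀ (X := X) hY.aemeasurable]
  exact (μ.map fun ω => (X ω, Y ω)).disintegrate _

lemma aux_setLintegral_condDistrib {Ω β γ : Type*} [MeasurableSpace Ω] [MeasurableSpace β]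
    [MeasurableSpace γ] [StandardBorelSpace β] [Nonempty β]
    (μ : Measure Ω) [IsProbabilityMeasure μ]
    {X : Ω → γ} {Y : Ω → β} (hX : Measurable X) (hY : Measurable Y)
    {s : Set β} (hs : MeasurableSet s) {T : Set γ} (hT : MeasurableSet T) :
    ∫⁻ z in T, condDistrib Y X μ z s ∂(μ.map X) = μ (X ⁻¹' T ∩ Y ⁻¹' s) := by
  rw [← Measure.compProd_apply_prod hT hs, aux_compProd_condDistrib μ hX hY,
    Measure.map_apply (hX.prodMk hY) (hT.prod hs), Set.mk_preimage_prod]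

lemma aux_lintegral_condDistrib {Ω β γ : Type*} [MeasurableSpace Ω] [MeasurableSpace β]
    [MeasurableSpace γ] [StandardBorelSpace β] [Nonempty β]
    (μ : Measure Ω) [IsProbabilityMeasure μ]
    {X : Ω → γ} {Y : Ω → β} (hX : Measurable X) (hY : Measurable Y)
    {s : Set β} (hs : MeasurableSet s) :
    ∫⁻ z, condDistrib Y X μ z s ∂(μ.map X) = μ (Y ⁻¹' s) := by
  have := aux_setLintegral_condDistrib μ hX hY hs MeasurableSet.univ
  simpa using this
lemma aux_measurable_eval_pair {δ : Type*} [MeasurableSpace δ] (k : ℕ) :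
    Measurable (fun q : (Fin k → δ) × Fin k => q.1 q.2) :=
  measurable_from_prod_countable_left (fun i => measurable_pi_apply i)

/-- For interpolating algorithms with `[0,1]`-valued loss: for every `α > 0`,
`Risk ≤ (I(L;U∣Z̃) + log(1 + (n/(n+1))·(n+1)^{-α})) / log (n+1)`. -/
theorem risk_le_looEcmi_add_log_div_log
    {Ω 𝒳 𝒴 ℋ R : Type*} [MeasurableSpace Ω] [MeasurableSpace 𝒳] [MeasurableSpace 𝒴]
    [MeasurableSpace ℋ] [MeasurableSpace R]
    (μ : Measure Ω) [IsProbabilityMeasure μ]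
    (D : Measure (𝒳 × 𝒴)) [IsProbabilityMeasure D]
    (n : ℕ) (hn : 1 ≤ n) (α : ℝ) (hα : 0 < α)
    -- the loss function
    (ℓ : ℋ → 𝒳 × 𝒴 → ℝ) (hℓmeas : Measurable (Function.uncurry ℓ))
    -- the (possibly randomized) learning algorithm
    (A : (Fin n → 𝒳 × 𝒴) → R → ℋ) (hA : Measurable (Function.uncurry A))
    -- the supersample, the held-out index, and the internal randomness of the algorithm
    (Zt : Ω → Fin (n+1) → 𝒳 × 𝒴) (hZt : Measurable Zt)
    (U : Ω → Fin (n+1)) (hU : Measurable U)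
    (ξ : Ω → R) (hξ : Measurable ξ)
    (hiid : μ.map Zt = Measure.pi fun _ : Fin (n+1) => D)
    (hUunif : ∀ i, μ {ω | U ω = i} = (↑(n+1) : ℝ≥0∞)⁻¹)
    (hUindep : IndepFun U Zt μ)
    (hξindep : IndepFun ξ (fun ω => (Zt ω, U ω)) μ)
    -- the output classifier `W = A(S_n)` on the training sample `S_n = Z̃₋ᵤ`
    (W : Ω → ℋ) (hW : ∀ ω, W ω = A ((U ω).removeNth (Zt ω)) (ξ ω))
    -- the loss vector `L` on the supersample
    (L : Ω → Fin (n+1) → ℝ) (hL : ∀ ω i, L ω i = ℓ (W ω) (Zt ω i))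
    (hℓ01 : ∀ h z, ℓ h z ∈ Set.Icc (0:ℝ) 1)
    -- `A` is interpolating: the empirical risk on the training sample vanishes a.s.
    (hinterp : ∀ᵐ ω ∂μ, (n : ℝ)⁻¹ * ∑ i : Fin n, ℓ (W ω) ((U ω).removeNth (Zt ω) i) = 0) :
    ENNReal.ofReal (∫ ω, ∫ z, ℓ (W ω) z ∂D ∂μ)
      ≤ (condMutInfo μ L U Zt
            + ENNReal.ofReal (Real.log (1 + ((n : ℝ) / (n + 1)) * ((n : ℝ) + 1) ^ (-α))))
          / ENNReal.ofReal (Real.log (n + 1)) := by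
  classical
  -- basic measurability
  have hWeq : W = fun ω => A ((U ω).removeNth (Zt ω)) (ξ ω) := funext hW
  have hSn : Measurable (fun ω => (U ω).removeNth (Zt ω)) := by
    apply measurable_pi_lambda
    intro i
    have h1 : Measurable (fun q : (Fin (n+1) → 𝒳 × 𝒴) × Fin (n+1) => q.1 (q.2.succAbove i)) := by
      have h2 : (fun q : (Fin (n+1) → 𝒳 × 𝒴) × Fin (n+1) => q.1 (q.2.succAbove i))
          = (fun q : (Fin (n+1) → 𝒳 × 𝒴) × Fin (n+1) => q.1 q.2)
            ∘ (fun q : (Fin (n+1) → 𝒳 × 𝒴) × Fin (n+1) => (q.1, q.2.succAbove i)) := rfl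
      rw [h2]
      exact (aux_measurable_eval_pair (n+1)).comp (measurable_fst.prodMk
        ((measurable_of_countable (fun u : Fin (n+1) => u.succAbove i)).comp measurable_snd))
    exact h1.comp (hZt.prodMk hU)
  have hWmeas : Measurable W := by
    rw [hWeq]
    exact hA.comp (hSn.prodMk hξ)
  have hLeq : L = fun ω i => ℓ (W ω) (Zt ω i) := funext fun ω => funext fun i => hL ω i
  have hLmeas : Measurable L := by
    rw [hLeq]
    apply measurable_pi_lambda
    intro i
    exact hℓmeas.comp (hWmeas.prodMk ((measurable_pi_apply i).comp hZt))
  have hLUmeas : Measurable (fun ω => L ω (U ω)) := by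
    have : (fun ω => L ω (U ω))
        = (fun q : (Fin (n+1) → ℝ) × Fin (n+1) => q.1 q.2) ∘ (fun ω => (L ω, U ω)) := rfl
    rw [this]
    exact (aux_measurable_eval_pair (n+1)).comp (hLmeas.prodMk hU)
  have hPosSetMeas : MeasurableSet {ω | L ω (U ω) ≠ 0} :=
    hLUmeas (measurableSet_singleton 0).compl
  -- step 7: risk bound by the measure of the event that the held-out loss is nonzero
  have hrisk : ENNReal.ofReal (∫ ω, ∫ z, ℓ (W ω) z ∂D ∂μ) ≤ μ {ω | L ω (U ω) ≠ 0} := by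
    haveI : IsProbabilityMeasure (μ.map ξ) := Measure.isProbabilityMeasure_map hξ.aemeasurable
    haveI : IsProbabilityMeasure (μ.map U) := Measure.isProbabilityMeasure_map hU.aemeasurable
    haveI : IsProbabilityMeasure (μ.map Zt) := Measure.isProbabilityMeasure_map hZt.aemeasurable
    set PiD : Measure (Fin (n+1) → 𝒳 × 𝒴) := Measure.pi (fun _ : Fin (n+1) => D) with hPiDdef
    set PiDn : Measure (Fin n → 𝒳 × 𝒴) := Measure.pi (fun _ : Fin n => D) with hPiDndef
    have hpairmeas : Measurable (fun ω => (Zt ω, U ω)) := hZt.prodMk hU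
    have hm2 : μ.map (fun ω => (Zt ω, U ω)) = PiD.prod (μ.map U) := by
      rw [← hiid]
      exact (indepFun_iff_map_prod_eq_prod_map_map hZt.aemeasurable hU.aemeasurable).mp
        hUindep.symm
    have hm1 : μ.map (fun ω => ((Zt ω, U ω), ξ ω)) = (PiD.prod (μ.map U)).prod (μ.map ξ) := by
      rw [← hm2]
      exact (indepFun_iff_map_prod_eq_prod_map_map hpairmeas.aemeasurable hξ.aemeasurable).mp
        hξindep.symm
    set B : ((Fin (n+1) → 𝒳 × 𝒴) × Fin (n+1)) × R → ℋ :=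
      fun q => A ((q.1.2).removeNth q.1.1) q.2 with hBdef
    have hBmeas : Measurable B := by
      have hinner : Measurable (fun q : ((Fin (n+1) → 𝒳 × 𝒴) × Fin (n+1)) × R
          => (q.1.2).removeNth q.1.1) := by
        apply measurable_pi_lambda
        intro i
        exact (aux_measurable_eval_pair (n+1)).comp
          ((measurable_fst.comp measurable_fst).prodMk
            ((measurable_of_countable (fun u : Fin (n+1) => u.succAbove i)).comp
              (measurable_snd.comp measurable_fst)))
      exact hA.comp (hinner.prodMk measurable_snd)
    set G1 : ((Fin (n+1) → 𝒳 × 𝒴) × Fin (n+1)) × R → ℝ≥0∞ :=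
      fun q => ∫⁻ z, ENNReal.ofReal (ℓ (B q) z) ∂D with hG1def
    set G2 : ((Fin (n+1) → 𝒳 × 𝒴) × Fin (n+1)) × R → ℝ≥0∞ :=
      fun q => ENNReal.ofReal (ℓ (B q) (q.1.1 q.1.2)) with hG2def
    have hG1meas : Measurable G1 := by
      apply Measurable.lintegral_prod_right'
        (f := fun qz : (((Fin (n+1) → 𝒳 × 𝒴) × Fin (n+1)) × R) × (𝒳 × 𝒴)
          => ENNReal.ofReal (ℓ (B qz.1) qz.2))
      exact (hℓmeas.comp ((hBmeas.comp measurable_fst).prodMk measurable_snd)).ennreal_ofReal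
    have hG2meas : Measurable G2 := by
      refine Measurable.ennreal_ofReal (hℓmeas.comp (hBmeas.prodMk ?_))
      have h2 : (fun q : ((Fin (n+1) → 𝒳 × 𝒴) × Fin (n+1)) × R => q.1.1 q.1.2)
          = (fun q : (Fin (n+1) → 𝒳 × 𝒴) × Fin (n+1) => q.1 q.2) ∘ Prod.fst := rfl
      rw [h2]
      exact (aux_measurable_eval_pair (n+1)).comp measurable_fst
    set τ : Ω → ((Fin (n+1) → 𝒳 × 𝒴) × Fin (n+1)) × R :=
      fun ω => ((Zt ω, U ω), ξ ω) with hτdef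
    have hτmeas : Measurable τ := hpairmeas.prodMk hξ
    -- the exchange identity
    have hclaim : ∀ (u : Fin (n+1)) (x : R),
        ∫⁻ p, G1 ((p, u), x) ∂PiD = ∫⁻ p, G2 ((p, u), x) ∂PiD := by
      intro u x
      have mp := measurePreserving_piFinSuccAbove (fun _ : Fin (n+1) => D) u
      set f : (Fin n → 𝒳 × 𝒴) → (𝒳 × 𝒴) → ℝ≥0∞ :=
        fun v z => ENNReal.ofReal (ℓ (A v x) z) with hfdef
      have hfmeas : Measurable (fun w : (Fin n → 𝒳 × 𝒴) × (𝒳 × 𝒴) => f w.1 w.2) := by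
        refine Measurable.ennreal_ofReal (hℓmeas.comp (Measurable.prodMk ?_ measurable_snd))
        exact hA.comp ((measurable_fst).prodMk measurable_const)
      have hmeasA : Measurable (fun w : (𝒳 × 𝒴) × (Fin n → 𝒳 × 𝒴) => ∫⁻ z, f w.2 z ∂D) := by
        apply Measurable.lintegral_prod_right'
          (f := fun wz : ((𝒳 × 𝒴) × (Fin n → 𝒳 × 𝒴)) × (𝒳 × 𝒴) => f wz.1.2 wz.2)
        exact hfmeas.comp ((measurable_snd.comp measurable_fst).prodMk measurable_snd)
      have hmeasB : Measurable (fun w : (𝒳 × 𝒴) × (Fin n → 𝒳 × 𝒴) => f w.2 w.1) :=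
        hfmeas.comp (measurable_snd.prodMk measurable_fst)
      have he : ∀ p : Fin (n+1) → 𝒳 × 𝒴,
          (MeasurableEquiv.piFinSuccAbove (fun _ : Fin (n+1) => 𝒳 × 𝒴) u) p
            = (p u, u.removeNth p) := fun p => rfl
      have hg1 : ∫⁻ p, G1 ((p, u), x) ∂PiD
          = ∫⁻ w, (∫⁻ z, f w.2 z ∂D) ∂(D.prod PiDn) := by
        rw [← mp.lintegral_comp hmeasA]
        exact lintegral_congr (fun p => by rw [he p])
      have hg2 : ∫⁻ p, G2 ((p, u), x) ∂PiD
          = ∫⁻ w, f w.2 w.1 ∂(D.prod PiDn) := by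
        rw [← mp.lintegral_comp hmeasB]
        exact lintegral_congr (fun p => by rw [he p])
      rw [hg1, hg2, lintegral_prod _ hmeasA.aemeasurable,
        lintegral_prod_symm _ hmeasB.aemeasurable]
      simp only [lintegral_const, measure_univ, mul_one]
    -- put the two sides in product form
    have hT1 : ∫⁻ ω, ∫⁻ z, ENNReal.ofReal (ℓ (W ω) z) ∂D ∂μ
        = ∫⁻ ω, ENNReal.ofReal (L ω (U ω)) ∂μ := by
      have e1 : ∫⁻ ω, ∫⁻ z, ENNReal.ofReal (ℓ (W ω) z) ∂D ∂μ = ∫⁻ ω, G1 (τ ω) ∂μ := by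
        refine lintegral_congr (fun ω => ?_)
        rw [hG1def, hτdef]
        simp only []
        rw [hW ω]
      have e2 : ∫⁻ ω, ENNReal.ofReal (L ω (U ω)) ∂μ = ∫⁻ ω, G2 (τ ω) ∂μ := by
        refine lintegral_congr (fun ω => ?_)
        rw [hG2def, hτdef]
        simp only []
        rw [hL ω (U ω), hW ω]
      rw [e1, e2, ← lintegral_map hG1meas hτmeas, ← lintegral_map hG2meas hτmeas]
      have hmapτ : μ.map τ = (PiD.prod (μ.map U)).prod (μ.map ξ) := hm1
      rw [hmapτ]
      rw [lintegral_prod_symm _ hG1meas.aemeasurable,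
        lintegral_prod_symm _ hG2meas.aemeasurable]
      refine lintegral_congr (fun x => ?_)
      have h1x : Measurable (fun pu : (Fin (n+1) → 𝒳 × 𝒴) × Fin (n+1) => G1 (pu, x)) :=
        hG1meas.comp measurable_prodMk_right
      have h2x : Measurable (fun pu : (Fin (n+1) → 𝒳 × 𝒴) × Fin (n+1) => G2 (pu, x)) :=
        hG2meas.comp measurable_prodMk_right
      rw [lintegral_prod_symm _ h1x.aemeasurable, lintegral_prod_symm _ h2x.aemeasurable]
      exact lintegral_congr (fun u => hclaim u x)
    -- turn Bochner integrals into lintegrals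
    have hjm : Measurable (fun p : Ω × (𝒳 × 𝒴) => ℓ (W p.1) p.2) :=
      hℓmeas.comp ((hWmeas.comp measurable_fst).prodMk measurable_snd)
    have hIz : ∀ ω, Integrable (fun z => ℓ (W ω) z) D := by
      intro ω
      refine Integrable.mono' (integrable_const 1) ?_ ?_
      · exact (hℓmeas.comp (measurable_const.prodMk measurable_id)).aestronglyMeasurable
      · refine Filter.Eventually.of_forall (fun z => ?_)
        rw [Real.norm_eq_abs, abs_le]
        exact ⟨by linarith [(hℓ01 (W ω) z).1], (hℓ01 (W ω) z).2⟩
    have hFmeas : StronglyMeasurable (fun ω => ∫ z, ℓ (W ω) z ∂D) :=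
      hjm.stronglyMeasurable.integral_prod_right'
    have hFint : Integrable (fun ω => ∫ z, ℓ (W ω) z ∂D) μ := by
      refine Integrable.mono' (integrable_const 1) hFmeas.aestronglyMeasurable ?_
      refine Filter.Eventually.of_forall (fun ω => ?_)
      rw [Real.norm_eq_abs]
      have h1 : |∫ z, ℓ (W ω) z ∂D| ≤ ∫ z, |ℓ (W ω) z| ∂D := by
        simpa [Real.norm_eq_abs] using
          norm_integral_le_integral_norm (f := fun z => ℓ (W ω) z) (μ := D)
      have h2 : ∫ z, |ℓ (W ω) z| ∂D ≤ ∫ _z, (1:ℝ) ∂D := by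
        refine integral_mono_of_nonneg (Filter.Eventually.of_forall fun z => abs_nonneg _)
          (integrable_const 1) (Filter.Eventually.of_forall fun z => ?_)
        show |ℓ (W ω) z| ≤ (1:ℝ)
        rw [abs_le]
        exact ⟨by linarith [(hℓ01 (W ω) z).1], (hℓ01 (W ω) z).2⟩
      simp only [integral_const, probReal_univ, ENNReal.toReal_one, smul_eq_mul, one_mul] at h2
      linarith
    have hstep1 : ENNReal.ofReal (∫ ω, ∫ z, ℓ (W ω) z ∂D ∂μ)
        = ∫⁻ ω, ∫⁻ z, ENNReal.ofReal (ℓ (W ω) z) ∂D ∂μ := by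
      rw [ofReal_integral_eq_lintegral_ofReal hFint (Filter.Eventually.of_forall fun ω =>
        integral_nonneg (fun z => (hℓ01 (W ω) z).1))]
      exact lintegral_congr fun ω =>
        ofReal_integral_eq_lintegral_ofReal (hIz ω)
          (Filter.Eventually.of_forall fun z => (hℓ01 (W ω) z).1)
    rw [hstep1, hT1]
    have hind : ∀ ω, ENNReal.ofReal (L ω (U ω))
        ≤ Set.indicator {ω' | L ω' (U ω') ≠ 0} (fun _ => (1:ℝ≥0∞)) ω := by
      intro ω
      by_cases h : L ω (U ω) = 0
      · simp [h]
      · rw [Set.indicator_of_mem (show ω ∈ {ω' | L ω' (U ω') ≠ 0} from h)]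
        refine ENNReal.ofReal_le_one.mpr ?_
        rw [hL ω (U ω)]
        exact (hℓ01 _ _).2
    calc ∫⁻ ω, ENNReal.ofReal (L ω (U ω)) ∂μ
        ≤ ∫⁻ ω, Set.indicator {ω' | L ω' (U ω') ≠ 0} (fun _ => (1:ℝ≥0∞)) ω ∂μ :=
          lintegral_mono hind
      _ = μ {ω | L ω (U ω) ≠ 0} := by
          rw [lintegral_indicator hPosSetMeas]
          simp
  -- step 8: CMI lower bound
  have hCMI : ENNReal.ofReal (Real.log ((n : ℝ) + 1)) * μ {ω | L ω (U ω) ≠ 0}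
      ≤ condMutInfo μ L U Zt := by
    haveI : IsProbabilityMeasure (μ.map Zt) := Measure.isProbabilityMeasure_map hZt.aemeasurable
    have hLUm : Measurable (fun ω => (L ω, U ω)) := hLmeas.prodMk hU
    have hPosMeas : MeasurableSet {p : (Fin (n+1) → ℝ) × Fin (n+1) | p.1 p.2 ≠ 0} :=
      (aux_measurable_eval_pair (n+1)) (measurableSet_singleton (0:ℝ)).compl
    have hBadMeas : MeasurableSet {p : (Fin (n+1) → ℝ) × Fin (n+1) | ∃ j, j ≠ p.2 ∧ p.1 j ≠ 0} := by
      have heq : {p : (Fin (n+1) → ℝ) × Fin (n+1) | ∃ j, j ≠ p.2 ∧ p.1 j ≠ 0}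
          = ⋃ j, ({l : Fin (n+1) → ℝ | l j ≠ 0} ×ˢ ({j}ᶜ : Set (Fin (n+1)))) := by
        ext p
        simp only [Set.mem_setOf_eq, Set.mem_iUnion, Set.mem_prod, Set.mem_compl_iff,
          Set.mem_singleton_iff]
        constructor
        · rintro ⟨j, hj1, hj2⟩; exact ⟨j, hj2, fun h => hj1 (h ▸ rfl)⟩
        · rintro ⟨j, hj2, hj1⟩; exact ⟨j, fun h => hj1 (h ▸ rfl), hj2⟩
      rw [heq]
      exact MeasurableSet.iUnion fun j =>
        ((measurable_pi_apply j) (measurableSet_singleton 0).compl).prod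
          (measurableSet_singleton j).compl
    have hSiMeas : ∀ i : Fin (n+1), MeasurableSet {l : Fin (n+1) → ℝ | l i ≠ 0} :=
      fun i => (measurable_pi_apply i) (measurableSet_singleton 0).compl
    have h0Meas : MeasurableSet ({0} : Set (Fin (n+1) → ℝ)) := by
      have : ({0} : Set (Fin (n+1) → ℝ)) = ⋂ i, (fun l : Fin (n+1) → ℝ => l i) ⁻¹' {0} := by
        ext l; simp [funext_iff, Set.mem_iInter]
      rw [this]
      exact MeasurableSet.iInter fun i => (measurable_pi_apply i) (measurableSet_singleton 0)
    -- F1 : conditional law of U is uniform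
    have hunif : ∀ᵐ z ∂(μ.map Zt), ∀ i : Fin (n+1),
        condDistrib U Zt μ z {i} = ((n+1 : ℕ) : ℝ≥0∞)⁻¹ := by
      rw [ae_all_iff]
      intro i
      refine ae_eq_of_forall_setLIntegral_eq_of_sigmaFinite
        (Kernel.measurable_coe _ (measurableSet_singleton i)) measurable_const ?_
      intro T hT _
      rw [aux_setLintegral_condDistrib μ hZt hU (measurableSet_singleton i) hT,
        setLIntegral_const, Set.inter_comm,
        hUindep.measure_inter_preimage_eq_mul {i} T (measurableSet_singleton i) hT]
      have hpre : U ⁻¹' {i} = {ω | U ω = i} := rfl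
      rw [hpre, hUunif i, Measure.map_apply hZt hT, mul_comm]
    -- F2 : marginal of the joint conditional law
    have hmargS : ∀ (S : Set (Fin (n+1) → ℝ)), MeasurableSet S → (∀ᵐ z ∂(μ.map Zt),
        condDistrib L Zt μ z S
          = condDistrib (fun ω => (L ω, U ω)) Zt μ z (S ×ˢ Set.univ)) := by
      intro S hS
      refine ae_eq_of_forall_setLIntegral_eq_of_sigmaFinite
        (Kernel.measurable_coe _ hS) (Kernel.measurable_coe _ (hS.prod MeasurableSet.univ)) ?_
      intro T hT _
      rw [aux_setLintegral_condDistrib μ hZt hLmeas hS hT,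
        aux_setLintegral_condDistrib μ hZt hLUm (hS.prod MeasurableSet.univ) hT]
      congr 1
      ext ω
      simp [Set.mem_prod]
    have hmarg1 : ∀ᵐ z ∂(μ.map Zt), ∀ i : Fin (n+1),
        condDistrib L Zt μ z {l | l i ≠ 0}
          = condDistrib (fun ω => (L ω, U ω)) Zt μ z ({l : Fin (n+1) → ℝ | l i ≠ 0} ×ˢ Set.univ) := by
      rw [ae_all_iff]
      exact fun i => hmargS _ (hSiMeas i)
    have hmarg0 : ∀ᵐ z ∂(μ.map Zt),
        condDistrib L Zt μ z {0}
          = condDistrib (fun ω => (L ω, U ω)) Zt μ z (({0} : Set (Fin (n+1) → ℝ)) ×ˢ Set.univ) :=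
      hmargS _ h0Meas
    -- F3 : interpolation support property
    have hzero : ∀ᵐ ω ∂μ, ∀ j, j ≠ U ω → L ω j = 0 := by
      filter_upwards [hinterp] with ω hω
      intro j hj
      have hn0 : (n:ℝ)⁻¹ ≠ 0 := by
        have : (0:ℝ) < n := by exact_mod_cast hn
        positivity
      have hsum : ∑ i : Fin n, ℓ (W ω) ((U ω).removeNth (Zt ω) i) = 0 := by
        rcases mul_eq_zero.mp hω with h | h
        · exact absurd h hn0
        · exact h
      have hterm := (Finset.sum_eq_zero_iff_of_nonneg
        (fun i _ => (hℓ01 (W ω) ((U ω).removeNth (Zt ω) i)).1)).mp hsum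
      obtain ⟨k, hk⟩ := Fin.exists_succAbove_eq hj
      rw [hL ω j, ← hk]
      exact hterm k (Finset.mem_univ k)
    have hBadNull : μ {ω | ∃ j, j ≠ U ω ∧ L ω j ≠ 0} = 0 := by
      have h1 := ae_iff.mp hzero
      convert h1 using 2
      ext ω
      simp only [Set.mem_setOf_eq]
      push_neg
      constructor
      · rintro ⟨j, hj1, hj2⟩; exact ⟨j, hj1, hj2⟩
      · rintro ⟨j, hj1, hj2⟩; exact ⟨j, hj1, hj2⟩
    have hbadae : ∀ᵐ z ∂(μ.map Zt),
        condDistrib (fun ω => (L ω, U ω)) Zt μ z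
          {p : (Fin (n+1) → ℝ) × Fin (n+1) | ∃ j, j ≠ p.2 ∧ p.1 j ≠ 0} = 0 := by
      have h1 : ∫⁻ z, condDistrib (fun ω => (L ω, U ω)) Zt μ z
          {p : (Fin (n+1) → ℝ) × Fin (n+1) | ∃ j, j ≠ p.2 ∧ p.1 j ≠ 0} ∂(μ.map Zt) = 0 := by
        rw [aux_lintegral_condDistrib μ hZt hLUm hBadMeas]
        exact hBadNull
      have h2 := (lintegral_eq_zero_iff (Kernel.measurable_coe _ hBadMeas)).mp h1
      exact h2
    -- F4 : total mass of the positive set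
    have hF4 : ∫⁻ z, condDistrib (fun ω => (L ω, U ω)) Zt μ z
        {p : (Fin (n+1) → ℝ) × Fin (n+1) | p.1 p.2 ≠ 0} ∂(μ.map Zt)
        = μ {ω | L ω (U ω) ≠ 0} := by
      rw [aux_lintegral_condDistrib μ hZt hLUm hPosMeas]
      rfl
    -- pointwise lower bound on the disintegrated mutual information
    have hae : ∀ᵐ z ∂(μ.map Zt),
        ENNReal.ofReal (Real.log ((n:ℝ)+1)) * condDistrib (fun ω => (L ω, U ω)) Zt μ z
          {p : (Fin (n+1) → ℝ) × Fin (n+1) | p.1 p.2 ≠ 0}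
          ≤ dMutInfo μ L U Zt z := by
      filter_upwards [hunif, hmarg1, hmarg0, hbadae] with z h1 h2 h3 h4
      unfold dMutInfo
      exact aux_key_klDiv_ge n (condDistrib (fun ω => (L ω, U ω)) Zt μ z)
        (condDistrib L Zt μ z) (condDistrib U Zt μ z) h1 h4 (fun i => (h2 i).symm ▸ (h2 i)) h3
    calc ENNReal.ofReal (Real.log ((n : ℝ) + 1)) * μ {ω | L ω (U ω) ≠ 0}
        = ∫⁻ z, ENNReal.ofReal (Real.log ((n:ℝ)+1)) * condDistrib (fun ω => (L ω, U ω)) Zt μ z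
            {p : (Fin (n+1) → ℝ) × Fin (n+1) | p.1 p.2 ≠ 0} ∂(μ.map Zt) := by
          rw [lintegral_const_mul _ (Kernel.measurable_coe _ hPosMeas), hF4]
      _ ≤ ∫⁻ z, dMutInfo μ L U Zt z ∂(μ.map Zt) := lintegral_mono_ae hae
      _ = condMutInfo μ L U Zt := rfl
  -- conclusion
  have hD0 : 0 < Real.log ((n : ℝ) + 1) := by
    apply Real.log_pos
    have : (1:ℝ) ≤ (n:ℝ) := by exact_mod_cast hn
    linarith
  rw [ENNReal.le_div_iff_mul_le (Or.inl (ENNReal.ofReal_pos.mpr hD0).ne')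
    (Or.inl ENNReal.ofReal_ne_top)]
  calc ENNReal.ofReal (∫ ω, ∫ z, ℓ (W ω) z ∂D ∂μ) * ENNReal.ofReal (Real.log ((n:ℝ) + 1))
      ≤ μ {ω | L ω (U ω) ≠ 0} * ENNReal.ofReal (Real.log ((n:ℝ) + 1)) :=
        mul_le_mul_left hrisk _
    _ = ENNReal.ofReal (Real.log ((n:ℝ) + 1)) * μ {ω | L ω (U ω) ≠ 0} := mul_comm _ _
    _ ≤ condMutInfo μ L U Zt := hCMI
    _ ≤ _ := le_self_add
end

section
/- Let n ∈ ℕ, let the loss ℓ take values in [0,1], let A_n be an interpolating learning algorithm for datasets of size n, and let α > 0. Define h_α(z̃, u, l) = l_u − α Σ_{i≠u} l_i and λ = log(n+1). Let Ũ be uniform on {1,...,n+1} and independent of the pair (Z̃, L). Then E[ exp(λ h_α(Z̃, Ũ, L)) ] ≤ 1 + (n/(n+1)) exp(−α log(n+1)). -/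
open MeasureTheory ProbabilityTheory Real
open scoped ENNReal NNReal Classical

section Aux

private lemma exp_convex_interp {x c : ℝ} (h0 : 0 ≤ c) (h1 : c ≤ 1) :
    Real.exp (c * x) ≤ 1 - c + c * Real.exp x := by
  have h := convexOn_exp.2 (Set.mem_univ (0:ℝ)) (Set.mem_univ x)
    (by linarith : (0:ℝ) ≤ 1 - c) h0 (by ring)
  simp only [smul_eq_mul, mul_zero, zero_add, Real.exp_zero, mul_one] at h
  linarith

private lemma key_sum_bound (n : ℕ) {α c : ℝ} (hα : 0 < α) (h0 : 0 ≤ c) (h1 : c ≤ 1) :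
    Real.exp (Real.log ((n:ℝ)+1) * c) + (n:ℝ) * Real.exp (Real.log ((n:ℝ)+1) * (-(α * c)))
      ≤ ((n:ℝ)+1) + (n:ℝ) * Real.exp (-α * Real.log ((n:ℝ)+1)) := by
  set lam := Real.log ((n:ℝ)+1) with hlam
  have hnp : (0:ℝ) < (n:ℝ) + 1 := by positivity
  have hexplam : Real.exp lam = (n:ℝ) + 1 := Real.exp_log hnp
  have hn0 : (0:ℝ) ≤ (n:ℝ) := Nat.cast_nonneg n
  have h2 : Real.exp (lam * c) ≤ 1 - c + c * ((n:ℝ)+1) := by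
    have h := exp_convex_interp (x := lam) h0 h1
    rw [mul_comm c lam] at h; rw [hexplam] at h; exact h
  have h3 : Real.exp (lam * (-(α * c))) ≤ 1 - c + c * Real.exp (-α * lam) := by
    have h := exp_convex_interp (x := -α * lam) h0 h1
    have e : c * (-α * lam) = lam * (-(α * c)) := by ring
    rw [e] at h; exact h
  have h4 : (n:ℝ) * Real.exp (lam * (-(α * c))) ≤ (n:ℝ) * (1 - c + c * Real.exp (-α * lam)) :=
    mul_le_mul_of_nonneg_left h3 hn0
  have h5 : (0:ℝ) ≤ (1 - c) * ((n:ℝ) * Real.exp (-α * lam)) :=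
    mul_nonneg (by linarith) (mul_nonneg hn0 (Real.exp_pos _).le)
  nlinarith [Real.exp_pos (-α * lam)]

end Aux

/-- The moment-generating-function estimate in the proof of the interpolating generalization
bound: with `λ = log (n+1)` and a fresh uniform index `Ũ` independent of `(Z̃, L)`,
`E[exp (λ h_α(Z̃, Ũ, L))] ≤ 1 + (n/(n+1)) exp (-α log (n+1))` where
`h_α(z̃, u, l) = l_u - α ∑_{i ≠ u} l_i`. -/
theorem mgf_bound_interpolating
    {Ω 𝒳 𝒴 ℋ R : Type*} [MeasurableSpace Ω] [MeasurableSpace 𝒳] [MeasurableSpace 𝒴]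
    [MeasurableSpace ℋ] [MeasurableSpace R]
    (μ : Measure Ω) [IsProbabilityMeasure μ]
    (D : Measure (𝒳 × 𝒴)) [IsProbabilityMeasure D]
    (n : ℕ) (α : ℝ) (hα : 0 < α)
    -- the loss function
    (ℓ : ℋ → 𝒳 × 𝒴 → ℝ) (hℓmeas : Measurable (Function.uncurry ℓ))
    -- the (possibly randomized) learning algorithm
    (A : (Fin n → 𝒳 × 𝒴) → R → ℋ) (hA : Measurable (Function.uncurry A))
    -- the supersample, the held-out index, and the internal randomness of the algorithm
    (Zt : Ω → Fin (n+1) → 𝒳 × 𝒴) (hZt : Measurable Zt)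
    (U : Ω → Fin (n+1)) (hU : Measurable U)
    (ξ : Ω → R) (hξ : Measurable ξ)
    (hiid : μ.map Zt = Measure.pi fun _ : Fin (n+1) => D)
    (hUunif : ∀ i, μ {ω | U ω = i} = (↑(n+1) : ℝ≥0∞)⁻¹)
    (hUindep : IndepFun U Zt μ)
    (hξindep : IndepFun ξ (fun ω => (Zt ω, U ω)) μ)
    -- the output classifier `W = A(S_n)` on the training sample `S_n = Z̃₋ᵤ`
    (W : Ω → ℋ) (hW : ∀ ω, W ω = A ((U ω).removeNth (Zt ω)) (ξ ω))
    -- the loss vector `L` on the supersample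
    (L : Ω → Fin (n+1) → ℝ) (hL : ∀ ω i, L ω i = ℓ (W ω) (Zt ω i))
    (hℓ01 : ∀ h z, ℓ h z ∈ Set.Icc (0:ℝ) 1)
    -- `A` is interpolating: the empirical risk on the training sample vanishes a.s.
    (hinterp : ∀ᵐ ω ∂μ, (n : ℝ)⁻¹ * ∑ i : Fin n, ℓ (W ω) ((U ω).removeNth (Zt ω) i) = 0)
    -- a fresh uniform index `Ũ`, independent of the pair `(Z̃, L)`
    (Ut : Ω → Fin (n+1)) (hUt : Measurable Ut)
    (hUtunif : ∀ i, μ {ω | Ut ω = i} = (↑(n+1) : ℝ≥0∞)⁻¹)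
    (hUtindep : IndepFun Ut (fun ω => (Zt ω, L ω)) μ) :
    ∫ ω, Real.exp (Real.log (n + 1)
        * (L ω (Ut ω) - α * ∑ i ∈ Finset.univ.erase (Ut ω), L ω i)) ∂μ
      ≤ 1 + ((n : ℝ) / (n + 1)) * Real.exp (-α * Real.log (n + 1)) := by
  
  classical
  have hnp : (0:ℝ) < (n:ℝ) + 1 := by positivity
  have hlam0 : 0 ≤ Real.log ((n:ℝ)+1) := Real.log_nonneg (by linarith [Nat.cast_nonneg (α := ℝ) n])
  -- measurability of W and L
  have hT : Measurable fun ω => (U ω).removeNth (Zt ω) := by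
    apply measurable_pi_lambda
    intro i
    have heq : (fun ω => (U ω).removeNth (Zt ω) i)
        = (fun p : (Fin (n+1) → 𝒳 × 𝒴) × Fin (n+1) => p.1 (p.2.succAbove i))
          ∘ fun ω => (Zt ω, U ω) := rfl
    rw [heq]
    refine (measurable_from_prod_countable_left fun u => ?_).comp (hZt.prodMk hU)
    exact measurable_pi_apply (u.succAbove i)
  have hWmeas : Measurable W := by
    have heq : W = fun ω => Function.uncurry A ((U ω).removeNth (Zt ω), ξ ω) := funext hW
    rw [heq]; exact hA.comp (hT.prodMk hξ)
  have hLmeas : Measurable L := by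
    have heq : L = fun ω => fun i => Function.uncurry ℓ (W ω, Zt ω i) := by
      funext ω i; exact hL ω i
    rw [heq]
    exact measurable_pi_lambda _ fun i =>
      hℓmeas.comp (hWmeas.prodMk ((measurable_pi_apply i).comp hZt))
  -- the per-index integrand
  set g : Fin (n+1) → (Fin (n+1) → ℝ) → ℝ := fun u l =>
    Real.exp (Real.log ((n:ℝ) + 1) * (l u - α * ∑ i ∈ Finset.univ.erase u, l i)) with hg
  have hgmeas : ∀ u, Measurable (g u) := by
    intro u
    apply Measurable.exp
    exact ((measurable_pi_apply u).sub
      ((Finset.measurable_sum _ fun i _ => measurable_pi_apply i).const_mul α)).const_mul _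
  have hL01 : ∀ ω i, L ω i ∈ Set.Icc (0:ℝ) 1 := fun ω i => by rw [hL]; exact hℓ01 _ _
  have hgbound : ∀ u ω, ‖g u (L ω)‖ ≤ (n:ℝ) + 1 := by
    intro u ω
    rw [Real.norm_eq_abs, abs_of_pos (Real.exp_pos _)]
    have harg : L ω u - α * ∑ i ∈ Finset.univ.erase u, L ω i ≤ 1 := by
      have h1 : L ω u ≤ 1 := (hL01 ω u).2
      have h2 : 0 ≤ ∑ i ∈ Finset.univ.erase u, L ω i :=
        Finset.sum_nonneg fun i _ => (hL01 ω i).1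
      nlinarith
    calc Real.exp (Real.log ((n:ℝ) + 1) * (L ω u - α * ∑ i ∈ Finset.univ.erase u, L ω i))
        ≤ Real.exp (Real.log ((n:ℝ) + 1) * 1) :=
          Real.exp_le_exp.mpr (mul_le_mul_of_nonneg_left harg hlam0)
      _ = (n:ℝ) + 1 := by rw [mul_one, Real.exp_log hnp]
  have hint : ∀ u, Integrable (fun ω => g u (L ω)) μ := fun u =>
    (integrable_const ((n:ℝ)+1)).mono' ((hgmeas u).comp hLmeas).aestronglyMeasurable
      (Filter.Eventually.of_forall fun ω => hgbound u ω)
  -- a.s. the loss vector vanishes off the held-out index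
  have hzero : ∀ᵐ ω ∂μ, ∀ j, j ≠ U ω → L ω j = 0 := by
    filter_upwards [hinterp] with ω hω
    intro j hj
    rcases Nat.eq_zero_or_pos n with hn | hn
    · subst hn
      have h1 := j.isLt
      have h2 := (U ω).isLt
      exact absurd (Fin.ext (by omega)) hj
    · have hni : ((n:ℝ))⁻¹ ≠ 0 := inv_ne_zero (by exact_mod_cast hn.ne')
      have hsum : ∑ i : Fin n, ℓ (W ω) ((U ω).removeNth (Zt ω) i) = 0 :=
        (mul_eq_zero.mp hω).resolve_left hni
      obtain ⟨i, hi⟩ := Fin.exists_succAbove_eq hj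
      have hterm : ℓ (W ω) ((U ω).removeNth (Zt ω) i) = 0 :=
        (Finset.sum_eq_zero_iff_of_nonneg fun i _ => (hℓ01 (W ω) _).1).mp hsum i
          (Finset.mem_univ i)
      rw [hL, ← hi]
      exact hterm
  -- a.s. bound for the sum over the fresh index
  have hsumbound : ∀ᵐ ω ∂μ, ∑ u : Fin (n+1), g u (L ω)
      ≤ ((n:ℝ)+1) + (n:ℝ) * Real.exp (-α * Real.log ((n:ℝ)+1)) := by
    filter_upwards [hzero] with ω h0
    set u₀ := U ω with hu₀
    set c := L ω u₀ with hc
    have e1 : g u₀ (L ω) = Real.exp (Real.log ((n:ℝ)+1) * c) := by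
      rw [hg]
      simp only
      congr 1
      have : ∑ i ∈ Finset.univ.erase u₀, L ω i = 0 :=
        Finset.sum_eq_zero fun i hi => h0 i (Finset.ne_of_mem_erase hi)
      rw [this]; ring
    have e2 : ∀ u ∈ Finset.univ.erase u₀,
        g u (L ω) = Real.exp (Real.log ((n:ℝ)+1) * (-(α * c))) := by
      intro u hu
      have hu' : u ≠ u₀ := Finset.ne_of_mem_erase hu
      have hLu : L ω u = 0 := h0 u hu'
      have hsum : ∑ i ∈ Finset.univ.erase u, L ω i = c :=
        Finset.sum_eq_single_of_mem u₀
          (Finset.mem_erase.mpr ⟨hu'.symm, Finset.mem_univ _⟩) fun b _ hb => h0 b hb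
      rw [hg]
      simp only
      rw [hLu, hsum]
      congr 1
      ring
    rw [← Finset.add_sum_erase _ _ (Finset.mem_univ u₀), e1, Finset.sum_congr rfl e2,
      Finset.sum_const, Finset.card_erase_of_mem (Finset.mem_univ _), Finset.card_univ,
      Fintype.card_fin, Nat.add_sub_cancel, nsmul_eq_mul]
    exact key_sum_bound n hα (hL01 ω u₀).1 (hL01 ω u₀).2
  have hIntSum : ∫ ω, ∑ u : Fin (n+1), g u (L ω) ∂μ
      ≤ ((n:ℝ)+1) + (n:ℝ) * Real.exp (-α * Real.log ((n:ℝ)+1)) := by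
    calc ∫ ω, ∑ u : Fin (n+1), g u (L ω) ∂μ
        ≤ ∫ _ω, (((n:ℝ)+1) + (n:ℝ) * Real.exp (-α * Real.log ((n:ℝ)+1))) ∂μ :=
          integral_mono_ae (integrable_finset_sum _ fun u _ => hint u)
            (integrable_const _) hsumbound
      _ = ((n:ℝ)+1) + (n:ℝ) * Real.exp (-α * Real.log ((n:ℝ)+1)) := by simp
  -- independence of the fresh index from the loss vector
  have hUtL : IndepFun Ut L μ := by
    have h := hUtindep.comp measurable_id
      (measurable_snd : Measurable (Prod.snd : (Fin (n+1) → 𝒳 × 𝒴) × (Fin (n+1) → ℝ) → _))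
    exact h
  -- splitting per index
  have hIteMeas : ∀ u : Fin (n+1), Measurable (fun ω => if Ut ω = u then (1:ℝ) else 0) := by
    intro u
    exact (measurable_of_countable (fun v : Fin (n+1) => if v = u then (1:ℝ) else 0)).comp hUt
  have hIteInt : ∀ u : Fin (n+1), Integrable (fun ω => if Ut ω = u then (1:ℝ) else 0) μ := by
    intro u
    refine (integrable_const (1:ℝ)).mono' (hIteMeas u).aestronglyMeasurable
      (Filter.Eventually.of_forall fun ω => ?_)
    by_cases h : Ut ω = u <;> simp [h]
  have hsplit : ∀ u : Fin (n+1),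
      ∫ ω, (if Ut ω = u then (1:ℝ) else 0) * g u (L ω) ∂μ
        = ((n:ℝ)+1)⁻¹ * ∫ ω, g u (L ω) ∂μ := by
    intro u
    have hind : IndepFun (fun ω => if Ut ω = u then (1:ℝ) else 0) (fun ω => g u (L ω)) μ :=
      hUtL.comp (measurable_of_countable (fun v : Fin (n+1) => if v = u then (1:ℝ) else 0))
        (hgmeas u)
    have hmul := hind.integral_fun_mul_eq_mul_integral (hIteInt u).aestronglyMeasurable (hint u).aestronglyMeasurable
    have hmul' : ∫ ω, (if Ut ω = u then (1:ℝ) else 0) * g u (L ω) ∂μ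
        = (∫ ω, (if Ut ω = u then (1:ℝ) else 0) ∂μ) * ∫ ω, g u (L ω) ∂μ := hmul
    rw [hmul']
    congr 1
    have hset : MeasurableSet {ω | Ut ω = u} := hUt (measurableSet_singleton u)
    have hind_eq : (fun ω => if Ut ω = u then (1:ℝ) else 0)
        = Set.indicator {ω | Ut ω = u} (fun _ => (1:ℝ)) := by
      funext ω
      rw [Set.indicator_apply]
      rfl
    rw [hind_eq, integral_indicator_const _ hset, Measure.real, hUtunif u, smul_eq_mul, mul_one,
      ENNReal.toReal_inv, ENNReal.toReal_natCast]
    push_cast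
    ring
  -- rewrite the LHS as a sum over the fresh index and conclude
  have hpt : ∀ ω, Real.exp (Real.log ((n:ℝ) + 1)
        * (L ω (Ut ω) - α * ∑ i ∈ Finset.univ.erase (Ut ω), L ω i))
      = ∑ u : Fin (n+1), (if Ut ω = u then (1:ℝ) else 0) * g u (L ω) := by
    intro ω
    simp only [ite_mul, one_mul, zero_mul, Finset.sum_ite_eq, Finset.mem_univ, if_true]
    rfl
  have hibdd : ∀ u : Fin (n+1),
      Integrable (fun ω => (if Ut ω = u then (1:ℝ) else 0) * g u (L ω)) μ := by
    intro u
    refine (integrable_const ((n:ℝ)+1)).mono'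
      (((hIteMeas u).mul ((hgmeas u).comp hLmeas)).aestronglyMeasurable)
      (Filter.Eventually.of_forall fun ω => ?_)
    rw [norm_mul]
    by_cases h : Ut ω = u
    · rw [if_pos h]
      simpa using hgbound u ω
    · rw [if_neg h]
      simpa using add_nonneg (Nat.cast_nonneg (α := ℝ) n) zero_le_one
  calc ∫ ω, Real.exp (Real.log ((n:ℝ) + 1)
        * (L ω (Ut ω) - α * ∑ i ∈ Finset.univ.erase (Ut ω), L ω i)) ∂μ
      = ∫ ω, ∑ u : Fin (n+1), (if Ut ω = u then (1:ℝ) else 0) * g u (L ω) ∂μ :=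
        integral_congr_ae (Filter.Eventually.of_forall hpt)
    _ = ∑ u : Fin (n+1), ∫ ω, (if Ut ω = u then (1:ℝ) else 0) * g u (L ω) ∂μ :=
        integral_finset_sum _ fun u _ => hibdd u
    _ = ∑ u : Fin (n+1), ((n:ℝ)+1)⁻¹ * ∫ ω, g u (L ω) ∂μ :=
        Finset.sum_congr rfl fun u _ => hsplit u
    _ = ((n:ℝ)+1)⁻¹ * ∫ ω, ∑ u : Fin (n+1), g u (L ω) ∂μ := by
        rw [← Finset.mul_sum, integral_finset_sum _ fun u _ => hint u]
    _ ≤ ((n:ℝ)+1)⁻¹ * (((n:ℝ)+1) + (n:ℝ) * Real.exp (-α * Real.log ((n:ℝ)+1))) :=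
        mul_le_mul_of_nonneg_left hIntSum (by positivity)
    _ = 1 + ((n:ℝ) / ((n:ℝ) + 1)) * Real.exp (-α * Real.log ((n:ℝ)+1)) := by
        field_simp
end

section
/- Let n ∈ ℕ, let the loss ℓ take values in {0,1}, and let A_n be an interpolating learning algorithm. Then, almost surely, the disintegrated entropy of L given Z̃ satisfies H_{Z̃}(L) ≤ h_b(R̂_loo) + R̂_loo · log(n+1), where h_b is the binary entropy function and R̂_loo is the leave-one-out error estimate. -/
open MeasureTheory ProbabilityTheory Real
open scoped ENNReal NNReal Classical

lemma gibbs_aux {n : ℕ} (a : Fin (n+1) → ℝ) (ha : ∀ i, 0 ≤ a i) :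
    Real.negMulLog (1 - ∑ i, a i) + ∑ i, Real.negMulLog (a i)
      ≤ Real.binEntropy (∑ i, a i) + (∑ i, a i) * Real.log (n+1) := by
  rw [Real.binEntropy_eq_negMulLog_add_negMulLog_one_sub]
  have key : ∑ i, (Real.negMulLog (a i) - a i * Real.log ((n : ℝ)+1))
      ≤ Real.negMulLog (∑ i, a i) := by
    have hJ := Real.concaveOn_negMulLog.le_map_sum (t := (Finset.univ : Finset (Fin (n+1))))
      (w := fun _ => ((n : ℝ)+1)⁻¹) (p := fun i => ((n : ℝ)+1) * a i)
      (fun i _ => by positivity)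
      (by rw [Finset.sum_const, Finset.card_univ, Fintype.card_fin, nsmul_eq_mul]; push_cast; field_simp)
      (fun i _ => Set.mem_Ici.mpr (mul_nonneg (by positivity) (ha i)))
    have h1 : ∑ i, ((n : ℝ)+1)⁻¹ • (((n : ℝ)+1) * a i) = ∑ i, a i := by
      apply Finset.sum_congr rfl; intro i _; rw [smul_eq_mul, ← mul_assoc, inv_mul_cancel₀ (by positivity), one_mul]
    rw [h1] at hJ
    refine le_trans (le_of_eq ?_) hJ
    apply Finset.sum_congr rfl
    intro i _
    have hne : ((n : ℝ) + 1) ≠ 0 := by positivity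
    rw [Real.negMulLog_mul]
    simp only [smul_eq_mul, Real.negMulLog]
    field_simp
    ring
  rw [Finset.sum_sub_distrib, ← Finset.sum_mul] at key
  have : ((n : ℝ) + 1) = ((n : ℕ) + 1 : ℝ) := by norm_num
  linarith


lemma measEntropy_le_of_support {γ : Type*} [MeasurableSpace γ] [MeasurableSingletonClass γ]
    (ν : Measure γ) [IsProbabilityMeasure ν] {n : ℕ} (x0 : γ) (e : Fin (n+1) → γ)
    (he : Function.Injective e) (hx0 : ∀ i, e i ≠ x0)
    (hsupp : ν (insert x0 (Set.range e))ᶜ = 0) {p : ℝ} (hp : ν {x0}ᶜ = ENNReal.ofReal p)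
    (hp0 : 0 ≤ p) :
    measEntropy ν ≤ ENNReal.ofReal (Real.binEntropy p + p * Real.log (n+1)) := by
  classical
  set F : Finset γ := insert x0 (Finset.image e Finset.univ) with hF
  have hFcoe : (F : Set γ) = insert x0 (Set.range e) := by
    simp [hF, Finset.coe_insert, Finset.coe_image]
  have hzero : ∀ x ∉ F, ν {x} = 0 := by
    intro x hx
    refine measure_mono_null ?_ hsupp
    intro y hy
    simp only [Set.mem_singleton_iff] at hy
    subst hy
    rw [← hFcoe]
    simpa using hx
  -- singletons sum to measure of F
  have hsum_eq : ∑ x ∈ F, ν {x} = ν (F : Set γ) := by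
    rw [show (F : Set γ) = ⋃ x ∈ F, {x} from (Set.biUnion_of_singleton (F : Set γ)).symm]
    rw [measure_biUnion_finset ?_ (fun _ _ => measurableSet_singleton _)]
    intro x _ y _ hxy
    rw [Function.onFun, Set.disjoint_singleton]
    exact hxy
  have hFfull : ν (F : Set γ) = 1 := by
    have h1 : ν (F : Set γ) + ν ((F : Set γ)ᶜ) = 1 := by
      rw [measure_add_measure_compl (F.finite_toSet.measurableSet)]
      exact measure_univ
    rw [hFcoe] at h1 ⊢
    rw [hsupp, add_zero] at h1
    exact h1
  have hcond : (∑' x, ν {x}) = ν Set.univ := by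
    rw [tsum_eq_sum hzero, hsum_eq, hFfull, measure_univ]
  rw [measEntropy, if_pos hcond]
  -- entropy sum reduces to F
  have hzero' : ∀ x ∉ F, ENNReal.ofReal (Real.negMulLog ((ν {x}).toReal)) = 0 := by
    intro x hx; rw [hzero x hx]; simp
  rw [tsum_eq_sum hzero']
  have hx0notmem : x0 ∉ Finset.image e Finset.univ := by
    simp only [Finset.mem_image, Finset.mem_univ, true_and, not_exists]
    intro i h; exact hx0 i h
  rw [hF, Finset.sum_insert hx0notmem, Finset.sum_image (fun i _ j _ h => he h)]
  -- identify masses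
  set a : Fin (n+1) → ℝ := fun i => (ν {e i}).toReal with ha
  have hfin : ∀ i, ν {e i} ≠ ∞ := fun i => measure_ne_top _ _
  have hrange : ν (Set.range e) = ∑ i, ν {e i} := by
    rw [show Set.range e = ⋃ i, {e i} by simp [Set.range]]
    rw [measure_iUnion ?_ (fun _ => measurableSet_singleton _), tsum_fintype]
    intro i j hij
    rw [Function.onFun, Set.disjoint_singleton]
    exact fun h => hij (he h)
  have hcompl : ν {x0}ᶜ = ν (Set.range e) := by
    apply le_antisymm
    · have : ({x0}ᶜ : Set γ) ⊆ Set.range e ∪ (insert x0 (Set.range e))ᶜ := by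
        intro y hy
        by_cases h : y ∈ Set.range e
        · exact Or.inl h
        · exact Or.inr (by simp_all)
      calc ν {x0}ᶜ ≤ ν (Set.range e ∪ (insert x0 (Set.range e))ᶜ) := measure_mono this
        _ ≤ ν (Set.range e) + ν ((insert x0 (Set.range e))ᶜ) := measure_union_le _ _
        _ = ν (Set.range e) := by rw [hsupp, add_zero]
    · apply measure_mono
      intro y hy
      obtain ⟨i, rfl⟩ := hy
      simp [hx0 i]
  have hsum_a : ∑ i, a i = p := by
    have : ENNReal.ofReal p = ∑ i, ν {e i} := by rw [← hp, hcompl, hrange]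
    have h2 : (∑ i, ν {e i}).toReal = ∑ i, a i := by
      rw [ENNReal.toReal_sum (fun i _ => hfin i)]
    rw [← h2, ← this, ENNReal.toReal_ofReal hp0]
  have ha_nonneg : ∀ i, 0 ≤ a i := fun i => ENNReal.toReal_nonneg
  have hsum_le : ∑ i, a i ≤ 1 := by
    rw [hsum_a]
    by_contra h
    push_neg at h
    have : (1 : ℝ≥0∞) < ENNReal.ofReal p := by
      rw [show (1:ℝ≥0∞) = ENNReal.ofReal 1 by simp]
      exact ENNReal.ofReal_lt_ofReal_iff_of_nonneg (by norm_num) |>.mpr h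
    rw [← hp] at this
    exact absurd (prob_le_one (μ := ν) (s := {x0}ᶜ)) (not_le.mpr this)
  have hm0 : (ν {x0}).toReal = 1 - p := by
    have h1 : ν {x0} + ν {x0}ᶜ = 1 := by
      rw [measure_add_measure_compl (measurableSet_singleton _)]; exact measure_univ
    rw [hp] at h1
    have : ν {x0} = 1 - ENNReal.ofReal p := by
      rw [← h1]
      rw [ENNReal.add_sub_cancel_right (by simp)]
    rw [this, ENNReal.toReal_sub_of_le ?_ (by simp), ENNReal.toReal_ofReal hp0]
    · simp
    · rw [← hp]; exact prob_le_one
  -- nonnegativity of entropy terms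
  have hterm0 : 0 ≤ Real.negMulLog ((ν {x0}).toReal) := by
    apply Real.negMulLog_nonneg ENNReal.toReal_nonneg
    simpa using ENNReal.toReal_mono ENNReal.one_ne_top (prob_le_one (μ := ν) (s := {x0}))
  have hterma : ∀ i, 0 ≤ Real.negMulLog (a i) := by
    intro i
    apply Real.negMulLog_nonneg (ha_nonneg i)
    simpa [ha] using ENNReal.toReal_mono ENNReal.one_ne_top (prob_le_one (μ := ν) (s := {e i}))
  rw [show ∀ x : γ, (ν {x}).toReal = (ν {x}).toReal from fun _ => rfl]
  calc ENNReal.ofReal (Real.negMulLog ((ν {x0}).toReal))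
        + ∑ i, ENNReal.ofReal (Real.negMulLog ((ν {e i}).toReal))
      = ENNReal.ofReal (Real.negMulLog ((ν {x0}).toReal) + ∑ i, Real.negMulLog (a i)) := by
        rw [ENNReal.ofReal_add hterm0 (Finset.sum_nonneg (fun i _ => hterma i)),
          ENNReal.ofReal_sum_of_nonneg (fun i _ => hterma i)]
    _ ≤ ENNReal.ofReal (Real.binEntropy p + p * Real.log (n+1)) := by
        apply ENNReal.ofReal_le_ofReal
        have := gibbs_aux a ha_nonneg
        rw [hsum_a] at this
        rw [hm0]
        linarith

/-- For `{0,1}`-valued loss and an interpolating algorithm, almost surely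
`H_{Z̃}(L) ≤ h_b(R̂_loo) + R̂_loo · log (n+1)`. -/
theorem disintegrated_entropy_le_binEntropy_loo
    {Ω 𝒳 𝒴 ℋ R : Type*} [MeasurableSpace Ω] [MeasurableSpace 𝒳] [MeasurableSpace 𝒴]
    [MeasurableSpace ℋ] [MeasurableSpace R]
    (μ : Measure Ω) [IsProbabilityMeasure μ]
    (D : Measure (𝒳 × 𝒴)) [IsProbabilityMeasure D]
    (n : ℕ)
    -- the loss function
    (ℓ : ℋ → 𝒳 × 𝒴 → ℝ) (hℓmeas : Measurable (Function.uncurry ℓ))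
    -- the (possibly randomized) learning algorithm
    (A : (Fin n → 𝒳 × 𝒴) → R → ℋ) (hA : Measurable (Function.uncurry A))
    -- the supersample, the held-out index, and the internal randomness of the algorithm
    (Zt : Ω → Fin (n+1) → 𝒳 × 𝒴) (hZt : Measurable Zt)
    (U : Ω → Fin (n+1)) (hU : Measurable U)
    (ξ : Ω → R) (hξ : Measurable ξ)
    (hiid : μ.map Zt = Measure.pi fun _ : Fin (n+1) => D)
    (hUunif : ∀ i, μ {ω | U ω = i} = (↑(n+1) : ℝ≥0∞)⁻¹)
    (hUindep : IndepFun U Zt μ)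
    (hξindep : IndepFun ξ (fun ω => (Zt ω, U ω)) μ)
    -- the output classifier `W = A(S_n)` on the training sample `S_n = Z̃₋ᵤ`
    (W : Ω → ℋ) (hW : ∀ ω, W ω = A ((U ω).removeNth (Zt ω)) (ξ ω))
    -- the loss vector `L` on the supersample
    (L : Ω → Fin (n+1) → ℝ) (hL : ∀ ω i, L ω i = ℓ (W ω) (Zt ω i))
    (hℓbin : ∀ h z, ℓ h z = 0 ∨ ℓ h z = 1)
    -- `A` is interpolating: the empirical risk on the training sample vanishes a.s.
    (hinterp : ∀ᵐ ω ∂μ, (n : ℝ)⁻¹ * ∑ i : Fin n, ℓ (W ω) ((U ω).removeNth (Zt ω) i) = 0)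
    -- the leave-one-out error estimate `R̂_loo` (a `Z̃`-measurable random variable,
    -- averaging out the internal randomness of the algorithm)
    (Rloo : Ω → ℝ)
    (hRloo : ∀ ω, Rloo ω = ((n : ℝ) + 1)⁻¹
        * ∑ i : Fin (n+1), ∫ r, ℓ (A (i.removeNth (Zt ω)) r) (Zt ω i) ∂(μ.map ξ)) :
    ∀ᵐ ω ∂μ, measEntropy (condDistrib L Zt μ (Zt ω))
      ≤ ENNReal.ofReal (Real.binEntropy (Rloo ω) + Rloo ω * Real.log (n + 1)) := by
  classical
  -- measurability of building blocks
  have hℓnn : ∀ h z, 0 ≤ ℓ h z := fun h z => by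
    rcases hℓbin h z with hh | hh <;> rw [hh] <;> norm_num
  have hℓnorm : ∀ h z, ‖ℓ h z‖ ≤ 1 := fun h z => by
    rcases hℓbin h z with hh | hh <;> rw [hh] <;> norm_num
  have hEval : Measurable fun p : (Fin (n+1) → 𝒳 × 𝒴) × Fin (n+1) => p.1 p.2 :=
    measurable_from_prod_countable_left fun u => measurable_pi_apply u
  have hRem : Measurable fun p : (Fin (n+1) → 𝒳 × 𝒴) × Fin (n+1) => (p.2).removeNth p.1 :=
    measurable_pi_lambda _ fun k =>
      measurable_from_prod_countable_left fun u => measurable_pi_apply (u.succAbove k)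
  have hSmeas : Measurable fun ω => (U ω).removeNth (Zt ω) :=
    hRem.comp (hZt.prodMk hU)
  have hWmeas : Measurable W := by
    have : W = fun ω => Function.uncurry A ((U ω).removeNth (Zt ω), ξ ω) :=
      funext fun ω => hW ω
    rw [this]
    exact hA.comp (hSmeas.prodMk hξ)
  have hLfun : L = fun ω => fun i => ℓ (W ω) (Zt ω i) :=
    funext fun ω => funext fun i => hL ω i
  have hLmeas : Measurable L := by
    rw [hLfun]
    exact measurable_pi_lambda _ fun i =>
      hℓmeas.comp (hWmeas.prodMk ((measurable_pi_apply i).comp hZt))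
  haveI : IsProbabilityMeasure (μ.map Zt) := Measure.isProbabilityMeasure_map hZt.aemeasurable
  haveI : IsProbabilityMeasure (μ.map ξ) := Measure.isProbabilityMeasure_map hξ.aemeasurable
  haveI : IsProbabilityMeasure (μ.map (fun ω => (Zt ω, L ω))) :=
    Measure.isProbabilityMeasure_map (hZt.prodMk hLmeas).aemeasurable
  -- the joint law disintegration
  have hjoint : (μ.map Zt) ⊗ₘ condDistrib L Zt μ = μ.map (fun ω => (Zt ω, L ω)) := by
    rw [condDistrib_def, ← Measure.fst_map_prodMk (X := Zt) hLmeas]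
    exact Measure.disintegrate _ _
  -- interpolation: losses vanish off the test point
  have hE0 : ∀ᵐ ω ∂μ, ∀ j, j ≠ U ω → ℓ (W ω) (Zt ω j) = 0 := by
    filter_upwards [hinterp] with ω hω j hj
    rcases Nat.eq_zero_or_pos n with hn | hn
    · exact absurd (by subst hn; omega) hj
    · have hnne : ((n : ℝ))⁻¹ ≠ 0 := by
        have : (0:ℝ) < n := by exact_mod_cast hn
        positivity
      have hsum : ∑ i : Fin n, ℓ (W ω) ((U ω).removeNth (Zt ω) i) = 0 := by
        rcases mul_eq_zero.mp hω with h | h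
        · exact absurd h hnne
        · exact h
      obtain ⟨k, hk⟩ := Fin.exists_succAbove_eq hj
      have hterm := (Finset.sum_eq_zero_iff_of_nonneg (fun i _ => by
        rcases hℓbin (W ω) ((U ω).removeNth (Zt ω) i) with h | h <;> rw [h] <;> norm_num)).mp
        hsum k (Finset.mem_univ k)
      rw [← hk]
      exact hterm
  -- the support vectors
  set e : Fin (n+1) → (Fin (n+1) → ℝ) := fun i => Pi.single i 1 with he_def
  have he_inj : Function.Injective e := by
    intro i j h
    by_contra hij
    have := congrFun h i
    simp [he_def, Pi.single_apply, hij] at this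
  have he_ne : ∀ i, e i ≠ 0 := by
    intro i h
    have := congrFun h i
    simp [he_def, Pi.single_apply] at this
  set V : Set (Fin (n+1) → ℝ) := insert 0 (Set.range e) with hV_def
  have hVmeas : MeasurableSet V := ((Set.finite_range e).insert 0).measurableSet
  have hLV : ∀ᵐ ω ∂μ, L ω ∈ V := by
    filter_upwards [hE0] with ω hω
    rcases hℓbin (W ω) (Zt ω (U ω)) with h | h
    · left
      funext j
      by_cases hj : j = U ω
      · simp only [Pi.zero_apply]; rw [hL, hj]; exact h
      · simp only [Pi.zero_apply]; rw [hL]; exact hω j hj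
    · right
      refine ⟨U ω, ?_⟩
      funext j
      rw [hL ω j]
      by_cases hj : j = U ω
      · subst hj
        simp only [he_def, Pi.single_apply, if_pos rfl]
        exact h.symm
      · simp only [he_def, Pi.single_apply, if_neg hj]
        exact (hω j hj).symm
  -- the loo error as a function of the supersample
  set r : (Fin (n+1) → 𝒳 × 𝒴) → ℝ := fun z => ((n : ℝ) + 1)⁻¹
      * ∑ i : Fin (n+1), ∫ s, ℓ (A (i.removeNth z) s) (z i) ∂(μ.map ξ) with hr_def
  have hint : ∀ (i : Fin (n+1)) (z : Fin (n+1) → 𝒳 × 𝒴),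
      Integrable (fun s => ℓ (A (i.removeNth z) s) (z i)) (μ.map ξ) := by
    intro i z
    refine ⟨(hℓmeas.comp ((hA.comp ((measurable_const (a := i.removeNth z)).prodMk
      measurable_id)).prodMk measurable_const)).aestronglyMeasurable, ?_⟩
    apply HasFiniteIntegral.of_bounded (C := 1)
    exact Filter.Eventually.of_forall (fun s => hℓnorm _ _)
  have hint_nonneg : ∀ (i : Fin (n+1)) (z : Fin (n+1) → 𝒳 × 𝒴),
      0 ≤ ∫ s, ℓ (A (i.removeNth z) s) (z i) ∂(μ.map ξ) := by
    intro i z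
    exact integral_nonneg (fun s => hℓnn _ _)
  have hr_nonneg : ∀ z, 0 ≤ r z := by
    intro z
    apply mul_nonneg (by positivity)
    exact Finset.sum_nonneg fun i _ => hint_nonneg i z
  have hr_meas : Measurable r := by
    apply Measurable.const_mul
    apply Finset.measurable_sum
    intro i _
    have hfm : StronglyMeasurable fun q : (Fin (n+1) → 𝒳 × 𝒴) × R => ℓ (A (i.removeNth q.1) q.2) (q.1 i) := by
      apply Measurable.stronglyMeasurable
      exact hℓmeas.comp ((hA.comp ((hRem.comp (measurable_fst.prodMk
        measurable_const)).prodMk measurable_snd)).prodMk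
        ((measurable_pi_apply i).comp measurable_fst))
    exact hfm.integral_prod_right'.measurable
  -- the law of U
  have hνU : ∀ i, (μ.map U) {i} = ((n+1 : ℕ) : ℝ≥0∞)⁻¹ := by
    intro i
    rw [Measure.map_apply hU (measurableSet_singleton i)]
    exact hUunif i
  -- the joint law of (Zt, U, ξ) factorizes
  have hmap3 : μ.map (fun ω => ((Zt ω, U ω), ξ ω))
      = ((μ.map Zt).prod (μ.map U)).prod (μ.map ξ) := by
    have h1 := (indepFun_iff_map_prod_eq_prod_map_map (hZt.prodMk hU).aemeasurable
      hξ.aemeasurable).mp hξindep.symm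
    have h2 := (indepFun_iff_map_prod_eq_prod_map_map hZt.aemeasurable
      hU.aemeasurable).mp hUindep.symm
    rw [h1, h2]
  -- lintegral kernel of losses, jointly measurable
  have hΦmeas0 : Measurable fun q : ((Fin (n+1) → 𝒳 × 𝒴) × Fin (n+1)) × R =>
      ENNReal.ofReal (ℓ (A ((q.1.2).removeNth q.1.1) q.2) (q.1.1 q.1.2)) := by
    apply ENNReal.measurable_ofReal.comp
    exact hℓmeas.comp ((hA.comp ((hRem.comp measurable_fst).prodMk
      measurable_snd)).prodMk (hEval.comp measurable_fst))
  -- the set S of nonzero loss vectors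
  have hSset : MeasurableSet ({(0 : Fin (n+1) → ℝ)}ᶜ : Set (Fin (n+1) → ℝ)) :=
    (measurableSet_singleton 0).compl
  -- key identity of set integrals
  have key : ∀ B : Set (Fin (n+1) → 𝒳 × 𝒴), MeasurableSet B →
      ∫⁻ z in B, condDistrib L Zt μ z {(0 : Fin (n+1) → ℝ)}ᶜ ∂(μ.map Zt)
        = ∫⁻ z in B, ENNReal.ofReal (r z) ∂(μ.map Zt) := by
    intro B hB
    set Φ : ((Fin (n+1) → 𝒳 × 𝒴) × Fin (n+1)) × R → ℝ≥0∞ := fun q =>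
      B.indicator 1 q.1.1 * ENNReal.ofReal (ℓ (A ((q.1.2).removeNth q.1.1) q.2) (q.1.1 q.1.2))
      with hΦ_def
    have hΦmeas : Measurable Φ :=
      (((measurable_one.indicator hB).comp (measurable_fst.comp measurable_fst)).mul hΦmeas0)
    have hset : MeasurableSet {ω | Zt ω ∈ B ∧ L ω ∈ ({(0 : Fin (n+1) → ℝ)}ᶜ : Set _)} := by
      have : {ω | Zt ω ∈ B ∧ L ω ∈ ({(0 : Fin (n+1) → ℝ)}ᶜ : Set _)}
          = Zt ⁻¹' B ∩ L ⁻¹' ({(0 : Fin (n+1) → ℝ)}ᶜ) := rfl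
      rw [this]
      exact (hZt hB).inter (hLmeas hSset)
    have hLHS : ∫⁻ z in B, condDistrib L Zt μ z {(0 : Fin (n+1) → ℝ)}ᶜ ∂(μ.map Zt)
        = μ {ω | Zt ω ∈ B ∧ L ω ∈ ({(0 : Fin (n+1) → ℝ)}ᶜ : Set _)} := by
      rw [← Measure.compProd_apply_prod hB hSset, hjoint,
        Measure.map_apply (hZt.prodMk hLmeas) (hB.prod hSset)]
      rfl
    have hmid : μ {ω | Zt ω ∈ B ∧ L ω ∈ ({(0 : Fin (n+1) → ℝ)}ᶜ : Set _)}
        = ∫⁻ ω, Φ ((Zt ω, U ω), ξ ω) ∂μ := by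
      rw [← lintegral_indicator_one hset]
      apply lintegral_congr_ae
      filter_upwards [hE0] with ω hω
      have hWA : A ((U ω).removeNth (Zt ω)) (ξ ω) = W ω := (hW ω).symm
      rw [hΦ_def]
      simp only []
      rw [hWA]
      by_cases hzB : Zt ω ∈ B
      · rcases hℓbin (W ω) (Zt ω (U ω)) with h | h
        · have hL0 : L ω = 0 := by
            funext j
            by_cases hj : j = U ω
            · rw [hL, hj]; exact h
            · rw [hL]; exact hω j hj
          have : ω ∉ {ω | Zt ω ∈ B ∧ L ω ∈ ({(0 : Fin (n+1) → ℝ)}ᶜ : Set _)} := by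
            simp [hL0]
          rw [Set.indicator_of_notMem this, h]
          simp [Set.indicator_of_mem hzB]
        · have hLne : L ω ≠ 0 := by
            intro h0
            have := congrFun h0 (U ω)
            rw [hL] at this
            rw [h] at this
            norm_num at this
          have : ω ∈ {ω | Zt ω ∈ B ∧ L ω ∈ ({(0 : Fin (n+1) → ℝ)}ᶜ : Set _)} := ⟨hzB, hLne⟩
          rw [Set.indicator_of_mem this, h]
          simp [Set.indicator_of_mem hzB]
      · have : ω ∉ {ω | Zt ω ∈ B ∧ L ω ∈ ({(0 : Fin (n+1) → ℝ)}ᶜ : Set _)} := by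
          intro hmem; exact hzB hmem.1
        rw [Set.indicator_of_notMem this]
        simp [Set.indicator_of_notMem hzB]
    have hpush : ∫⁻ ω, Φ ((Zt ω, U ω), ξ ω) ∂μ
        = ∫⁻ q, Φ q ∂(((μ.map Zt).prod (μ.map U)).prod (μ.map ξ)) := by
      rw [← hmap3, lintegral_map hΦmeas ((hZt.prodMk hU).prodMk hξ)]
    have hiter : ∫⁻ q, Φ q ∂(((μ.map Zt).prod (μ.map U)).prod (μ.map ξ))
        = ∫⁻ z in B, ENNReal.ofReal (r z) ∂(μ.map Zt) := by
      rw [lintegral_prod _ hΦmeas.aemeasurable]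
      rw [lintegral_prod _ hΦmeas.lintegral_prod_right'.aemeasurable]
      rw [← lintegral_indicator hB]
      apply lintegral_congr
      intro z
      rw [lintegral_fintype]
      by_cases hzB : z ∈ B
      · have hin : ∀ i : Fin (n+1),
            ∫⁻ s, Φ ((z, i), s) ∂(μ.map ξ)
              = ENNReal.ofReal (∫ s, ℓ (A (i.removeNth z) s) (z i) ∂(μ.map ξ)) := by
          intro i
          rw [hΦ_def]
          simp only [Set.indicator_of_mem hzB, Pi.one_apply, one_mul]
          rw [← ofReal_integral_eq_lintegral_ofReal (hint i z)
            (Filter.Eventually.of_forall fun s => hℓnn _ _)]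
        rw [Set.indicator_of_mem hzB]
        calc ∑ i : Fin (n+1), (∫⁻ s, Φ ((z, i), s) ∂(μ.map ξ)) * (μ.map U) {i}
            = ∑ i : Fin (n+1), ENNReal.ofReal (∫ s, ℓ (A (i.removeNth z) s) (z i) ∂(μ.map ξ))
              * ((n+1 : ℕ) : ℝ≥0∞)⁻¹ := by
              apply Finset.sum_congr rfl
              intro i _
              rw [hin i, hνU i]
          _ = ENNReal.ofReal (r z) := by
              rw [← Finset.sum_mul, hr_def]
              rw [ENNReal.ofReal_mul (by positivity)]
              rw [ENNReal.ofReal_sum_of_nonneg (fun i _ => hint_nonneg i z)]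
              rw [mul_comm]
              congr 1
              rw [show ((n : ℝ) + 1) = ((n+1 : ℕ) : ℝ) by push_cast; ring]
              rw [← ENNReal.ofReal_natCast (n+1)]
              rw [← ENNReal.ofReal_inv_of_pos (by positivity)]
      · rw [Set.indicator_of_notMem hzB]
        apply Finset.sum_eq_zero
        intro i _
        rw [hΦ_def]
        simp [Set.indicator_of_notMem hzB]
    rw [hLHS, hmid, hpush, hiter]
  -- a.e. identification of the mass of nonzero loss vectors
  have hae1 : (fun z => condDistrib L Zt μ z {(0 : Fin (n+1) → ℝ)}ᶜ)
      =ᵐ[μ.map Zt] fun z => ENNReal.ofReal (r z) := by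
    refine ae_eq_of_forall_setLIntegral_eq_of_sigmaFinite
      (Kernel.measurable_coe _ hSset) (ENNReal.measurable_ofReal.comp hr_meas) ?_
    intro s hs _
    exact key s hs
  -- a.e. support property
  have hae2 : ∀ᵐ z ∂(μ.map Zt), condDistrib L Zt μ z Vᶜ = 0 := by
    have hzero : ∫⁻ z, condDistrib L Zt μ z Vᶜ ∂(μ.map Zt) = 0 := by
      have h1 : ∫⁻ z, condDistrib L Zt μ z Vᶜ ∂(μ.map Zt)
          = ((μ.map Zt) ⊗ₘ condDistrib L Zt μ) (Set.univ ×ˢ Vᶜ) := by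
        rw [Measure.compProd_apply_prod MeasurableSet.univ hVmeas.compl,
          Measure.restrict_univ]
      rw [h1, hjoint, Measure.map_apply (hZt.prodMk hLmeas)
        (MeasurableSet.univ.prod hVmeas.compl)]
      have : (fun ω => (Zt ω, L ω)) ⁻¹' (Set.univ ×ˢ Vᶜ) = {ω | L ω ∉ V} := by
        ext ω; simp
      rw [this]
      exact (ae_iff.mp hLV)
    have := (lintegral_eq_zero_iff (Kernel.measurable_coe _ hVmeas.compl)).mp hzero
    filter_upwards [this] with z hz
    exact hz
  -- transfer along Zt
  have hae1' : (fun ω => condDistrib L Zt μ (Zt ω) {(0 : Fin (n+1) → ℝ)}ᶜ)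
      =ᵐ[μ] fun ω => ENNReal.ofReal (r (Zt ω)) :=
    hae1.comp_tendsto (Measure.tendsto_ae_map hZt.aemeasurable)
  have hae2' : ∀ᵐ ω ∂μ, condDistrib L Zt μ (Zt ω) Vᶜ = 0 :=
    (Measure.tendsto_ae_map hZt.aemeasurable).eventually hae2
  -- conclude
  filter_upwards [hae1', hae2'] with ω h1 h2
  have hRr : Rloo ω = r (Zt ω) := hRloo ω
  refine measEntropy_le_of_support (condDistrib L Zt μ (Zt ω)) 0 e he_inj
    (fun i => he_ne i) ?_ ?_ ?_
  · exact h2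
  · rw [h1, hRr]
  · rw [hRr]; exact hr_nonneg _
end

section
/- Let n ∈ ℕ, let the loss ℓ take values in {0,1}, and let A_n be an interpolating learning algorithm such that, almost surely, R̂_loo ≤ θ/(n+1) for some Z̃-measurable nonnegative random variable θ. Then, almost surely, the disintegrated mutual information I_{Z̃}(L; U) is at most 1 + θ log(n+1)/(n+1) if θ/(n+1) ≥ 1/2, and at most 2θ log(n+1)/(n+1) + (θ + e^{−1})/(n+1) otherwise. -/
open MeasureTheory ProbabilityTheory Real
open scoped ENNReal NNReal Classical

lemma measure_finset_eq_sum {γ : Type*} [MeasurableSpace γ] [MeasurableSingletonClass γ]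
    (μ : Measure γ) (s : Finset γ) : μ ↑s = ∑ x ∈ s, μ {x} := by
  have : (↑s : Set γ) = ⋃ x ∈ s, {x} := by ext y; simp
  rw [this, measure_biUnion_finset ?_ (fun b _ => measurableSet_singleton b)]
  intro x _ y _ hxy
  simp [Function.onFun, Set.disjoint_singleton, hxy]

lemma klDiv'_of_finite_support {γ : Type*} [MeasurableSpace γ] [MeasurableSingletonClass γ]
    (μ ν : Measure γ) [IsFiniteMeasure μ] [IsFiniteMeasure ν] (T : Finset γ)
    (hμT : μ ((↑T : Set γ)ᶜ) = 0)
    (hac : ∀ x ∈ T, μ {x} ≠ 0 → ν {x} ≠ 0) :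
    klDiv' μ ν = ENNReal.ofReal
      (∑ x ∈ T, (μ {x}).toReal * Real.log ((μ {x}).toReal / (ν {x}).toReal)) := by
  classical
  set f : γ → ℝ≥0∞ := fun y => ∑ x ∈ T, Set.indicator {x} (fun _ => μ {x} / ν {x}) y with hf_def
  have hfval : ∀ x ∈ T, f x = μ {x} / ν {x} := by
    intro x hx
    show ∑ b ∈ T, Set.indicator {b} (fun _ => μ {b} / ν {b}) x = _
    rw [Finset.sum_eq_single x]
    · simp
    · intro b _ hbx; simp [Set.indicator_of_notMem, Ne.symm hbx]
    · intro h; exact absurd hx h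
  have hfmeas : Measurable f := by
    apply Finset.measurable_sum
    intro x _
    exact measurable_const.indicator (measurableSet_singleton x)
  have h1 : ν.withDensity f = μ := by
    ext A hA
    rw [withDensity_apply _ hA]
    rw [hf_def]
    simp_rw [lintegral_finset_sum _ (fun x _ => measurable_const.indicator (measurableSet_singleton x))]
    have hterm : ∀ x ∈ T, ∫⁻ y in A, Set.indicator {x} (fun _ => μ {x} / ν {x}) y ∂ν
        = if x ∈ A then μ {x} else 0 := by
      intro x hx
      rw [lintegral_indicator_const (measurableSet_singleton x)]
      rw [Measure.restrict_apply (measurableSet_singleton x)]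
      by_cases hxA : x ∈ A
      · have : ({x} : Set γ) ∩ A = {x} := by
          simp [Set.singleton_inter_eq_empty, hxA, Set.inter_eq_left.2 (Set.singleton_subset_iff.2 hxA)]
        rw [this, if_pos hxA]
        by_cases h0 : μ {x} = 0
        · simp [h0]
        · exact ENNReal.div_mul_cancel (hac x hx h0) (measure_ne_top ν _)
      · have : ({x} : Set γ) ∩ A = ∅ := by
          simp [Set.singleton_inter_eq_empty, hxA]
        rw [this, if_neg hxA]
        simp
    rw [Finset.sum_congr rfl hterm]
    have hμA : μ A = μ (A ∩ ↑T) := by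
      have : μ (A \ ↑T) = 0 := measure_mono_null (Set.diff_subset_compl A ↑T) hμT
      rw [← measure_diff_null (μ := μ) (s := A) this]
      congr 1
      ext y
      simp only [Set.mem_diff, Set.mem_inter_iff, not_and, not_not]
      tauto
    rw [hμA]
    have hAT : (A ∩ ↑T : Set γ) = ↑(T.filter (· ∈ A)) := by
      ext y; simp [Set.mem_inter_iff, and_comm]
    rw [hAT, measure_finset_eq_sum]
    rw [Finset.sum_filter]
  have h2 : μ ≪ ν := h1 ▸ withDensity_absolutelyContinuous ν f
  have h3 : μ.rnDeriv ν =ᵐ[ν] f := h1 ▸ Measure.rnDeriv_withDensity ν hfmeas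
  have h4 : μ.rnDeriv ν =ᵐ[μ] f := h2.ae_le h3
  set G : γ → ℝ := fun y =>
    ∑ x ∈ T, Set.indicator {x} (fun _ => Real.log ((μ {x}).toReal / (ν {x}).toReal)) y with hG_def
  have hGval : ∀ x ∈ T, G x = Real.log ((μ {x}).toReal / (ν {x}).toReal) := by
    intro x hx
    show ∑ b ∈ T, Set.indicator {b} (fun _ => Real.log ((μ {b}).toReal / (ν {b}).toReal)) x = _
    rw [Finset.sum_eq_single x]
    · simp
    · intro b _ hbx; simp [Set.indicator_of_notMem, Ne.symm hbx]
    · intro h; exact absurd hx h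
  have hTae : ∀ᵐ y ∂μ, y ∈ (↑T : Set γ) := by
    rw [ae_iff]
    exact hμT
  have h5 : (fun x => Real.log ((μ.rnDeriv ν x).toReal)) =ᵐ[μ] G := by
    filter_upwards [h4, hTae] with x hx hxT
    rw [hx, hfval x hxT, hGval x hxT, ENNReal.toReal_div]
  have h6 : Integrable G μ := by
    apply integrable_finset_sum
    intro x _
    exact (integrable_const _).indicator (measurableSet_singleton x)
  have h7 : Integrable (fun x => Real.log ((μ.rnDeriv ν x).toReal)) μ := h6.congr h5.symm
  rw [klDiv', if_pos ⟨h2, h7⟩, integral_congr_ae h5]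
  congr 1
  rw [hG_def, integral_finset_sum]
  · refine Finset.sum_congr rfl (fun x _ => ?_)
    rw [integral_indicator_const _ (measurableSet_singleton x)]
    simp [mul_comm, Measure.real]
  · intro x _
    exact (integrable_const _).indicator (measurableSet_singleton x)


lemma negMulLog_le_inv_exp {y : ℝ} (hy : 0 ≤ y) : Real.negMulLog y ≤ Real.exp (-1) := by
  rcases eq_or_lt_of_le hy with h | h
  · simp [← h, Real.exp_nonneg]
  · have h1 : Real.log (Real.exp (-1) / y) ≤ Real.exp (-1) / y - 1 :=
      Real.log_le_sub_one_of_pos (div_pos (Real.exp_pos _) h)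
    rw [Real.log_div (Real.exp_ne_zero _) (ne_of_gt h), Real.log_exp] at h1
    have h2 : y * (-1 - Real.log y) ≤ Real.exp (-1) - y := by
      calc y * (-1 - Real.log y) ≤ y * (Real.exp (-1)/y - 1) :=
            mul_le_mul_of_nonneg_left h1 h.le
        _ = Real.exp (-1) - y := by field_simp
    rw [Real.negMulLog]
    nlinarith

lemma negMulLog_one_sub_le {P : ℝ} (h0 : 0 ≤ P) (h1 : P ≤ 1) :
    Real.negMulLog (1 - P) ≤ P := by
  rcases eq_or_lt_of_le h1 with h | h
  · rw [h]; simp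
  · have hy : 0 < 1 - P := by linarith
    have h2 : Real.log (1 / (1-P)) ≤ 1 / (1-P) - 1 :=
      Real.log_le_sub_one_of_pos (by positivity)
    rw [Real.log_div one_ne_zero (ne_of_gt hy), Real.log_one, zero_sub] at h2
    have h3 : (1-P) * (-Real.log (1-P)) ≤ (1-P) * (1/(1-P) - 1) :=
      mul_le_mul_of_nonneg_left h2 hy.le
    have h4 : (1-P) * (1/(1-P) - 1) = P := by field_simp; ring
    rw [Real.negMulLog]
    nlinarith

/-- The core numeric inequality. -/
lemma kl_sum_bound {n : ℕ} (ε : Fin (n+1) → ℝ) (hε0 : ∀ u, 0 ≤ ε u) (hε1 : ∀ u, ε u ≤ 1)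
    (θ : ℝ) (hθ : 0 ≤ θ) (hP : (∑ u, ε u / ((n:ℝ)+1)) ≤ θ / ((n:ℝ)+1)) :
    (∑ u, (ε u / ((n:ℝ)+1)) * Real.log ((ε u / ((n:ℝ)+1)) / ((ε u / ((n:ℝ)+1)) * ((n:ℝ)+1)⁻¹)))
    + (∑ u, ((1 - ε u) / ((n:ℝ)+1)) * Real.log (((1 - ε u) / ((n:ℝ)+1)) / ((∑ v, (1 - ε v) / ((n:ℝ)+1)) * ((n:ℝ)+1)⁻¹)))
    ≤ if (1:ℝ)/2 ≤ θ / ((n:ℝ)+1) then 1 + θ * Real.log ((n:ℝ)+1) / ((n:ℝ)+1)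
      else 2 * θ * Real.log ((n:ℝ)+1) / ((n:ℝ)+1) + (θ + Real.exp (-1)) / ((n:ℝ)+1) := by
  have ha : (0:ℝ) < (n:ℝ)+1 := by positivity
  set a : ℝ := (n:ℝ)+1 with ha_def
  have hlog : 0 ≤ Real.log a := Real.log_nonneg (by rw [ha_def]; push_cast; linarith)
  set P : ℝ := ∑ u, ε u / a with hP_def
  set Q : ℝ := ∑ u, (1 - ε u) / a with hQ_def
  have hPQ : P + Q = 1 := by
    rw [hP_def, hQ_def, ← Finset.sum_add_distrib]
    have h' : ∀ u ∈ Finset.univ, ε u / a + (1 - ε u) / a = 1/a := by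
      intro u _; field_simp; ring
    rw [Finset.sum_congr rfl h', Finset.sum_const, Finset.card_univ, Fintype.card_fin,
      nsmul_eq_mul, ha_def]
    push_cast
    field_simp
  have hP0 : 0 ≤ P := Finset.sum_nonneg (fun u _ => div_nonneg (hε0 u) ha.le)
  have hQ0 : 0 ≤ Q := Finset.sum_nonneg (fun u _ => div_nonneg (by linarith [hε1 u]) ha.le)
  have hP1 : P ≤ 1 := by linarith
  have hT1 : (∑ u, (ε u / a) * Real.log ((ε u / a) / ((ε u / a) * a⁻¹)))
      ≤ P * Real.log a := by
    rw [hP_def, Finset.sum_mul]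
    apply Finset.sum_le_sum
    intro u _
    by_cases h0 : ε u = 0
    · simp [h0]
    · have hm : 0 < ε u / a := div_pos (lt_of_le_of_ne (hε0 u) (Ne.symm h0)) ha
      have hr : (ε u / a) / ((ε u / a) * a⁻¹) = a := by
        rw [mul_comm, ← div_div]
        rw [div_div_cancel_left']
        · exact inv_inv a
        · exact ne_of_gt hm
      rw [hr]
  have hT2 : (∑ u, ((1 - ε u) / a) * Real.log (((1 - ε u) / a) / (Q * a⁻¹)))
      ≤ Real.negMulLog Q := by
    have hnm : Real.negMulLog Q = ∑ u, ((1 - ε u) / a) * (- Real.log Q) := by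
      rw [← Finset.sum_mul, ← hQ_def, Real.negMulLog]
      ring
    rw [hnm]
    apply Finset.sum_le_sum
    intro u _
    have hq0 : (0:ℝ) ≤ (1 - ε u) / a := div_nonneg (by linarith [hε1 u]) ha.le
    rcases eq_or_lt_of_le hq0 with h | h
    · rw [← h]; simp
    · have hQpos : 0 < Q := by
        have hsl : (1 - ε u) / a ≤ Q := by
          rw [hQ_def]
          exact Finset.single_le_sum (f := fun v => (1 - ε v) / a)
            (fun v _ => div_nonneg (by linarith [hε1 v]) ha.le) (Finset.mem_univ u)
        linarith
      have h1u : 0 < 1 - ε u := by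
        have h' := mul_pos h ha
        rwa [div_mul_cancel₀ _ (ne_of_gt ha)] at h'
      apply mul_le_mul_of_nonneg_left _ hq0
      have hrw : (1 - ε u) / a / (Q * a⁻¹) = (1 - ε u) / Q := by
        field_simp
      rw [hrw, Real.log_div (ne_of_gt h1u) (ne_of_gt hQpos)]
      have hle : Real.log (1 - ε u) ≤ 0 := Real.log_nonpos (by linarith) (by linarith [hε0 u])
      linarith
  have key : (∑ u, (ε u / a) * Real.log ((ε u / a) / ((ε u / a) * a⁻¹)))
      + (∑ u, ((1 - ε u) / a) * Real.log (((1 - ε u) / a) / (Q * a⁻¹)))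
      ≤ P * Real.log a + Real.negMulLog (1 - P) := by
    have hq : Q = 1 - P := by linarith
    rw [← hq]
    exact add_le_add hT1 hT2
  refine le_trans key ?_
  have b1 : P * Real.log a ≤ θ * Real.log a / a := by
    calc P * Real.log a ≤ (θ / a) * Real.log a := mul_le_mul_of_nonneg_right hP hlog
      _ = θ * Real.log a / a := by ring
  split_ifs with hc
  · have b2 : Real.negMulLog (1 - P) ≤ 1 := by
      refine le_trans (negMulLog_le_inv_exp (by linarith)) ?_
      rw [Real.exp_le_one_iff]
      norm_num
    linarith
  · have b2 : Real.negMulLog (1 - P) ≤ P := negMulLog_one_sub_le hP0 hP1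
    have b3 : θ * Real.log a / a ≤ 2 * θ * Real.log a / a := by
      gcongr
      nlinarith
    have b4 : P ≤ (θ + Real.exp (-1)) / a := by
      refine le_trans hP ?_
      gcongr
      linarith [Real.exp_pos (-1:ℝ)]
    linarith

/-- The per-point kl bound. -/
lemma kl_at_point {n : ℕ} {R : Type*} [MeasurableSpace R] (ρ : Measure R) [IsProbabilityMeasure ρ]
    (unif : Measure (Fin (n+1))) [IsProbabilityMeasure unif]
    (hunif : ∀ u, unif {u} = (((n+1 : ℕ)) : ℝ≥0∞)⁻¹)
    (f : Fin (n+1) → R → (Fin (n+1) → ℝ))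
    (hfmeas : ∀ u, Measurable (f u))
    (hbin : ∀ u r i, f u r i = 0 ∨ f u r i = 1)
    (hzero : ∀ u, ∀ᵐ r ∂ρ, ∀ j, j ≠ u → f u r j = 0)
    (θ : ℝ) (hθ : 0 ≤ θ)
    (hsum : (∑ u, ((ρ {r | f u r u = 1}).toReal) / ((n:ℝ)+1)) ≤ θ / ((n:ℝ)+1)) :
    klDiv' ((unif.prod ρ).map (fun p => (f p.1 p.2, p.1)))
      (((unif.prod ρ).map (fun p => f p.1 p.2)).prod unif)
      ≤ if (1:ℝ)/2 ≤ θ / ((n:ℝ)+1) then ENNReal.ofReal (1 + θ * Real.log ((n:ℝ)+1) / ((n:ℝ)+1))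
        else ENNReal.ofReal (2*θ*Real.log ((n:ℝ)+1)/((n:ℝ)+1) + (θ + Real.exp (-1))/((n:ℝ)+1)) := by
  classical
  set ev : Fin (n+1) → (Fin (n+1) → ℝ) := fun u i => if i = u then 1 else 0 with hev_def
  set zv : Fin (n+1) → ℝ := fun _ => 0 with hzv_def
  have hev_ne_zv : ∀ u, ev u ≠ zv := by
    intro u h
    have := congrFun h u
    simp [hev_def, hzv_def] at this
  have hev_inj : Function.Injective ev := by
    intro u v h
    by_contra huv
    have := congrFun h u
    simp [hev_def, huv] at this
  set S : Fin (n+1) → Set R := fun u => {r | f u r u = 1} with hS_def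
  have hSmeas : ∀ u, MeasurableSet (S u) :=
    fun u => ((measurable_pi_apply u).comp (hfmeas u)) (measurableSet_singleton 1)
  set ε : Fin (n+1) → ℝ := fun u => (ρ (S u)).toReal with hε_def
  have hε0 : ∀ u, 0 ≤ ε u := fun u => ENNReal.toReal_nonneg
  have hε1 : ∀ u, ε u ≤ 1 := by
    intro u
    rw [hε_def]
    simp only
    rw [← ENNReal.toReal_one]
    exact ENNReal.toReal_mono ENNReal.one_ne_top prob_le_one
  -- the a.e. dichotomy
  have hgood : ∀ u, ∀ᵐ r ∂ρ, (r ∈ S u → f u r = ev u) ∧ (r ∉ S u → f u r = zv) := by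
    intro u
    filter_upwards [hzero u] with r hr
    constructor
    · intro hrS
      funext j
      by_cases hj : j = u
      · rw [hj]; have h' : f u r u = 1 := hrS; simpa [hev_def] using h'
      · simp [hev_def, hj, hr j hj]
    · intro hrS
      funext j
      by_cases hj : j = u
      · rw [hj]
        rcases hbin u r u with h | h
        · simpa [hzv_def] using h
        · exact absurd h hrS
      · simp [hzv_def, hr j hj]
  -- measurability of the maps
  set G : Fin (n+1) × R → (Fin (n+1) → ℝ) × Fin (n+1) := fun p => (f p.1 p.2, p.1) with hG_def
  set Gll : Fin (n+1) × R → (Fin (n+1) → ℝ) := fun p => f p.1 p.2 with hGll_def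
  have hGllmeas : Measurable Gll := by
    have h1 : Measurable fun q : R × Fin (n+1) => f q.2 q.1 :=
      measurable_from_prod_countable_left (fun u => hfmeas u)
    exact h1.comp measurable_swap
  have hGmeas : Measurable G := hGllmeas.prodMk measurable_fst
  set ia : ℝ≥0∞ := (((n+1 : ℕ)) : ℝ≥0∞)⁻¹ with hia_def
  have hia0 : ia ≠ 0 := by simp [hia_def]
  have hiat : ia ≠ ⊤ := by simp [hia_def]
  set μJ : Measure ((Fin (n+1) → ℝ) × Fin (n+1)) := (unif.prod ρ).map G with hμJ_def
  set μL : Measure (Fin (n+1) → ℝ) := (unif.prod ρ).map Gll with hμL_def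
  set μP : Measure ((Fin (n+1) → ℝ) × Fin (n+1)) := μL.prod unif with hμP_def
  haveI : IsProbabilityMeasure μJ := Measure.isProbabilityMeasure_map hGmeas.aemeasurable
  haveI : IsProbabilityMeasure μL := Measure.isProbabilityMeasure_map hGllmeas.aemeasurable
  haveI : IsProbabilityMeasure μP := by rw [hμP_def]; infer_instance
  -- atom masses of the joint measure
  have hJev : ∀ u, μJ {(ev u, u)} = ia * ρ (S u) := by
    intro u
    rw [hμJ_def, Measure.map_apply hGmeas (measurableSet_singleton _)]
    have hset : G ⁻¹' {(ev u, u)} = {u} ×ˢ {r | f u r = ev u} := by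
      ext ⟨u₀, r⟩
      simp only [hG_def, Set.mem_preimage, Set.mem_singleton_iff, Prod.mk.injEq, Set.mem_prod,
        Set.mem_setOf_eq]
      constructor
      · rintro ⟨h1, rfl⟩; exact ⟨rfl, h1⟩
      · rintro ⟨rfl, h1⟩; exact ⟨h1, rfl⟩
    rw [hset, Measure.prod_prod, hunif u]
    congr 1
    apply measure_congr
    rw [Filter.eventuallyEq_set]
    filter_upwards [hgood u] with r hr
    constructor
    · intro h
      have h' : f u r = ev u := h
      show f u r u = 1
      rw [h']; simp [hev_def]
    · intro h; exact hr.1 h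
  have hJzv : ∀ u, μJ {(zv, u)} = ia * ρ ((S u)ᶜ) := by
    intro u
    rw [hμJ_def, Measure.map_apply hGmeas (measurableSet_singleton _)]
    have hset : G ⁻¹' {(zv, u)} = {u} ×ˢ {r | f u r = zv} := by
      ext ⟨u₀, r⟩
      simp only [hG_def, Set.mem_preimage, Set.mem_singleton_iff, Prod.mk.injEq, Set.mem_prod,
        Set.mem_setOf_eq]
      constructor
      · rintro ⟨h1, rfl⟩; exact ⟨rfl, h1⟩
      · rintro ⟨rfl, h1⟩; exact ⟨h1, rfl⟩
    rw [hset, Measure.prod_prod, hunif u]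
    congr 1
    apply measure_congr
    rw [Filter.eventuallyEq_set]
    filter_upwards [hgood u] with r hr
    constructor
    · intro h
      have h' : f u r = zv := h
      intro hS
      have hS' : f u r u = 1 := hS
      rw [h'] at hS'
      simp [hzv_def] at hS'
    · intro h; exact hr.2 h
  -- the support
  set T : Finset ((Fin (n+1) → ℝ) × Fin (n+1)) :=
    (Finset.univ.image fun u => (ev u, u)) ∪ (Finset.univ.image fun u => (zv, u)) with hT_def
  have hTc : MeasurableSet ((↑T : Set ((Fin (n+1) → ℝ) × Fin (n+1)))ᶜ) :=
    T.measurableSet.compl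
  have hJT : μJ ((↑T : Set ((Fin (n+1) → ℝ) × Fin (n+1)))ᶜ) = 0 := by
    rw [hμJ_def, Measure.map_apply hGmeas hTc, Measure.prod_apply (hGmeas hTc)]
    have hin : ∀ u₀, ρ (Prod.mk u₀ ⁻¹' (G ⁻¹' (↑T : Set ((Fin (n+1) → ℝ) × Fin (n+1)))ᶜ)) = 0 := by
      intro u₀
      refine measure_eq_zero_iff_ae_notMem.mpr ?_
      filter_upwards [hgood u₀] with r hr hmem
      have hmem' : G (u₀, r) ∉ (↑T : Set ((Fin (n+1) → ℝ) × Fin (n+1))) := hmem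
      apply hmem'
      by_cases hrS : r ∈ S u₀
      · have h' : G (u₀, r) = (ev u₀, u₀) := Prod.ext (hr.1 hrS) rfl
        rw [h', hT_def]
        simp only [Finset.coe_union, Set.mem_union, Finset.coe_image, Set.mem_image,
          Finset.mem_coe, Finset.mem_univ]
        exact Or.inl ⟨u₀, trivial, rfl⟩
      · have h' : G (u₀, r) = (zv, u₀) := Prod.ext (hr.2 hrS) rfl
        rw [h', hT_def]
        simp only [Finset.coe_union, Set.mem_union, Finset.coe_image, Set.mem_image,
          Finset.mem_coe, Finset.mem_univ]
        exact Or.inr ⟨u₀, trivial, rfl⟩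
    simp_rw [hin]
    exact lintegral_zero
  -- atoms of the marginal measure
  have hLev : ∀ u, μL {ev u} = ia * ρ (S u) := by
    intro u
    rw [hμL_def, Measure.map_apply hGllmeas (measurableSet_singleton _),
      Measure.prod_apply (hGllmeas (measurableSet_singleton _)), lintegral_fintype]
    rw [Finset.sum_eq_single u]
    · rw [hunif u, mul_comm]
      congr 1
      apply measure_congr
      rw [Filter.eventuallyEq_set]
      filter_upwards [hgood u] with r hr
      constructor
      · intro h
        have h' : f u r = ev u := h
        show f u r u = 1
        rw [h']; simp [hev_def]
      · intro h
        show f u r = ev u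
        exact hr.1 h
    · intro u₀ _ hne
      have hz : ρ (Prod.mk u₀ ⁻¹' (Gll ⁻¹' {ev u})) = 0 := by
        refine measure_eq_zero_iff_ae_notMem.mpr ?_
        filter_upwards [hgood u₀] with r hr hmem
        have h' : f u₀ r = ev u := hmem
        by_cases hrS : r ∈ S u₀
        · rw [hr.1 hrS] at h'
          exact hne (hev_inj h')
        · rw [hr.2 hrS] at h'
          exact hev_ne_zv u h'.symm
      rw [hz, zero_mul]
    · intro h; exact absurd (Finset.mem_univ u) h
  have hLzv : μL {zv} = ∑ u₀, ia * ρ ((S u₀)ᶜ) := by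
    rw [hμL_def, Measure.map_apply hGllmeas (measurableSet_singleton _),
      Measure.prod_apply (hGllmeas (measurableSet_singleton _)), lintegral_fintype]
    refine Finset.sum_congr rfl fun u₀ _ => ?_
    rw [hunif u₀, mul_comm]
    congr 1
    apply measure_congr
    rw [Filter.eventuallyEq_set]
    filter_upwards [hgood u₀] with r hr
    constructor
    · intro h
      have h' : f u₀ r = zv := h
      intro hS
      have hS' : f u₀ r u₀ = 1 := hS
      rw [h'] at hS'
      simp [hzv_def] at hS'
    · intro h
      show f u₀ r = zv
      exact hr.2 h
  -- atoms of the product measure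
  have hPatom : ∀ v u, μP {(v, u)} = μL {v} * ia := by
    intro v u
    rw [hμP_def, ← Set.singleton_prod_singleton, Measure.prod_prod, hunif u]
  -- absolute continuity on atoms
  have hac : ∀ x ∈ T, μJ {x} ≠ 0 → μP {x} ≠ 0 := by
    intro x hx
    rw [hT_def, Finset.mem_union] at hx
    rcases hx with hx | hx <;> rw [Finset.mem_image] at hx <;> obtain ⟨u, -, rfl⟩ := hx
    · rw [hJev u, hPatom, hLev u]
      intro h
      have hρ : ρ (S u) ≠ 0 := fun h0 => h (by rw [h0, mul_zero])
      exact mul_ne_zero (mul_ne_zero hia0 hρ) hia0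
    · rw [hJzv u, hPatom, hLzv]
      intro h
      have hρ : ρ ((S u)ᶜ) ≠ 0 := fun h0 => h (by rw [h0, mul_zero])
      refine mul_ne_zero (fun hs0 => ?_) hia0
      rw [Finset.sum_eq_zero_iff] at hs0
      rcases mul_eq_zero.mp (hs0 u (Finset.mem_univ u)) with h' | h'
      · exact hia0 h'
      · exact hρ h'
  -- real versions of the masses
  have hiaR : ia.toReal = ((n:ℝ)+1)⁻¹ := by
    rw [hia_def, ENNReal.toReal_inv]
    congr 1
    rw [ENNReal.toReal_natCast]
    push_cast
    ring
  have hcompl : ∀ u, (ρ ((S u)ᶜ)).toReal = 1 - ε u := by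
    intro u
    rw [prob_compl_eq_one_sub (hSmeas u),
      ENNReal.toReal_sub_of_le prob_le_one ENNReal.one_ne_top, ENNReal.toReal_one]
  have hterm1 : ∀ u, (μJ {(ev u, u)}).toReal
        * Real.log ((μJ {(ev u, u)}).toReal / (μP {(ev u, u)}).toReal)
      = (ε u / ((n:ℝ)+1)) * Real.log ((ε u / ((n:ℝ)+1)) / ((ε u / ((n:ℝ)+1)) * ((n:ℝ)+1)⁻¹)) := by
    intro u
    rw [hJev u, hPatom, hLev u, ENNReal.toReal_mul, ENNReal.toReal_mul, ENNReal.toReal_mul, hiaR]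
    have hεu : (ρ (S u)).toReal = ε u := rfl
    rw [hεu]
    simp only [inv_mul_eq_div]
  have hterm2 : ∀ u, (μJ {(zv, u)}).toReal
        * Real.log ((μJ {(zv, u)}).toReal / (μP {(zv, u)}).toReal)
      = ((1 - ε u) / ((n:ℝ)+1)) * Real.log (((1 - ε u) / ((n:ℝ)+1))
          / ((∑ v, (1 - ε v) / ((n:ℝ)+1)) * ((n:ℝ)+1)⁻¹)) := by
    intro u
    rw [hJzv u, hPatom, hLzv, ENNReal.toReal_mul, ENNReal.toReal_mul, hiaR, hcompl u]
    rw [ENNReal.toReal_sum (fun v _ => ENNReal.mul_ne_top hiat (measure_ne_top ρ _))]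
    have hss : ∀ v, (ia * ρ ((S v)ᶜ)).toReal = (1 - ε v) / ((n:ℝ)+1) := by
      intro v
      rw [ENNReal.toReal_mul, hiaR, hcompl v, inv_mul_eq_div]
    rw [Finset.sum_congr rfl (fun v _ => hss v)]
    simp only [inv_mul_eq_div]
  -- the main inequality
  have hdisj : Disjoint (Finset.univ.image fun u => ((ev u : Fin (n+1) → ℝ), u))
      (Finset.univ.image fun u => ((zv : Fin (n+1) → ℝ), u)) := by
    rw [Finset.disjoint_left]
    rintro x hx1 hx2
    rw [Finset.mem_image] at hx1 hx2
    obtain ⟨u, -, rfl⟩ := hx1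
    obtain ⟨u', -, h⟩ := hx2
    exact hev_ne_zv u (congrArg Prod.fst h).symm
  rw [klDiv'_of_finite_support μJ μP T hJT hac]
  have hsum_eq : (∑ x ∈ T, (μJ {x}).toReal * Real.log ((μJ {x}).toReal / (μP {x}).toReal))
      = (∑ u, (ε u / ((n:ℝ)+1)) * Real.log ((ε u / ((n:ℝ)+1)) / ((ε u / ((n:ℝ)+1)) * ((n:ℝ)+1)⁻¹)))
      + (∑ u, ((1 - ε u) / ((n:ℝ)+1)) * Real.log (((1 - ε u) / ((n:ℝ)+1))
          / ((∑ v, (1 - ε v) / ((n:ℝ)+1)) * ((n:ℝ)+1)⁻¹))) := by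
    rw [hT_def, Finset.sum_union hdisj,
      Finset.sum_image (fun a _ b _ h => congrArg Prod.snd h),
      Finset.sum_image (fun a _ b _ h => congrArg Prod.snd h)]
    exact congrArg₂ (· + ·) (Finset.sum_congr rfl fun u _ => hterm1 u)
      (Finset.sum_congr rfl fun u _ => hterm2 u)
  rw [hsum_eq]
  have hmain := kl_sum_bound ε hε0 hε1 θ hθ hsum
  split_ifs with hc
  · rw [if_pos hc] at hmain
    exact ENNReal.ofReal_le_ofReal hmain
  · rw [if_neg hc] at hmain
    exact ENNReal.ofReal_le_ofReal hmain

/-- If a.s. `R̂_loo ≤ θ/(n+1)` for a nonnegative `Z̃`-measurable `θ`, then a.s. the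
disintegrated mutual information `I_{Z̃}(L;U)` is at most `1 + θ log(n+1)/(n+1)` when
`θ/(n+1) ≥ 1/2`, and at most `2θ log(n+1)/(n+1) + (θ + e⁻¹)/(n+1)` otherwise. -/
theorem dMutInfo_le_of_loo_bound
    {Ω 𝒳 𝒴 ℋ R : Type*} [MeasurableSpace Ω] [MeasurableSpace 𝒳] [MeasurableSpace 𝒴]
    [MeasurableSpace ℋ] [MeasurableSpace R]
    (μ : Measure Ω) [IsProbabilityMeasure μ]
    (D : Measure (𝒳 × 𝒴)) [IsProbabilityMeasure D]
    (n : ℕ)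
    -- the loss function
    (ℓ : ℋ → 𝒳 × 𝒴 → ℝ) (hℓmeas : Measurable (Function.uncurry ℓ))
    -- the (possibly randomized) learning algorithm
    (A : (Fin n → 𝒳 × 𝒴) → R → ℋ) (hA : Measurable (Function.uncurry A))
    -- the supersample, the held-out index, and the internal randomness of the algorithm
    (Zt : Ω → Fin (n+1) → 𝒳 × 𝒴) (hZt : Measurable Zt)
    (U : Ω → Fin (n+1)) (hU : Measurable U)
    (ξ : Ω → R) (hξ : Measurable ξ)
    (hiid : μ.map Zt = Measure.pi fun _ : Fin (n+1) => D)
    (hUunif : ∀ i, μ {ω | U ω = i} = (↑(n+1) : ℝ≥0∞)⁻¹)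
    (hUindep : IndepFun U Zt μ)
    (hξindep : IndepFun ξ (fun ω => (Zt ω, U ω)) μ)
    -- the output classifier `W = A(S_n)` on the training sample `S_n = Z̃₋ᵤ`
    (W : Ω → ℋ) (hW : ∀ ω, W ω = A ((U ω).removeNth (Zt ω)) (ξ ω))
    -- the loss vector `L` on the supersample
    (L : Ω → Fin (n+1) → ℝ) (hL : ∀ ω i, L ω i = ℓ (W ω) (Zt ω i))
    (hℓbin : ∀ h z, ℓ h z = 0 ∨ ℓ h z = 1)
    -- `A` is interpolating: the empirical risk on the training sample vanishes a.s.
    (hinterp : ∀ᵐ ω ∂μ, (n : ℝ)⁻¹ * ∑ i : Fin n, ℓ (W ω) ((U ω).removeNth (Zt ω) i) = 0)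
    -- the leave-one-out error estimate `R̂_loo`
    (Rloo : Ω → ℝ)
    (hRloo : ∀ ω, Rloo ω = ((n : ℝ) + 1)⁻¹
        * ∑ i : Fin (n+1), ∫ r, ℓ (A (i.removeNth (Zt ω)) r) (Zt ω i) ∂(μ.map ξ))
    -- a nonnegative `Z̃`-measurable random variable `θ = g ∘ Z̃` bounding the LOO error
    (g : (Fin (n+1) → 𝒳 × 𝒴) → ℝ) (hg : Measurable g) (hg0 : ∀ z, 0 ≤ g z)
    (hbound : ∀ᵐ ω ∂μ, Rloo ω ≤ g (Zt ω) / (n + 1)) :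
    ∀ᵐ ω ∂μ, dMutInfo μ L U Zt (Zt ω)
      ≤ if (1 : ℝ) / 2 ≤ g (Zt ω) / (n + 1)
        then ENNReal.ofReal (1 + g (Zt ω) * Real.log (n + 1) / (n + 1))
        else ENNReal.ofReal (2 * g (Zt ω) * Real.log (n + 1) / (n + 1)
              + (g (Zt ω) + Real.exp (-1)) / (n + 1)) := by
  classical
  set ρ : Measure R := μ.map ξ with hρ_def
  set unif : Measure (Fin (n+1)) := μ.map U with hunif_def
  set μZ : Measure (Fin (n+1) → 𝒳 × 𝒴) := μ.map Zt with hμZ_def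
  haveI : IsProbabilityMeasure ρ := Measure.isProbabilityMeasure_map hξ.aemeasurable
  haveI : IsProbabilityMeasure unif := Measure.isProbabilityMeasure_map hU.aemeasurable
  haveI : IsProbabilityMeasure μZ := Measure.isProbabilityMeasure_map hZt.aemeasurable
  have hunif_atom : ∀ i, unif {i} = (((n+1 : ℕ)) : ℝ≥0∞)⁻¹ := by
    intro i
    rw [hunif_def, Measure.map_apply hU (measurableSet_singleton i)]
    exact hUunif i
  -- the loss vector function
  set lf : (Fin (n+1) → 𝒳 × 𝒴) → Fin (n+1) → R → (Fin (n+1) → ℝ) :=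
    fun z u r i => ℓ (A (u.removeNth z) r) (z i) with hlf_def
  have hrem : Measurable fun q : (Fin (n+1) → 𝒳 × 𝒴) × Fin (n+1) => (q.2).removeNth q.1 := by
    apply measurable_from_prod_countable_left
    intro u
    have h : (fun z : Fin (n+1) → 𝒳 × 𝒴 => u.removeNth z)
        = fun z => fun j => z (u.succAbove j) := rfl
    show Measurable fun z : Fin (n+1) → 𝒳 × 𝒴 => u.removeNth z
    rw [h]
    exact measurable_pi_lambda _ fun j => measurable_pi_apply _
  have hlf_meas : Measurable fun q : ((Fin (n+1) → 𝒳 × 𝒴) × Fin (n+1)) × R =>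
      lf q.1.1 q.1.2 q.2 := by
    apply measurable_pi_lambda
    intro i
    have hAm : Measurable fun q : ((Fin (n+1) → 𝒳 × 𝒴) × Fin (n+1)) × R =>
        A ((q.1.2).removeNth q.1.1) q.2 :=
      hA.comp ((hrem.comp measurable_fst).prodMk measurable_snd)
    exact hℓmeas.comp (hAm.prodMk ((measurable_pi_apply i).comp (measurable_fst.comp measurable_fst)))
  have hLfun : ∀ ω, L ω = lf (Zt ω) (U ω) (ξ ω) := by
    intro ω; funext i; rw [hL ω i, hW ω]
  have hL_meas : Measurable L := by
    have h : L = (fun q : ((Fin (n+1) → 𝒳 × 𝒴) × Fin (n+1)) × R => lf q.1.1 q.1.2 q.2)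
        ∘ (fun ω => ((Zt ω, U ω), ξ ω)) := funext hLfun
    rw [h]
    exact hlf_meas.comp ((hZt.prodMk hU).prodMk hξ)
  -- laws
  have hpairlaw : μ.map (fun ω => (Zt ω, U ω)) = μZ.prod unif :=
    (indepFun_iff_map_prod_eq_prod_map_map hZt.aemeasurable hU.aemeasurable).mp hUindep.symm
  have htriple : μ.map (fun ω => ((Zt ω, U ω), ξ ω)) = (μZ.prod unif).prod ρ := by
    rw [(indepFun_iff_map_prod_eq_prod_map_map (hZt.prodMk hU).aemeasurable
      hξ.aemeasurable).mp hξindep.symm, hpairlaw]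
  -- kernels
  set F : (Fin (n+1) → 𝒳 × 𝒴) → Fin (n+1) × R → (Fin (n+1) → ℝ) × Fin (n+1) :=
    fun z p => (lf z p.1 p.2, p.1) with hF_def
  set FL : (Fin (n+1) → 𝒳 × 𝒴) → Fin (n+1) × R → (Fin (n+1) → ℝ) :=
    fun z p => lf z p.1 p.2 with hFL_def
  have hFLj : Measurable fun q : (Fin (n+1) → 𝒳 × 𝒴) × (Fin (n+1) × R) => FL q.1 q.2 := by
    have h : (fun q : (Fin (n+1) → 𝒳 × 𝒴) × (Fin (n+1) × R) => FL q.1 q.2)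
        = (fun q : ((Fin (n+1) → 𝒳 × 𝒴) × Fin (n+1)) × R => lf q.1.1 q.1.2 q.2)
          ∘ (fun q => ((q.1, q.2.1), q.2.2)) := rfl
    rw [h]
    exact hlf_meas.comp ((measurable_fst.prodMk (measurable_fst.comp measurable_snd)).prodMk
      (measurable_snd.comp measurable_snd))
  have hFj : Measurable fun q : (Fin (n+1) → 𝒳 × 𝒴) × (Fin (n+1) × R) => F q.1 q.2 :=
    hFLj.prodMk (measurable_fst.comp measurable_snd)
  have hFm : ∀ z, Measurable (F z) := fun z => hFj.comp measurable_prodMk_left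
  have hFLm : ∀ z, Measurable (FL z) := fun z => hFLj.comp measurable_prodMk_left
  set κJ : Kernel (Fin (n+1) → 𝒳 × 𝒴) ((Fin (n+1) → ℝ) × Fin (n+1)) :=
    ⟨fun z => (unif.prod ρ).map (F z), by
      rw [Measure.measurable_measure]
      intro s hs
      simp_rw [Measure.map_apply (hFm _) hs]
      exact measurable_measure_prodMk_left (hFj hs)⟩ with hκJ_def
  set κL : Kernel (Fin (n+1) → 𝒳 × 𝒴) (Fin (n+1) → ℝ) :=
    ⟨fun z => (unif.prod ρ).map (FL z), by
      rw [Measure.measurable_measure]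
      intro s hs
      simp_rw [Measure.map_apply (hFLm _) hs]
      exact measurable_measure_prodMk_left (hFLj hs)⟩ with hκL_def
  have hκJ_app : ∀ z, κJ z = (unif.prod ρ).map (F z) := fun z => rfl
  have hκL_app : ∀ z, κL z = (unif.prod ρ).map (FL z) := fun z => rfl
  haveI : IsMarkovKernel κJ :=
    ⟨fun z => (hκJ_app z) ▸ Measure.isProbabilityMeasure_map (hFm z).aemeasurable⟩
  haveI : IsMarkovKernel κL :=
    ⟨fun z => (hκL_app z) ▸ Measure.isProbabilityMeasure_map (hFLm z).aemeasurable⟩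
  -- disintegration identities
  have hΨJ : Measurable (fun q : ((Fin (n+1) → 𝒳 × 𝒴) × Fin (n+1)) × R =>
      (q.1.1, (lf q.1.1 q.1.2 q.2, q.1.2))) :=
    (measurable_fst.comp measurable_fst).prodMk
      (hlf_meas.prodMk (measurable_snd.comp measurable_fst))
  have hΨL : Measurable (fun q : ((Fin (n+1) → 𝒳 × 𝒴) × Fin (n+1)) × R =>
      (q.1.1, lf q.1.1 q.1.2 q.2)) :=
    (measurable_fst.comp measurable_fst).prodMk hlf_meas
  have htrip_meas : Measurable (fun ω => ((Zt ω, U ω), ξ ω)) := (hZt.prodMk hU).prodMk hξ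
  have hJcomp : μ.map (fun ω => (Zt ω, (L ω, U ω))) = μZ.compProd κJ := by
    have hmapeq : (fun ω => (Zt ω, (L ω, U ω))) =
        (fun q : ((Fin (n+1) → 𝒳 × 𝒴) × Fin (n+1)) × R => (q.1.1, (lf q.1.1 q.1.2 q.2, q.1.2)))
          ∘ (fun ω => ((Zt ω, U ω), ξ ω)) := by
      funext ω
      show (Zt ω, (L ω, U ω)) = (Zt ω, (lf (Zt ω) (U ω) (ξ ω), U ω))
      rw [hLfun ω]
    rw [hmapeq, ← Measure.map_map hΨJ htrip_meas, htriple]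
    ext s hs
    rw [Measure.map_apply hΨJ hs, Measure.compProd_apply hs, Measure.prod_apply (hΨJ hs),
      MeasureTheory.lintegral_prod _ (measurable_measure_prodMk_left (hΨJ hs)).aemeasurable]
    refine lintegral_congr fun z => ?_
    rw [hκJ_app z, Measure.map_apply (hFm z) (measurable_prodMk_left hs),
      Measure.prod_apply ((hFm z) (measurable_prodMk_left hs))]
    exact lintegral_congr fun u => rfl
  have hLcomp : μ.map (fun ω => (Zt ω, L ω)) = μZ.compProd κL := by
    have hmapeq : (fun ω => (Zt ω, L ω)) =
        (fun q : ((Fin (n+1) → 𝒳 × 𝒴) × Fin (n+1)) × R => (q.1.1, lf q.1.1 q.1.2 q.2))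
          ∘ (fun ω => ((Zt ω, U ω), ξ ω)) := by
      funext ω
      show (Zt ω, L ω) = (Zt ω, lf (Zt ω) (U ω) (ξ ω))
      rw [hLfun ω]
    rw [hmapeq, ← Measure.map_map hΨL htrip_meas, htriple]
    ext s hs
    rw [Measure.map_apply hΨL hs, Measure.compProd_apply hs, Measure.prod_apply (hΨL hs),
      MeasureTheory.lintegral_prod _ (measurable_measure_prodMk_left (hΨL hs)).aemeasurable]
    refine lintegral_congr fun z => ?_
    rw [hκL_app z, Measure.map_apply (hFLm z) (measurable_prodMk_left hs),
      Measure.prod_apply ((hFLm z) (measurable_prodMk_left hs))]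
    exact lintegral_congr fun u => rfl
  have hUcomp : μ.map (fun ω => (Zt ω, U ω)) = μZ.compProd (Kernel.const _ unif) := by
    rw [hpairlaw, Measure.compProd_const]
  -- identify the conditional distributions
  haveI : IsFiniteMeasure (μ.map (fun ω => (Zt ω, (L ω, U ω)))) := by
    haveI : IsProbabilityMeasure (μ.map (fun ω => (Zt ω, (L ω, U ω)))) :=
      Measure.isProbabilityMeasure_map (hZt.prodMk (hL_meas.prodMk hU)).aemeasurable
    infer_instance
  haveI : IsFiniteMeasure (μ.map (fun ω => (Zt ω, L ω))) := by
    haveI : IsProbabilityMeasure (μ.map (fun ω => (Zt ω, L ω))) :=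
      Measure.isProbabilityMeasure_map (hZt.prodMk hL_meas).aemeasurable
    infer_instance
  haveI : IsFiniteMeasure (μ.map (fun ω => (Zt ω, U ω))) := by
    haveI : IsProbabilityMeasure (μ.map (fun ω => (Zt ω, U ω))) :=
      Measure.isProbabilityMeasure_map (hZt.prodMk hU).aemeasurable
    infer_instance
  have hfstJ : (μ.map (fun ω => (Zt ω, (L ω, U ω)))).fst = μZ :=
    Measure.fst_map_prodMk (hL_meas.prodMk hU)
  have hfstL : (μ.map (fun ω => (Zt ω, L ω))).fst = μZ :=
    Measure.fst_map_prodMk hL_meas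
  have hfstU : (μ.map (fun ω => (Zt ω, U ω))).fst = μZ :=
    Measure.fst_map_prodMk hU
  have hcdJ : ∀ᵐ z ∂μZ, condDistrib (fun ω => (L ω, U ω)) Zt μ z = κJ z := by
    have h := eq_condKernel_of_measure_eq_compProd κJ
      (ρ := μ.map (fun ω => (Zt ω, (L ω, U ω)))) (by rw [hfstJ]; exact hJcomp)
    rw [hfstJ] at h
    simp only [condDistrib_def]
    filter_upwards [h] with z hz using hz.symm
  have hcdL : ∀ᵐ z ∂μZ, condDistrib L Zt μ z = κL z := by
    have h := eq_condKernel_of_measure_eq_compProd κL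
      (ρ := μ.map (fun ω => (Zt ω, L ω))) (by rw [hfstL]; exact hLcomp)
    rw [hfstL] at h
    simp only [condDistrib_def]
    filter_upwards [h] with z hz using hz.symm
  have hcdU : ∀ᵐ z ∂μZ, condDistrib U Zt μ z = unif := by
    have h := eq_condKernel_of_measure_eq_compProd (Kernel.const _ unif)
      (ρ := μ.map (fun ω => (Zt ω, U ω))) (by rw [hfstU]; exact hUcomp)
    rw [hfstU] at h
    simp only [condDistrib_def]
    filter_upwards [h] with z hz using hz.symm
  -- interpolation: a.s. all non-held-out losses vanish
  have hE1 : ∀ᵐ ω ∂μ, ∀ j, j ≠ U ω → ℓ (W ω) (Zt ω j) = 0 := by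
    filter_upwards [hinterp] with ω hω j hj
    rcases Nat.eq_zero_or_pos n with hn | hn
    · exfalso
      apply hj
      have h1 := j.isLt
      have h2 := (U ω).isLt
      exact Fin.ext (by omega)
    · have hι : ((n : ℝ))⁻¹ ≠ 0 := by
        simp only [ne_eq, inv_eq_zero, Nat.cast_eq_zero]
        omega
      have hsum0 : ∑ i : Fin n, ℓ (W ω) ((U ω).removeNth (Zt ω) i) = 0 := by
        rcases mul_eq_zero.mp hω with h | h
        · exact absurd h hι
        · exact h
      obtain ⟨i, hi⟩ := Fin.exists_succAbove_eq hj
      have hterm := (Finset.sum_eq_zero_iff_of_nonneg (fun i _ => by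
        rcases hℓbin (W ω) ((U ω).removeNth (Zt ω) i) with h | h <;> simp [h])).mp
          hsum0 i (Finset.mem_univ i)
      have hrw : (U ω).removeNth (Zt ω) i = Zt ω j := by
        show Zt ω ((U ω).succAbove i) = Zt ω j
        rw [hi]
      rw [← hrw]
      exact hterm
  -- transfer to the product measure
  set Egood : Set (((Fin (n+1) → 𝒳 × 𝒴) × Fin (n+1)) × R) :=
    {q | ∀ j, j ≠ q.1.2 → lf q.1.1 q.1.2 q.2 j = 0} with hE_def
  have hEmeas : MeasurableSet Egood := by
    have h : Egood = ⋂ j, ({q : ((Fin (n+1) → 𝒳 × 𝒴) × Fin (n+1)) × R | q.1.2 = j}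
        ∪ {q | lf q.1.1 q.1.2 q.2 j = 0}) := by
      ext q
      simp only [hE_def, Set.mem_setOf_eq, Set.mem_iInter, Set.mem_union]
      constructor
      · intro hq j
        by_cases hj : q.1.2 = j
        · exact Or.inl hj
        · exact Or.inr (hq j (fun hc => hj hc.symm))
      · intro hq j hj
        rcases hq j with h' | h'
        · exact absurd h'.symm hj
        · exact h'
    rw [h]
    refine MeasurableSet.iInter fun j => MeasurableSet.union ?_ ?_
    · exact (measurable_snd.comp measurable_fst) (measurableSet_singleton j)
    · exact ((measurable_pi_apply j).comp hlf_meas) (measurableSet_singleton 0)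
  have hTae : ∀ᵐ q ∂((μZ.prod unif).prod ρ), q ∈ Egood := by
    rw [← htriple]
    refine (ae_map_iff htrip_meas.aemeasurable hEmeas).mpr ?_
    filter_upwards [hE1] with ω hω j hj
    show lf (Zt ω) (U ω) (ξ ω) j = 0
    have h : lf (Zt ω) (U ω) (ξ ω) j = ℓ (W ω) (Zt ω j) := by
      show ℓ (A ((U ω).removeNth (Zt ω)) (ξ ω)) (Zt ω j) = _
      rw [← hW ω]
    rw [h]
    exact hω j hj
  have hunif_all : ∀ (p : Fin (n+1) → Prop), (∀ᵐ u ∂unif, p u) → ∀ u, p u := by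
    intro p hp u
    by_contra hu
    rw [ae_iff] at hp
    have hsub : ({u} : Set (Fin (n+1))) ⊆ {x | ¬ p x} := by
      intro x hx
      rw [Set.mem_singleton_iff] at hx
      subst hx
      exact hu
    have hle := measure_mono_null hsub hp
    rw [hunif_atom u] at hle
    simp at hle
  have hgoodz : ∀ᵐ z ∂μZ, ∀ u, ∀ᵐ r ∂ρ, ∀ j, j ≠ u → lf z u r j = 0 := by
    have h1 := Measure.ae_ae_of_ae_prod hTae
    have h2 := Measure.ae_ae_of_ae_prod h1
    filter_upwards [h2] with z hz u
    have h3 := hunif_all _ hz u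
    filter_upwards [h3] with r hr
    exact hr
  -- transfer of the leave-one-out bound
  have hint_meas : ∀ i : Fin (n+1), Measurable fun q : (Fin (n+1) → 𝒳 × 𝒴) × R =>
      ℓ (A (i.removeNth q.1) q.2) (q.1 i) := by
    intro i
    have hrm : Measurable fun z : Fin (n+1) → 𝒳 × 𝒴 => i.removeNth z := by
      have h : (fun z : Fin (n+1) → 𝒳 × 𝒴 => i.removeNth z)
          = fun z => fun j => z (i.succAbove j) := rfl
      rw [h]
      exact measurable_pi_lambda _ fun j => measurable_pi_apply _
    exact hℓmeas.comp ((hA.comp ((hrm.comp measurable_fst).prodMk measurable_snd)).prodMk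
      ((measurable_pi_apply i).comp measurable_fst))
  set Fz : (Fin (n+1) → 𝒳 × 𝒴) → ℝ :=
    fun z => ((n:ℝ)+1)⁻¹ * ∑ i, ∫ r, ℓ (A (i.removeNth z) r) (z i) ∂ρ with hFz_def
  have hFz_meas : Measurable Fz := by
    refine Measurable.const_mul ?_ _
    refine Finset.measurable_sum _ fun i _ => ?_
    exact ((hint_meas i).stronglyMeasurable.integral_prod_right').measurable
  have hRlZ : ∀ᵐ z ∂μZ, Fz z ≤ g z / ((n:ℝ)+1) := by
    rw [hμZ_def]
    refine (ae_map_iff hZt.aemeasurable (measurableSet_le hFz_meas (hg.div_const _))).mpr ?_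
    filter_upwards [hbound] with ω hω
    show Fz (Zt ω) ≤ g (Zt ω) / ((n:ℝ)+1)
    calc Fz (Zt ω) = Rloo ω := (hRloo ω).symm
      _ ≤ g (Zt ω) / ((n:ℝ)+1) := hω
  have hSmeasz : ∀ (z : Fin (n+1) → 𝒳 × 𝒴) (u : Fin (n+1)),
      MeasurableSet {r : R | lf z u r u = 1} := by
    intro z u
    have hm : Measurable fun r => lf z u r u := by
      have h : (fun r => lf z u r u) = fun r => ℓ (A (u.removeNth z) r) (z u) := rfl
      rw [h]
      exact hℓmeas.comp ((hA.comp (measurable_const.prodMk measurable_id)).prodMk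
        measurable_const)
    exact hm (measurableSet_singleton 1)
  have hFz_eq : ∀ z, Fz z = ∑ u, (ρ {r | lf z u r u = 1}).toReal / ((n:ℝ)+1) := by
    intro z
    have hint : ∀ u : Fin (n+1), ∫ r, ℓ (A (u.removeNth z) r) (z u) ∂ρ
        = (ρ {r | lf z u r u = 1}).toReal := by
      intro u
      have hfeq : (fun r => ℓ (A (u.removeNth z) r) (z u))
          = Set.indicator {r | lf z u r u = 1} (fun _ => (1:ℝ)) := by
        funext r
        by_cases h : ℓ (A (u.removeNth z) r) (z u) = 1
        · rw [Set.indicator_of_mem (show r ∈ {r : R | lf z u r u = 1} from h)]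
          exact h
        · rw [Set.indicator_of_notMem (show r ∉ {r : R | lf z u r u = 1} from h)]
          rcases hℓbin (A (u.removeNth z) r) (z u) with h0 | h1
          · exact h0
          · exact absurd h1 h
      rw [hfeq, integral_indicator_const _ (hSmeasz z u), smul_eq_mul, mul_one]; rfl
    rw [hFz_def]
    simp only
    rw [Finset.sum_congr rfl (fun u _ => hint u), Finset.mul_sum]
    exact Finset.sum_congr rfl fun u _ => inv_mul_eq_div _ _
  -- final assembly
  have hfinal : ∀ᵐ z ∂μZ, klDiv' (condDistrib (fun ω => (L ω, U ω)) Zt μ z)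
      ((condDistrib L Zt μ z).prod (condDistrib U Zt μ z))
      ≤ if (1 : ℝ) / 2 ≤ g z / (n + 1)
        then ENNReal.ofReal (1 + g z * Real.log (n + 1) / (n + 1))
        else ENNReal.ofReal (2 * g z * Real.log (n + 1) / (n + 1)
              + (g z + Real.exp (-1)) / (n + 1)) := by
    filter_upwards [hcdJ, hcdL, hcdU, hgoodz, hRlZ] with z h1 h2 h3 h4 h5
    rw [h1, h2, h3, hκJ_app, hκL_app]
    have hsb : (∑ u, ((ρ {r | lf z u r u = 1}).toReal) / ((n:ℝ)+1)) ≤ g z / ((n:ℝ)+1) := by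
      rw [← hFz_eq z]; exact h5
    exact kl_at_point ρ unif hunif_atom (lf z)
      (fun u => (hFLm z).comp (measurable_const.prodMk measurable_id))
      (fun u r i => hℓbin _ _) h4 (g z) (hg0 z) hsb
  rw [hμZ_def] at hfinal
  have hfin2 := ae_of_ae_map hZt.aemeasurable hfinal
  filter_upwards [hfin2] with ω hω
  exact hω
end
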